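/- arXiv:0909.5245 — 7 statements merged into one kernel-verified Lean document; each statement's English description precedes it below -/
import Mathlib

section
/- Suppose A = 0 and one of the following holds: (i) I_B ⊆ I_β, I_C ⊆ I_γ, and I_B ≠ ∅; (ii) q = 0, I_D ⊆ I_δ, I_E ⊆ I_ε, and I_C ≠ ∅; (iii) p > 0, q > 0, I_D ⊆ I_δ, I_E ⊆ I_ε, and I_C ≠ ∅. Suppose further that I_γ ⊆ I_C and that there exists a positive integer η such that for every sequence {c_m}_{m=1}^∞ with c_m ∈ I_β for all m, there exist positive integers N1 ≤ N2 ≤ η with Σ_{m=N1}^{N2} c_m ∈ I_B. Then there exist M > 0 and N ∈ ℕ such that x_n ≤ M for all n > N. -/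
open Finset

/-- The index set of the coefficient function `f` on `{1, …, k}`:
the set of indices `i ∈ {1, …, k}` with `f i > 0`. -/
noncomputable def indexSet (k : ℕ) (f : ℕ → ℝ) : Finset ℕ :=
  (Finset.Icc 1 k).filter fun i => 0 < f i

/-- The iteration condition: for every sequence `c` (indexed by `1, 2, …`)
taking values in `S`, there exist positive integers `N1 ≤ N2 ≤ η` such that
`∑_{m=N1}^{N2} c m ∈ T`. -/
def iterCond (η : ℕ) (S T : Finset ℕ) : Prop :=
  ∀ c : ℕ → ℕ, (∀ m, 1 ≤ m → c m ∈ S) →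
    ∃ N1 N2 : ℕ, 0 < N1 ∧ N1 ≤ N2 ∧ N2 ≤ η ∧ (∑ m ∈ Finset.Icc N1 N2, c m) ∈ T

set_option maxHeartbeats 4000000

theorem stmt_9
    (k : ℕ) (hk : 0 < k)
    (α A p q : ℝ) (β γ B C δ ε D E : ℕ → ℝ)
    (hα : 0 ≤ α) (hA : 0 ≤ A) (hp : 0 ≤ p) (hq : 0 ≤ q)
    (hβ : ∀ i, 0 ≤ β i) (hγ : ∀ i, 0 ≤ γ i) (hB : ∀ j, 0 ≤ B j) (hC : ∀ j, 0 ≤ C j)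
    (hδ : ∀ i, 0 ≤ δ i) (hε : ∀ i, 0 ≤ ε i) (hD : ∀ j, 0 ≤ D j) (hE : ∀ j, 0 ≤ E j)
    (x y : ℕ → ℝ)
    (hxnn : ∀ n, 0 ≤ x n) (hynn : ∀ n, 0 ≤ y n)
    (hxden : ∀ n, k ≤ n →
      0 < A + ∑ j ∈ Icc 1 k, B j * x (n - j) + ∑ j ∈ Icc 1 k, C j * y (n - j))
    (hyden : ∀ n, k ≤ n →
      0 < q + ∑ j ∈ Icc 1 k, D j * x (n - j) + ∑ j ∈ Icc 1 k, E j * y (n - j))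
    (hxrec : ∀ n, k ≤ n → x n =
      (α + ∑ i ∈ Icc 1 k, β i * x (n - i) + ∑ i ∈ Icc 1 k, γ i * y (n - i)) /
      (A + ∑ j ∈ Icc 1 k, B j * x (n - j) + ∑ j ∈ Icc 1 k, C j * y (n - j)))
    (hyrec : ∀ n, k ≤ n → y n =
      (p + ∑ i ∈ Icc 1 k, δ i * x (n - i) + ∑ i ∈ Icc 1 k, ε i * y (n - i)) /
      (q + ∑ j ∈ Icc 1 k, D j * x (n - j) + ∑ j ∈ Icc 1 k, E j * y (n - j)))
    (hA0 : A = 0)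
    (hcase :
      (indexSet k B ⊆ indexSet k β ∧ indexSet k C ⊆ indexSet k γ ∧
        indexSet k B ≠ ∅) ∨
      (q = 0 ∧ indexSet k D ⊆ indexSet k δ ∧ indexSet k E ⊆ indexSet k ε ∧
        indexSet k C ≠ ∅) ∨
      (0 < p ∧ 0 < q ∧ indexSet k D ⊆ indexSet k δ ∧ indexSet k E ⊆ indexSet k ε ∧
        indexSet k C ≠ ∅))
    (hsub : indexSet k γ ⊆ indexSet k C)
    (hη : ∃ η : ℕ, 0 < η ∧ iterCond η (indexSet k β) (indexSet k B)) :
    ∃ M : ℝ, 0 < M ∧ ∃ N : ℕ, ∀ n, N < n → x n ≤ M := by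
  classical
  -- Notation for the denominator of the x-equation (with A = 0)
  set Dn : ℕ → ℝ := fun n =>
    (∑ j ∈ Icc 1 k, B j * x (n - j)) + ∑ j ∈ Icc 1 k, C j * y (n - j) with hDn
  have hDpos : ∀ n, k ≤ n → 0 < Dn n := by
    intro n hn
    have := hxden n hn
    rw [hA0] at this
    simpa [hDn, add_assoc] using this
  -- the constant K
  set KK : ℝ := ∑ i ∈ Icc 1 k, γ i / C i with hKK
  clear_value KK
  have hKnn : 0 ≤ KK := by
    rw [hKK]
    apply Finset.sum_nonneg
    intro i _
    exact div_nonneg (hγ i) (hC i)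
  have hKbound : ∀ n, (∑ i ∈ Icc 1 k, γ i * y (n - i)) ≤ KK * Dn n := by
    intro n
    have hDnn : 0 ≤ Dn n := by
      apply add_nonneg <;> exact
        Finset.sum_nonneg (fun j _ => mul_nonneg (by first | exact hB j | exact hC j)
          (by first | exact hxnn _ | exact hynn _))
    rw [hKK, Finset.sum_mul]
    apply Finset.sum_le_sum
    intro i hi
    rcases (hγ i).eq_or_lt with h0 | h0
    · rw [← h0]; simp
    · have hiγ : i ∈ indexSet k γ := Finset.mem_filter.2 ⟨hi, h0⟩
      have hiC : 0 < C i := (Finset.mem_filter.1 (hsub hiγ)).2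
      have hCy : C i * y (n - i) ≤ Dn n := by
        have h1 : C i * y (n - i) ≤ ∑ j ∈ Icc 1 k, C j * y (n - j) :=
          Finset.single_le_sum (f := fun j => C j * y (n - j))
            (fun j _ => mul_nonneg (hC j) (hynn _)) hi
        have h2 : 0 ≤ ∑ j ∈ Icc 1 k, B j * x (n - j) :=
          Finset.sum_nonneg (fun j _ => mul_nonneg (hB j) (hxnn _))
        simp only [hDn]; linarith
      calc γ i * y (n - i) = (γ i / C i) * (C i * y (n - i)) := by
            field_simp
        _ ≤ (γ i / C i) * Dn n :=
            mul_le_mul_of_nonneg_left hCy (div_nonneg (hγ i) (hC i))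
  have hid : ∀ n, k ≤ n → x n * Dn n
      = α + (∑ i ∈ Icc 1 k, β i * x (n - i)) + ∑ i ∈ Icc 1 k, γ i * y (n - i) := by
    intro n hn
    rw [hxrec n hn, hA0]
    rw [div_mul_eq_mul_div, mul_div_assoc]
    rw [show (0:ℝ) + ∑ j ∈ Icc 1 k, B j * x (n - j) + ∑ j ∈ Icc 1 k, C j * y (n - j) = Dn n by
      rw [hDn]; ring]
    rw [div_self (ne_of_gt (hDpos n hn)), mul_one, add_assoc]
  have hkey : ∀ n, k ≤ n → (x n - KK) * Dn n ≤ α + ∑ i ∈ Icc 1 k, β i * x (n - i) := by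
    intro n hn
    have h1 := hid n hn
    have h2 := hKbound n
    nlinarith [hDpos n hn]
  -- Step A: eventual lower bound on Dn
  have hBx0 : ∀ n, (0:ℝ) ≤ ∑ j ∈ Icc 1 k, B j * x (n - j) :=
    fun n => Finset.sum_nonneg (fun j _ => mul_nonneg (hB j) (hxnn _))
  have hCy0 : ∀ n, (0:ℝ) ≤ ∑ j ∈ Icc 1 k, C j * y (n - j) :=
    fun n => Finset.sum_nonneg (fun j _ => mul_nonneg (hC j) (hynn _))
  have hβx0 : ∀ n, (0:ℝ) ≤ ∑ i ∈ Icc 1 k, β i * x (n - i) :=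
    fun n => Finset.sum_nonneg (fun i _ => mul_nonneg (hβ i) (hxnn _))
  have hγy0 : ∀ n, (0:ℝ) ≤ ∑ i ∈ Icc 1 k, γ i * y (n - i) :=
    fun n => Finset.sum_nonneg (fun i _ => mul_nonneg (hγ i) (hynn _))
  have hδx0 : ∀ n, (0:ℝ) ≤ ∑ i ∈ Icc 1 k, δ i * x (n - i) :=
    fun n => Finset.sum_nonneg (fun i _ => mul_nonneg (hδ i) (hxnn _))
  have hεy0 : ∀ n, (0:ℝ) ≤ ∑ i ∈ Icc 1 k, ε i * y (n - i) :=
    fun n => Finset.sum_nonneg (fun i _ => mul_nonneg (hε i) (hynn _))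
  have hDx0 : ∀ n, (0:ℝ) ≤ ∑ j ∈ Icc 1 k, D j * x (n - j) :=
    fun n => Finset.sum_nonneg (fun j _ => mul_nonneg (hD j) (hxnn _))
  have hEy0 : ∀ n, (0:ℝ) ≤ ∑ j ∈ Icc 1 k, E j * y (n - j) :=
    fun n => Finset.sum_nonneg (fun j _ => mul_nonneg (hE j) (hynn _))
  have hd : ∃ d : ℝ, 0 < d ∧ ∀ n, 2 * k ≤ n → d ≤ Dn n := by
    rcases hcase with ⟨hBβ, hCγ, hBne⟩ | hrest
    · -- Case (i): x is bounded below, and I_B ≠ ∅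
      obtain ⟨j₀, hj₀⟩ := Finset.nonempty_of_ne_empty hBne
      have hj₀Icc : j₀ ∈ Icc 1 k := (Finset.mem_filter.1 hj₀).1
      have hBj₀ : 0 < B j₀ := (Finset.mem_filter.1 hj₀).2
      set L : ℝ := (∑ j ∈ Icc 1 k, B j / β j) + ∑ j ∈ Icc 1 k, C j / γ j with hLdef
      clear_value L
      have hL0 : 0 < L := by
        have h1 : 0 < ∑ j ∈ Icc 1 k, B j / β j := by
          apply Finset.sum_pos' (fun j _ => div_nonneg (hB j) (hβ j))
          refine ⟨j₀, hj₀Icc, div_pos hBj₀ ?_⟩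
          exact (Finset.mem_filter.1 (hBβ hj₀)).2
        have h2 : (0:ℝ) ≤ ∑ j ∈ Icc 1 k, C j / γ j :=
          Finset.sum_nonneg (fun j _ => div_nonneg (hC j) (hγ j))
        linarith
      have hxlow : ∀ n, k ≤ n → 1 / L ≤ x n := by
        intro n hn
        set P : ℝ := (∑ i ∈ Icc 1 k, β i * x (n - i)) + ∑ i ∈ Icc 1 k, γ i * y (n - i)
          with hPdef
        clear_value P
        have hP0 : 0 ≤ P := by rw [hPdef]; exact add_nonneg (hβx0 n) (hγy0 n)
        have hDP : Dn n ≤ L * P := by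
          have h1 : (∑ j ∈ Icc 1 k, B j * x (n - j)) ≤ (∑ j ∈ Icc 1 k, B j / β j) * P := by
            rw [Finset.sum_mul]
            apply Finset.sum_le_sum
            intro j hj
            rcases (hB j).eq_or_lt with h0 | h0
            · rw [← h0]; simp
            · have hjβ : 0 < β j :=
                (Finset.mem_filter.1 (hBβ (Finset.mem_filter.2 ⟨hj, h0⟩))).2
              have hβxP : β j * x (n - j) ≤ P := by
                have h5 : β j * x (n - j) ≤ ∑ i ∈ Icc 1 k, β i * x (n - i) :=
                  Finset.single_le_sum (f := fun i => β i * x (n - i))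
                    (fun i _ => mul_nonneg (hβ i) (hxnn _)) hj
                have h6 := hγy0 n
                rw [hPdef]; linarith
              calc B j * x (n - j) = (B j / β j) * (β j * x (n - j)) := by
                    field_simp
                _ ≤ (B j / β j) * P :=
                    mul_le_mul_of_nonneg_left hβxP (div_nonneg (hB j) (hβ j))
          have h2 : (∑ j ∈ Icc 1 k, C j * y (n - j)) ≤ (∑ j ∈ Icc 1 k, C j / γ j) * P := by
            rw [Finset.sum_mul]
            apply Finset.sum_le_sum
            intro j hj
            rcases (hC j).eq_or_lt with h0 | h0
            · rw [← h0]; simp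
            · have hjγ : 0 < γ j :=
                (Finset.mem_filter.1 (hCγ (Finset.mem_filter.2 ⟨hj, h0⟩))).2
              have hγyP : γ j * y (n - j) ≤ P := by
                have h5 : γ j * y (n - j) ≤ ∑ i ∈ Icc 1 k, γ i * y (n - i) :=
                  Finset.single_le_sum (f := fun i => γ i * y (n - i))
                    (fun i _ => mul_nonneg (hγ i) (hynn _)) hj
                have h6 := hβx0 n
                rw [hPdef]; linarith
              calc C j * y (n - j) = (C j / γ j) * (γ j * y (n - j)) := by
                    field_simp
                _ ≤ (C j / γ j) * P :=
                    mul_le_mul_of_nonneg_left hγyP (div_nonneg (hC j) (hγ j))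
          simp only [hDn, hLdef]; rw [add_mul]; linarith
        have hidn := hid n hn
        have hDn0 := hDpos n hn
        have hkey2 : Dn n ≤ L * (x n * Dn n) := by
          rw [hidn]
          have : L * P ≤ L * (α + P) := by nlinarith
          simp only [hPdef] at hDP this ⊢
          rw [add_assoc]
          linarith
        rw [div_le_iff₀ hL0]
        nlinarith
      refine ⟨B j₀ * (1 / L), by positivity, ?_⟩
      intro n hn
      have hj₀k : j₀ ≤ k := (Finset.mem_Icc.1 hj₀Icc).2
      have hnk : k ≤ n - j₀ := by omega
      have h1 : B j₀ * x (n - j₀) ≤ ∑ j ∈ Icc 1 k, B j * x (n - j) :=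
        Finset.single_le_sum (f := fun j => B j * x (n - j))
          (fun j _ => mul_nonneg (hB j) (hxnn _)) hj₀Icc
      have h2 : B j₀ * (1 / L) ≤ B j₀ * x (n - j₀) :=
        mul_le_mul_of_nonneg_left (hxlow _ hnk) hBj₀.le
      have := hCy0 n
      simp only [hDn]; linarith
    · -- Cases (ii) and (iii): y is bounded below, and I_C ≠ ∅
      set L₂ : ℝ := (∑ j ∈ Icc 1 k, D j / δ j) + ∑ j ∈ Icc 1 k, E j / ε j with hL₂def
      clear_value L₂
      have hL₂nn : 0 ≤ L₂ := by
        rw [hL₂def]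
        exact add_nonneg (Finset.sum_nonneg (fun j _ => div_nonneg (hD j) (hδ j)))
          (Finset.sum_nonneg (fun j _ => div_nonneg (hE j) (hε j)))
      have hDδ : (indexSet k D ⊆ indexSet k δ) := by
        rcases hrest with ⟨_, h, _, _⟩ | ⟨_, _, h, _, _⟩ <;> exact h
      have hEε : (indexSet k E ⊆ indexSet k ε) := by
        rcases hrest with ⟨_, _, h, _⟩ | ⟨_, _, _, h, _⟩ <;> exact h
      have hCne : indexSet k C ≠ ∅ := by
        rcases hrest with ⟨_, _, _, h⟩ | ⟨_, _, _, _, h⟩ <;> exact h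
      have hDyP : ∀ n, (∑ j ∈ Icc 1 k, D j * x (n - j)) + ∑ j ∈ Icc 1 k, E j * y (n - j)
          ≤ L₂ * ((∑ i ∈ Icc 1 k, δ i * x (n - i)) + ∑ i ∈ Icc 1 k, ε i * y (n - i)) := by
        intro n
        set P : ℝ := (∑ i ∈ Icc 1 k, δ i * x (n - i)) + ∑ i ∈ Icc 1 k, ε i * y (n - i)
          with hPdef
        clear_value P
        have h1 : (∑ j ∈ Icc 1 k, D j * x (n - j)) ≤ (∑ j ∈ Icc 1 k, D j / δ j) * P := by
          rw [Finset.sum_mul]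
          apply Finset.sum_le_sum
          intro j hj
          rcases (hD j).eq_or_lt with h0 | h0
          · rw [← h0]; simp
          · have hjδ : 0 < δ j :=
              (Finset.mem_filter.1 (hDδ (Finset.mem_filter.2 ⟨hj, h0⟩))).2
            have hδxP : δ j * x (n - j) ≤ P := by
              have h5 : δ j * x (n - j) ≤ ∑ i ∈ Icc 1 k, δ i * x (n - i) :=
                Finset.single_le_sum (f := fun i => δ i * x (n - i))
                  (fun i _ => mul_nonneg (hδ i) (hxnn _)) hj
              have h6 := hεy0 n
              rw [hPdef]; linarith
            calc D j * x (n - j) = (D j / δ j) * (δ j * x (n - j)) := by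
                  field_simp
              _ ≤ (D j / δ j) * P :=
                  mul_le_mul_of_nonneg_left hδxP (div_nonneg (hD j) (hδ j))
        have h2 : (∑ j ∈ Icc 1 k, E j * y (n - j)) ≤ (∑ j ∈ Icc 1 k, E j / ε j) * P := by
          rw [Finset.sum_mul]
          apply Finset.sum_le_sum
          intro j hj
          rcases (hE j).eq_or_lt with h0 | h0
          · rw [← h0]; simp
          · have hjε : 0 < ε j :=
              (Finset.mem_filter.1 (hEε (Finset.mem_filter.2 ⟨hj, h0⟩))).2
            have hεyP : ε j * y (n - j) ≤ P := by
              have h5 : ε j * y (n - j) ≤ ∑ i ∈ Icc 1 k, ε i * y (n - i) :=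
                Finset.single_le_sum (f := fun i => ε i * y (n - i))
                  (fun i _ => mul_nonneg (hε i) (hynn _)) hj
              have h6 := hδx0 n
              rw [hPdef]; linarith
            calc E j * y (n - j) = (E j / ε j) * (ε j * y (n - j)) := by
                  field_simp
              _ ≤ (E j / ε j) * P :=
                  mul_le_mul_of_nonneg_left hεyP (div_nonneg (hE j) (hε j))
        rw [hL₂def, add_mul]; linarith
      have hylow : ∃ m : ℝ, 0 < m ∧ ∀ n, k ≤ n → m ≤ y n := by
        rcases hrest with ⟨hq0, -, -, -⟩ | ⟨hp0, hq0, -, -, -⟩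
        · -- case (ii): q = 0
          have hL₂pos : 0 < L₂ := by
            have h1 := hyden k (le_refl k)
            rw [hq0, zero_add] at h1
            have h2 := hDyP k
            have h3 := hδx0 k
            have h4 := hεy0 k
            nlinarith
          refine ⟨1 / L₂, by positivity, ?_⟩
          intro n hn
          have hden := hyden n hn
          rw [hyrec n hn, le_div_iff₀ (by linarith)]
          have h2 := hDyP n
          rw [hq0, zero_add] at hden ⊢
          have h5 : (1 / L₂) * ((∑ j ∈ Icc 1 k, D j * x (n - j)) +
              ∑ j ∈ Icc 1 k, E j * y (n - j)) ≤
              (∑ i ∈ Icc 1 k, δ i * x (n - i)) + ∑ i ∈ Icc 1 k, ε i * y (n - i) := by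
            rw [div_mul_eq_mul_div, div_le_iff₀ hL₂pos]
            nlinarith
          nlinarith [hp]
        · -- case (iii): p > 0, q > 0
          refine ⟨min (p / q) (1 / (L₂ + 1)), lt_min (div_pos hp0 hq0) (by positivity), ?_⟩
          intro n hn
          have hden := hyden n hn
          set m : ℝ := min (p / q) (1 / (L₂ + 1)) with hmdef
          clear_value m
          have hm1 : m * q ≤ p := by
            have : m ≤ p / q := by rw [hmdef]; exact min_le_left _ _
            rw [← div_mul_cancel₀ p (ne_of_gt hq0)]
            exact mul_le_mul_of_nonneg_right this hq0.le
          have hm0 : 0 ≤ m := by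
            rw [hmdef]
            exact le_min (div_nonneg hp0.le hq0.le) (by positivity)
          have hm2 : m * ((∑ j ∈ Icc 1 k, D j * x (n - j)) +
              ∑ j ∈ Icc 1 k, E j * y (n - j)) ≤
              (∑ i ∈ Icc 1 k, δ i * x (n - i)) + ∑ i ∈ Icc 1 k, ε i * y (n - i) := by
            have hmL : m * (L₂ + 1) ≤ 1 := by
              have h1 : m ≤ 1 / (L₂ + 1) := by rw [hmdef]; exact min_le_right _ _
              have h1' : m * (L₂ + 1) ≤ (1 / (L₂ + 1)) * (L₂ + 1) :=
                mul_le_mul_of_nonneg_right h1 (by linarith)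
              rw [one_div, inv_mul_cancel₀ (show L₂ + (1:ℝ) ≠ 0 by linarith)] at h1'
              exact h1'
            have h2 := hDyP n
            have h3 := add_nonneg (hδx0 n) (hεy0 n)
            nlinarith
          rw [hyrec n hn, le_div_iff₀ (by linarith)]
          nlinarith
      obtain ⟨m, hm0, hmy⟩ := hylow
      obtain ⟨j₁, hj₁⟩ := Finset.nonempty_of_ne_empty hCne
      have hj₁Icc : j₁ ∈ Icc 1 k := (Finset.mem_filter.1 hj₁).1
      have hCj₁ : 0 < C j₁ := (Finset.mem_filter.1 hj₁).2
      refine ⟨C j₁ * m, by positivity, ?_⟩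
      intro n hn
      have hj₁k : j₁ ≤ k := (Finset.mem_Icc.1 hj₁Icc).2
      have hnk : k ≤ n - j₁ := by omega
      have h1 : C j₁ * y (n - j₁) ≤ ∑ j ∈ Icc 1 k, C j * y (n - j) :=
        Finset.single_le_sum (f := fun j => C j * y (n - j))
          (fun j _ => mul_nonneg (hC j) (hynn _)) hj₁Icc
      have h2 : C j₁ * m ≤ C j₁ * y (n - j₁) :=
        mul_le_mul_of_nonneg_left (hmy _ hnk) hCj₁.le
      have := hBx0 n
      simp only [hDn]; linarith
  obtain ⟨d, hd0, hdbd⟩ := hd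
  by_cases hIβ : indexSet k β = ∅
  · -- easy case: no β terms
    refine ⟨KK + α / d + 1,
      add_pos_of_nonneg_of_pos (add_nonneg hKnn (div_nonneg hα hd0.le)) one_pos, 2 * k, ?_⟩
    intro n hn
    have hkn : k ≤ n := by omega
    have hβ0 : (∑ i ∈ Icc 1 k, β i * x (n - i)) = 0 := by
      apply Finset.sum_eq_zero
      intro i hi
      have : ¬ (0 < β i) := by
        intro h
        have : i ∈ indexSet k β := by
          simp only [indexSet, Finset.mem_filter]; exact ⟨hi, h⟩
        simp [hIβ] at this
      have : β i = 0 := le_antisymm (not_lt.1 this) (hβ i)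
      simp [this]
    have h1 := hkey n hkn
    rw [hβ0, add_zero] at h1
    by_cases hx : x n ≤ KK
    · nlinarith [div_nonneg hα hd0.le]
    · push_neg at hx
      have h2 : (x n - KK) * d ≤ (x n - KK) * Dn n :=
        mul_le_mul_of_nonneg_left (hdbd n (by omega)) (by linarith)
      have : (x n - KK) ≤ α / d := by
        rw [le_div_iff₀ hd0]; linarith
      linarith
  · -- main case : indexSet k β nonempty
    obtain ⟨η, hη0, hiter⟩ := hη
    obtain ⟨i₀, hi₀⟩ := Finset.nonempty_of_ne_empty hIβ
    have hIB : (indexSet k B).Nonempty := by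
      obtain ⟨N1, N2, -, -, -, hmem⟩ := hiter (fun _ => i₀) (fun _ _ => hi₀)
      exact ⟨_, hmem⟩
    set b : ℝ := (indexSet k B).inf' hIB B with hbdef
    clear_value b
    have hble : ∀ s ∈ indexSet k B, b ≤ B s := by
      rw [hbdef]; exact fun s hs => Finset.inf'_le B hs
    have hb0 : 0 < b := by
      rw [hbdef, Finset.lt_inf'_iff]
      intro s hs
      exact (Finset.mem_filter.1 hs).2
    set S : ℝ := ∑ i ∈ Icc 1 k, β i with hSdef
    clear_value S
    have hS0 : 0 < S := by
      rw [hSdef]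
      apply Finset.sum_pos' (fun i _ => hβ i)
      exact ⟨i₀, (Finset.mem_filter.1 hi₀).1, (Finset.mem_filter.1 hi₀).2⟩
    set r : ℝ := d / S with hrdef
    clear_value r
    have hr0 : 0 < r := by rw [hrdef]; exact div_pos hd0 hS0
    set a : ℝ := (d * KK + α) / S with hadef
    clear_value a
    have ha0 : 0 ≤ a := by
      rw [hadef]
      exact div_nonneg (add_nonneg (mul_nonneg hd0.le hKnn) hα) hS0.le
    -- the one-step chain lemma
    have hstep : ∀ n : ℕ, ∃ i, i ∈ indexSet k β ∧
        (2 * k ≤ n → KK ≤ x n → r * x n - a ≤ x (n - i)) := by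
      intro n
      by_cases hg : 2 * k ≤ n ∧ KK ≤ x n
      · obtain ⟨hn2k, hxK⟩ := hg
        have hkn : k ≤ n := by omega
        have hlow : (x n - KK) * d - α ≤ ∑ i ∈ Icc 1 k, β i * x (n - i) := by
          have h1 := hkey n hkn
          have h2 : (x n - KK) * d ≤ (x n - KK) * Dn n :=
            mul_le_mul_of_nonneg_left (hdbd n hn2k) (by linarith)
          linarith
        obtain ⟨im, himmem, hmax⟩ :=
          Finset.exists_max_image (indexSet k β) (fun i => x (n - i)) ⟨i₀, hi₀⟩
        have hsum_le : (∑ i ∈ Icc 1 k, β i * x (n - i)) ≤ S * x (n - im) := by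
          rw [hSdef, Finset.sum_mul]
          apply Finset.sum_le_sum
          intro i hi
          rcases (hβ i).eq_or_lt with h0 | h0
          · rw [← h0]; simp
          · have : x (n - i) ≤ x (n - im) := hmax i (Finset.mem_filter.2 ⟨hi, h0⟩)
            exact mul_le_mul_of_nonneg_left this (hβ i)
        refine ⟨im, himmem, fun _ _ => ?_⟩
        calc r * x n - a = (d * x n - (d * KK + α)) / S := by
              rw [hrdef, hadef]; ring
          _ ≤ x (n - im) := by
              rw [div_le_iff₀ hS0]
              nlinarith
      · exact ⟨i₀, hi₀, fun h1 h2 => absurd ⟨h1, h2⟩ hg⟩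
    set N₀ : ℕ := 2 * k + η * k with hN₀
    clear_value N₀
    set G₁ : ℝ := (Finset.range (N₀ + 1)).sup'
      (Finset.nonempty_range_iff.2 (Nat.succ_ne_zero _)) x with hG₁def
    clear_value G₁
    have hG₁ : ∀ j, j ≤ N₀ → x j ≤ G₁ := by
      intro j hj
      rw [hG₁def]
      exact Finset.le_sup' x (Finset.mem_range.2 (by omega))
    set ι : ℝ := max 1 (1 / r) with hιdef
    clear_value ι
    have hι1 : 1 ≤ ι := by rw [hιdef]; exact le_max_left _ _
    have hιr : 1 / r ≤ ι := by rw [hιdef]; exact le_max_right _ _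
    set W : ℝ := ι ^ η with hWdef
    clear_value W
    have hW1 : 1 ≤ W := by rw [hWdef]; exact one_le_pow₀ hι1
    set Q : ℝ := α + S * (max G₁ 0 + W * η * a) + 1 with hQdef
    clear_value Q
    have hG₁0 : G₁ ≤ max G₁ 0 := le_max_left _ _
    have hmaxG₁0 : 0 ≤ max G₁ 0 := le_max_right _ _
    have hQ1 : 1 ≤ Q := by
      have hW0 : (0:ℝ) ≤ W := by linarith
      have hcast : (0:ℝ) ≤ (η:ℝ) := Nat.cast_nonneg η
      have h1 : 0 ≤ S * (max G₁ 0 + W * η * a) :=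
        mul_nonneg hS0.le (add_nonneg hmaxG₁0
          (mul_nonneg (mul_nonneg hW0 hcast) ha0))
      rw [hQdef]; linarith
    set T : ℝ := max (2 * KK + 1) (max 1 (2 * (Q + S * W) / b)) with hTdef
    clear_value T
    have hT1 : 1 ≤ T := by
      rw [hTdef]; exact le_trans (le_max_left _ _) (le_max_right _ _)
    have hT2K : 2 * KK + 1 ≤ T := by rw [hTdef]; exact le_max_left _ _
    have hTb : 2 * (Q + S * W) / b ≤ T := by
      rw [hTdef]; exact le_trans (le_max_right _ _) (le_max_right _ _)
    -- the backward threshold function ψ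
    set ψ : ℕ → ℝ := fun j => Nat.rec T (fun _ ih => max ih ((ih + a) / r)) j with hψdef
    have hψ0 : ψ 0 = T := rfl
    have hψs : ∀ j, ψ (j + 1) = max (ψ j) ((ψ j + a) / r) := fun j => rfl
    have hψge : ∀ j, T ≤ ψ j := by
      intro j
      induction j with
      | zero => exact le_of_eq hψ0.symm
      | succ j ih => rw [hψs]; exact le_trans ih (le_max_left _ _)
    have hψle : ∀ j, ψ j ≤ ι ^ j * (T + j * a) := by
      intro j
      induction j with
      | zero => rw [hψ0]; push_cast; norm_num
      | succ j ih =>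
          have hι0 : (0:ℝ) ≤ ι := by linarith
          have hpj : (1:ℝ) ≤ ι ^ j := one_le_pow₀ hι1
          have hιle : ι ≤ ι ^ (j + 1) := by
            calc ι = ι ^ 1 := (pow_one ι).symm
              _ ≤ ι ^ (j + 1) := pow_le_pow_right₀ hι1 (by omega)
          have hψj0 : 0 ≤ ψ j := le_trans (by linarith) (hψge j)
          have hcj : (0:ℝ) ≤ (j:ℝ) := Nat.cast_nonneg j
          have hcs : ((j + 1 : ℕ) : ℝ) = (j : ℝ) + 1 := by push_cast; ring
          have hTja : 0 ≤ T + (j:ℝ) * a := by nlinarith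
          rw [hψs j]
          apply max_le
          · have h2 : ι ^ j * (T + (j:ℝ) * a) ≤ ι ^ (j + 1) * (T + ((j + 1 : ℕ) : ℝ) * a) := by
              rw [pow_succ, hcs]
              have hstep1 : T + (j:ℝ) * a ≤ ι * (T + ((j:ℝ) + 1) * a) := by nlinarith
              have := mul_le_mul_of_nonneg_left hstep1 (pow_nonneg hι0 j)
              nlinarith
            linarith
          · have h3 : (ψ j + a) / r = (1 / r) * (ψ j + a) := by ring
            have h4 : (1 / r) * (ψ j + a) ≤ ι * (ψ j + a) :=
              mul_le_mul_of_nonneg_right hιr (by linarith)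
            have h5 : ι * (ψ j + a) ≤ ι * (ι ^ j * (T + (j:ℝ) * a) + a) :=
              mul_le_mul_of_nonneg_left (by linarith) hι0
            have h6 : ι * (ι ^ j * (T + (j:ℝ) * a) + a)
                ≤ ι ^ (j + 1) * (T + ((j + 1 : ℕ) : ℝ) * a) := by
              rw [pow_succ, hcs]
              nlinarith [mul_nonneg (mul_nonneg hι0 ha0) (sub_nonneg.2 hpj)]
            linarith
    set G : ℝ := max G₁ (ψ η) with hGdef
    clear_value G
    have hGG₁ : G₁ ≤ G := by rw [hGdef]; exact le_max_left _ _
    have hGψ : ψ η ≤ G := by rw [hGdef]; exact le_max_right _ _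
    have hGT : T ≤ G := le_trans (hψge η) hGψ
    have hG0 : 0 < G := lt_of_lt_of_le (by linarith) hGT
    have hψηle : ψ η ≤ W * (T + (η:ℝ) * a) := by
      have h := hψle η
      rw [← hWdef] at h
      exact h
    have hGfinal : α + S * G + 1 ≤ (T - KK) * (b * T) := by
      have hW0 : (0:ℝ) ≤ W := by linarith
      have hGle : G ≤ max G₁ 0 + W * (η:ℝ) * a + W * T := by
        rw [hGdef]
        apply max_le
        · have h0 : 0 ≤ W * (η:ℝ) * a :=
            mul_nonneg (mul_nonneg hW0 (Nat.cast_nonneg η)) ha0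
          have h0' : 0 ≤ W * T := mul_nonneg hW0 (by linarith)
          linarith
        · nlinarith [hψηle, hmaxG₁0]
      have e1 : 0 ≤ b * T := mul_nonneg hb0.le (by linarith)
      have hbT : 2 * (Q + S * W) ≤ T * b := by
        rw [div_le_iff₀ hb0] at hTb; linarith
      have hTK2 : T ≤ 2 * (T - KK) := by linarith
      have hQ0 : (0:ℝ) ≤ Q := by linarith
      have s1 : (Q + S * W) * T ≤ (b * T / 2) * T :=
        mul_le_mul_of_nonneg_right (by linarith) (by linarith)
      have s2 : (b * T / 2) * T ≤ (T - KK) * (b * T) := by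
        nlinarith [mul_nonneg e1 (show (0:ℝ) ≤ (T - KK) - T / 2 by linarith)]
      have s3 : Q + S * (W * T) ≤ (Q + S * W) * T := by
        nlinarith [mul_nonneg hQ0 (show (0:ℝ) ≤ T - 1 by linarith)]
      have s4 : α + S * G + 1 ≤ Q + S * (W * T) := by
        rw [hQdef]
        nlinarith [mul_le_mul_of_nonneg_left hGle hS0.le]
      linarith
    refine ⟨G, hG0, N₀, ?_⟩
    by_contra hcon
    push_neg at hcon
    obtain ⟨n₀, hn₀, hxn₀⟩ := hcon
    have hex : ∃ n, N₀ < n ∧ G < x n := ⟨n₀, hn₀, hxn₀⟩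
    set n : ℕ := Nat.find hex with hndef
    obtain ⟨hnN₀, hxnG⟩ : N₀ < n ∧ G < x n := Nat.find_spec hex
    have hhist : ∀ j, j < n → x j ≤ G := by
      intro j hj
      by_cases hjN : j ≤ N₀
      · exact le_trans (hG₁ j hjN) hGG₁
      · have := Nat.find_min hex hj
        push_neg at this
        exact this (by omega)
    -- the chain
    set stepf : ℕ → ℕ := fun m => (hstep m).choose with hstepf
    have hstepspec : ∀ m : ℕ, stepf m ∈ indexSet k β ∧
        (2 * k ≤ m → KK ≤ x m → r * x m - a ≤ x (m - stepf m)) :=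
      fun m => (hstep m).choose_spec
    set ν : ℕ → ℕ := fun m => (fun t => t - stepf t)^[m] n with hνdef
    set c : ℕ → ℕ := fun m => stepf (ν (m - 1)) with hcdef
    have hν0 : ν 0 = n := rfl
    have hνs : ∀ m, ν (m + 1) = ν m - c (m + 1) := by
      intro m
      simp only [hνdef, hcdef, Function.iterate_succ_apply', Nat.add_sub_cancel]
    have hcmem : ∀ m, c m ∈ indexSet k β := fun m => (hstepspec (ν (m - 1))).1
    have hck : ∀ m, 1 ≤ c m ∧ c m ≤ k := by
      intro m
      have := (Finset.mem_filter.1 (hcmem m)).1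
      rw [Finset.mem_Icc] at this
      exact this
    have hνeq : ∀ m, ν m = n - ∑ j ∈ Icc 1 m, c j := by
      intro m
      induction m with
      | zero => simp [hν0]
      | succ m ih =>
          rw [hνs m, ih, Finset.sum_Icc_succ_top (by omega : 1 ≤ m + 1), Nat.sub_sub]
    have hσle : ∀ m, (∑ j ∈ Icc 1 m, c j) ≤ m * k := by
      intro m
      calc (∑ j ∈ Icc 1 m, c j) ≤ ∑ j ∈ Icc 1 m, k :=
            Finset.sum_le_sum (fun j _ => (hck j).2)
        _ = m * k := by rw [Finset.sum_const, Nat.card_Icc]; simp [Nat.mul_comm]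
    have hν2k : ∀ m, m ≤ η → 2 * k ≤ ν m := by
      intro m hm
      rw [hνeq]
      have h1 := hσle m
      have h2 : m * k ≤ η * k := Nat.mul_le_mul_right k hm
      omega
    have hνs2 : ∀ m, ν (m + 1) = ν m - stepf (ν m) := by
      intro m
      simp only [hνdef, Function.iterate_succ_apply']
    have hchain : ∀ m, m ≤ η → ψ (η - m) ≤ x (ν m) := by
      intro m
      induction m with
      | zero =>
          intro _
          rw [hν0, Nat.sub_zero]
          exact le_trans hGψ hxnG.le
      | succ m ih =>
          intro hm1
          have hmη : m ≤ η := by omega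
          have hih := ih hmη
          have hν2 := hν2k m hmη
          have hxK : KK ≤ x (ν m) := by
            have h1 := hψge (η - m)
            linarith
          have hstep' := (hstepspec (ν m)).2 hν2 hxK
          rw [hνs2 m]
          have hkey2 : (ψ (η - (m + 1)) + a) / r ≤ ψ (η - m) := by
            have he : η - m = (η - (m + 1)) + 1 := by omega
            rw [he, hψs]
            exact le_max_right _ _
          have h7 : ψ (η - (m + 1)) + a ≤ ψ (η - m) * r := by
            rw [div_le_iff₀ hr0] at hkey2; linarith
          have h8 : r * ψ (η - m) ≤ r * x (ν m) := mul_le_mul_of_nonneg_left hih hr0.le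
          nlinarith [hstep']
    -- apply the iteration condition
    obtain ⟨N1, N2, hN1, hN12, hN2η, hsmem⟩ := hiter c (fun m _ => hcmem m)
    set s : ℕ := ∑ m ∈ Icc N1 N2, c m with hsdef
    set n' : ℕ := ν (N1 - 1) with hn'def
    set n'' : ℕ := ν N2 with hn''def
    have hsplit : (∑ j ∈ Icc 1 (N1 - 1), c j) + s = ∑ j ∈ Icc 1 N2, c j := by
      have e1 : ∀ m : ℕ, Icc 1 m = Ioc 0 m := by
        intro m; ext j; simp only [Finset.mem_Icc, Finset.mem_Ioc]; omega
      have e2 : Icc N1 N2 = Ioc (N1 - 1) N2 := by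
        ext j; simp only [Finset.mem_Icc, Finset.mem_Ioc]; omega
      rw [hsdef, e1, e1, e2]
      exact Finset.sum_Ioc_consecutive c (Nat.zero_le _) (by omega)
    have hsub' : n' - s = n'' := by
      rw [hn'def, hn''def, hνeq, hνeq, Nat.sub_sub, hsplit]
    have hn'2k : 2 * k ≤ n' := hν2k _ (by omega)
    have hn''T : T ≤ x n'' := le_trans (hψge _) (hchain N2 hN2η)
    have hn'T : T ≤ x n' := le_trans (hψge _) (hchain (N1 - 1) (by omega))
    have hsIcc : s ∈ Icc 1 k := (Finset.mem_filter.1 hsmem).1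
    have hn'len : n' ≤ n := by rw [hn'def, hνeq]; omega
    have hDlow : b * x n'' ≤ Dn n' := by
      have h1 : B s * x (n' - s) ≤ ∑ j ∈ Icc 1 k, B j * x (n' - j) :=
        Finset.single_le_sum (f := fun j => B j * x (n' - j))
          (fun j _ => mul_nonneg (hB j) (hxnn _)) hsIcc
      have h2 : 0 ≤ ∑ j ∈ Icc 1 k, C j * y (n' - j) :=
        Finset.sum_nonneg (fun j _ => mul_nonneg (hC j) (hynn _))
      have h3 : b * x (n' - s) ≤ B s * x (n' - s) :=
        mul_le_mul_of_nonneg_right (hble s hsmem) (hxnn _)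
      rw [hsub'] at h1 h3
      simp only [hDn]
      linarith
    have hβG : (∑ i ∈ Icc 1 k, β i * x (n' - i)) ≤ S * G := by
      rw [hSdef, Finset.sum_mul]
      apply Finset.sum_le_sum
      intro i hi
      have hi1 : 1 ≤ i := (Finset.mem_Icc.1 hi).1
      have : n' - i < n := by omega
      exact mul_le_mul_of_nonneg_left (hhist _ this) (hβ i)
    have hup := hkey n' (by omega)
    have hlow : (T - KK) * (b * T) ≤ (x n' - KK) * Dn n' := by
      have h1 : b * T ≤ b * x n'' := mul_le_mul_of_nonneg_left hn''T hb0.le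
      have h2 : T - KK ≤ x n' - KK := by linarith
      have h3 : 0 ≤ b * T := by positivity
      have h4 : 0 ≤ T - KK := by linarith
      calc (T - KK) * (b * T) ≤ (x n' - KK) * (b * x n'') :=
            mul_le_mul h2 (le_trans h1 (le_refl _)) h3 (by linarith)
        _ ≤ (x n' - KK) * Dn n' :=
            mul_le_mul_of_nonneg_left hDlow (by linarith)
    linarith
end

section
/- Suppose the sequence {y_n} is bounded above, A > 0, and there exists a positive integer η such that for every sequence {c_m}_{m=1}^∞ with c_m ∈ I_β for all m, there exist positive integers N1 ≤ N2 ≤ η with Σ_{m=N1}^{N2} c_m ∈ I_B. Then there exist M > 0 and N ∈ ℕ such that x_n ≤ M for all n > N. -/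
/-!
With `b = ∑ βᵢ` and `C₀ = α + (∑ γᵢ) m3`, the recurrence gives
`xₙ (A + ∑ Bⱼ xₙ₋ⱼ) ≤ C₀ + ∑ βᵢ xₙ₋ᵢ`. Dropping the `B`-terms, `A xₙ ≤ C₀ + b xₙ₋ᵢ` where
`i ∈ I_β` maximises `xₙ₋ᵢ`; so a very large `xₙ` stays large along a backward walk
`n, n - c₁, n - c₁ - c₂, …` with steps `cₘ ∈ I_β`, for `η` steps. The hypothesis on `η` gives a
block of consecutive steps whose sum `s` lies in `I_B`, and at the start `n'` of that block
`B_s xₙ' xₙ'₋ₛ` is quadratic in the threshold, while `C₀ + ∑ βᵢ xₙ'₋ᵢ` is at most affine in the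
running maximum. Hence, by strong induction, the running maximum never exceeds a suitable level.
-/

open Finset

open Filter

section IndexSet

variable {k : ℕ} {β : ℕ → ℝ}

lemma le_of_mem_indexSet {i : ℕ} (hi : i ∈ indexSet k β) : i ≤ k :=
  (mem_Icc.1 (mem_filter.1 hi).1).2

lemma sum_indexSet_mul (hβ : ∀ i, 0 ≤ β i) (u : ℕ → ℝ) :
    ∑ i ∈ indexSet k β, β i * u i = ∑ i ∈ Icc 1 k, β i * u i :=
  sum_filter_of_ne fun i _ h => (hβ i).lt_of_ne (left_ne_zero_of_mul h).symm

lemma exists_mem_indexSet_sum_mul_le (hβ : ∀ i, 0 ≤ β i) (hne : (indexSet k β).Nonempty)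
    (u : ℕ → ℝ) : ∃ i ∈ indexSet k β, ∑ j ∈ Icc 1 k, β j * u j ≤ (∑ j ∈ Icc 1 k, β j) * u i := by
  obtain ⟨i, hi, hmax⟩ := exists_max_image _ u hne
  refine ⟨i, hi, ?_⟩
  calc ∑ j ∈ Icc 1 k, β j * u j = ∑ j ∈ indexSet k β, β j * u j := (sum_indexSet_mul hβ u).symm
    _ ≤ ∑ j ∈ indexSet k β, β j * u i :=
        sum_le_sum fun j hj => mul_le_mul_of_nonneg_left (hmax j hj) (hβ j)
    _ = (∑ j ∈ Icc 1 k, β j) * u i := by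
        rw [sum_indexSet_mul hβ fun _ => u i, sum_mul]

lemma exists_pos_forall_mem_indexSet_le (k : ℕ) (B : ℕ → ℝ) :
    ∃ b, 0 < b ∧ ∀ s ∈ indexSet k B, b ≤ B s := by
  rcases (indexSet k B).eq_empty_or_nonempty with h | h
  · exact ⟨1, one_pos, by simp [h]⟩
  · obtain ⟨s, hs, hmin⟩ := exists_min_image _ B h
    exact ⟨B s, (mem_filter.1 hs).2, hmin⟩

end IndexSet

section Descent

variable {k : ℕ} {ι : ℕ → ℕ} {n : ℕ}

def descent (ι : ℕ → ℕ) (n j : ℕ) : ℕ := (fun m => m - ι m)^[j] n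

lemma descent_succ (j : ℕ) : descent ι n (j + 1) = descent ι n j - ι (descent ι n j) :=
  Function.iterate_succ_apply' _ _ _

lemma descent_le (j : ℕ) : descent ι n j ≤ n := by
  induction j with
  | zero => rfl
  | succ j ih => rw [descent_succ]; omega

lemma le_descent_add_mul (hι : ∀ m, ι m ≤ k) (j : ℕ) : n ≤ descent ι n j + j * k := by
  induction j with
  | zero => simp [descent]
  | succ j ih => rw [descent_succ, add_mul, one_mul]; have := hι (descent ι n j); omega

lemma sum_Ioc_add_descent (hι : ∀ m, ι m ≤ k) {a b : ℕ} (hab : a ≤ b)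
    (hk : ∀ j < b, k ≤ descent ι n j) :
    ∑ m ∈ Ioc a b, ι (descent ι n (m - 1)) + descent ι n b = descent ι n a := by
  induction b, hab using Nat.le_induction with
  | base => simp
  | succ b hab ih =>
    rw [sum_Ioc_succ_top hab, Nat.add_sub_cancel, descent_succ, ← ih fun j hj => hk j (by omega)]
    have := hι (descent ι n b)
    have := hk b (by omega)
    omega

end Descent

lemma le_pow_mul_add_of_le_mul_add {u : ℕ → ℝ} {l μ : ℝ} (hl : 1 ≤ l) (hμ : 0 ≤ μ) {J : ℕ}
    (hu : ∀ j < J, u j ≤ l * u (j + 1) + μ) : u 0 ≤ l ^ J * (u J + J * μ) := by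
  induction J with
  | zero => simp
  | succ J ih =>
    have hpow : l ^ J ≤ l ^ (J + 1) := pow_le_pow_right₀ hl J.le_succ
    calc u 0 ≤ l ^ J * (u J + J * μ) := ih fun j hj => hu j (by omega)
      _ ≤ l ^ J * (l * u (J + 1) + μ + J * μ) := by gcongr; exact hu J J.lt_succ_self
      _ = l ^ (J + 1) * u (J + 1) + l ^ J * ((J + 1) * μ) := by ring
      _ ≤ l ^ (J + 1) * u (J + 1) + l ^ (J + 1) * ((J + 1) * μ) := by gcongr
      _ = l ^ (J + 1) * (u (J + 1) + ↑(J + 1) * μ) := by push_cast; ring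

lemma exists_add_mul_lt_mul_mul_self (c d : ℝ) {a : ℝ} (ha : 0 < a) :
    ∃ E, 0 ≤ E ∧ c + d * E < a * (E * E) := by
  set E := (|c| + |d| + 1) / a + 1
  have hE : |c| + |d| + 1 ≤ a * E := by
    rw [mul_add, mul_div_cancel₀ _ ha.ne']; linarith
  have hE1 : 1 ≤ E := le_add_of_nonneg_left (by positivity)
  refine ⟨E, by linarith, ?_⟩
  nlinarith [le_abs_self c, le_abs_self d, abs_nonneg c, abs_nonneg d]

lemma exists_large_pair {k η : ℕ} {β B x : ℕ → ℝ} (hx : ∀ n, 0 ≤ x n) {l μ E : ℝ}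
    (hl : 1 ≤ l) (hμ : 0 ≤ μ) {ι : ℕ → ℕ} (hι : ∀ m, ι m ∈ indexSet k β)
    (hstep : ∀ m, k ≤ m → x m ≤ l * x (m - ι m) + μ)
    (hiter : iterCond η (indexSet k β) (indexSet k B)) {n : ℕ} (hn : (η + 1) * k ≤ n)
    (hxn : l ^ η * (E + η * μ) < x n) :
    ∃ n' s, s ∈ indexSet k B ∧ k ≤ n' ∧ n' ≤ n ∧ E < x n' ∧ E < x (n' - s) := by
  have hιk : ∀ m, ι m ≤ k := fun m => le_of_mem_indexSet (hι m)
  have hpos : ∀ j ≤ η, k ≤ descent ι n j := fun j hj => by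
    have := le_descent_add_mul (n := n) hιk j
    have := Nat.mul_le_mul_right k hj
    rw [add_mul, one_mul] at hn
    omega
  have hlarge : ∀ j ≤ η, E < x (descent ι n j) := fun j hj => by
    have hchain : x n ≤ l ^ j * (x (descent ι n j) + j * μ) :=
      le_pow_mul_add_of_le_mul_add (u := fun i => x (descent ι n i)) hl hμ fun i hi => by
        simpa only [descent_succ] using hstep _ (hpos i (by omega))
    have hjη : l ^ j * (x (descent ι n j) + j * μ) ≤ l ^ η * (x (descent ι n j) + η * μ) := by
      have := hx (descent ι n j)
      gcongr
    have := lt_of_mul_lt_mul_left (hxn.trans_le (hchain.trans hjη)) (by positivity)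
    linarith
  obtain ⟨N₁, N₂, hN₁, hN₁₂, hN₂, hs⟩ :=
    hiter (fun m => ι (descent ι n (m - 1))) fun m _ => hι _
  have htel := sum_Ioc_add_descent (n := n) hιk (by omega : N₁ - 1 ≤ N₂)
    fun j hj => hpos j (by omega)
  rw [← Icc_add_one_left_eq_Ioc, Nat.sub_one_add_one hN₁.ne'] at htel
  refine ⟨descent ι n (N₁ - 1), _, hs, hpos _ (by omega), descent_le _,
    hlarge _ (by omega), ?_⟩
  rw [← htel, Nat.add_sub_cancel_left]
  exact hlarge N₂ hN₂

-- The recurrence for `x` cleared of denominators, with the `C y` part of the denominator dropped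
-- and the `α + γ y` part of the numerator bounded by the constant `C₀`.
def IsSubsolution (k : ℕ) (A C₀ : ℝ) (β B x : ℕ → ℝ) : Prop :=
  ∀ n, k ≤ n → x n * (A + ∑ j ∈ Icc 1 k, B j * x (n - j)) ≤ C₀ + ∑ i ∈ Icc 1 k, β i * x (n - i)

section Subsolution

variable {k η : ℕ} {A C₀ : ℝ} {β B x : ℕ → ℝ}

lemma isSubsolution_of_rec {α m₃ : ℝ} {γ C y : ℕ → ℝ}
    (hγ : ∀ i, 0 ≤ γ i) (hC : ∀ j, 0 ≤ C j) (hx : ∀ n, 0 ≤ x n) (hy : ∀ n, 0 ≤ y n)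
    (hym : ∀ n, y n ≤ m₃)
    (hden : ∀ n, k ≤ n →
      0 < A + ∑ j ∈ Icc 1 k, B j * x (n - j) + ∑ j ∈ Icc 1 k, C j * y (n - j))
    (hrec : ∀ n, k ≤ n → x n =
      (α + ∑ i ∈ Icc 1 k, β i * x (n - i) + ∑ i ∈ Icc 1 k, γ i * y (n - i)) /
      (A + ∑ j ∈ Icc 1 k, B j * x (n - j) + ∑ j ∈ Icc 1 k, C j * y (n - j))) :
    IsSubsolution k A (α + (∑ i ∈ Icc 1 k, γ i) * m₃) β B x := by
  intro n hn
  have hCy : 0 ≤ ∑ j ∈ Icc 1 k, C j * y (n - j) :=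
    sum_nonneg fun j _ => mul_nonneg (hC j) (hy _)
  have hγy : ∑ i ∈ Icc 1 k, γ i * y (n - i) ≤ (∑ i ∈ Icc 1 k, γ i) * m₃ := by
    rw [sum_mul]
    exact sum_le_sum fun i _ => mul_le_mul_of_nonneg_left (hym _) (hγ i)
  calc x n * (A + ∑ j ∈ Icc 1 k, B j * x (n - j))
      ≤ x n * (A + ∑ j ∈ Icc 1 k, B j * x (n - j) + ∑ j ∈ Icc 1 k, C j * y (n - j)) := by
        nlinarith [hx n]
    _ = α + ∑ i ∈ Icc 1 k, β i * x (n - i) + ∑ i ∈ Icc 1 k, γ i * y (n - i) := by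
        rw [hrec n hn, div_mul_cancel₀ _ (hden n hn).ne']
    _ ≤ _ := by linarith

namespace IsSubsolution

lemma mul_le (hsub : IsSubsolution k A C₀ β B x) (hx : ∀ n, 0 ≤ x n) (hB : ∀ j, 0 ≤ B j)
    {n : ℕ} (hn : k ≤ n) : A * x n ≤ C₀ + ∑ i ∈ Icc 1 k, β i * x (n - i) := by
  have : 0 ≤ x n * ∑ j ∈ Icc 1 k, B j * x (n - j) :=
    mul_nonneg (hx n) (sum_nonneg fun j _ => mul_nonneg (hB j) (hx _))
  linarith [hsub n hn]

lemma mul_mul_le (hsub : IsSubsolution k A C₀ β B x) (hx : ∀ n, 0 ≤ x n)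
    (hB : ∀ j, 0 ≤ B j) (hA : 0 ≤ A) {n s : ℕ} (hn : k ≤ n) (hs : s ∈ Icc 1 k) :
    B s * (x n * x (n - s)) ≤ C₀ + ∑ i ∈ Icc 1 k, β i * x (n - i) := by
  have hBs : B s * x (n - s) ≤ ∑ j ∈ Icc 1 k, B j * x (n - j) :=
    single_le_sum (f := fun j => B j * x (n - j)) (fun j _ => mul_nonneg (hB j) (hx _)) hs
  calc B s * (x n * x (n - s)) ≤ x n * (A + ∑ j ∈ Icc 1 k, B j * x (n - j)) := by
        nlinarith [hx n, mul_nonneg hA (hx n)]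
    _ ≤ _ := hsub n hn

lemma le_div_of_indexSet_eq_empty (hsub : IsSubsolution k A C₀ β B x) (hx : ∀ n, 0 ≤ x n)
    (hB : ∀ j, 0 ≤ B j) (hβ : ∀ i, 0 ≤ β i) (hA : 0 < A) (h : indexSet k β = ∅) {n : ℕ}
    (hn : k ≤ n) : x n ≤ C₀ / A := by
  have := hsub.mul_le hx hB hn
  rw [← sum_indexSet_mul hβ, h, sum_empty, add_zero] at this
  rwa [le_div_iff₀ hA, mul_comm]

lemma exists_descent_step (hsub : IsSubsolution k A C₀ β B x) (hx : ∀ n, 0 ≤ x n)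
    (hB : ∀ j, 0 ≤ B j) (hβ : ∀ i, 0 ≤ β i) (hA : 0 < A) (hne : (indexSet k β).Nonempty) :
    ∃ ι : ℕ → ℕ, (∀ m, ι m ∈ indexSet k β) ∧ ∀ m, k ≤ m →
      x m ≤ (1 + (∑ i ∈ Icc 1 k, β i) / A) * x (m - ι m) + C₀ / A := by
  choose ι hι hmax using fun m => exists_mem_indexSet_sum_mul_le hβ hne fun i => x (m - i)
  refine ⟨ι, hι, fun m hm => ?_⟩
  have h : A * x m ≤ C₀ + (∑ i ∈ Icc 1 k, β i) * x (m - ι m) :=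
    (hsub.mul_le hx hB hm).trans (by linarith [hmax m])
  rw [← le_div_iff₀' hA] at h
  calc x m ≤ (C₀ + (∑ i ∈ Icc 1 k, β i) * x (m - ι m)) / A := h
    _ = (∑ i ∈ Icc 1 k, β i) / A * x (m - ι m) + C₀ / A := by ring
    _ ≤ _ := by nlinarith [hx (m - ι m)]

theorem exists_forall_le (hsub : IsSubsolution k A C₀ β B x) (hx : ∀ n, 0 ≤ x n)
    (hB : ∀ j, 0 ≤ B j) (hβ : ∀ i, 0 ≤ β i) (hA : 0 < A) (hC₀ : 0 ≤ C₀)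
    (hne : (indexSet k β).Nonempty) (hiter : iterCond η (indexSet k β) (indexSet k B)) :
    ∃ M, ∀ n, x n ≤ M := by
  set b := ∑ i ∈ Icc 1 k, β i
  have hb : 0 ≤ b := sum_nonneg fun i _ => hβ i
  have hl : 1 ≤ 1 + b / A := le_add_of_nonneg_right (by positivity)
  have hμ : 0 ≤ C₀ / A := by positivity
  obtain ⟨ι, hι, hstep⟩ := hsub.exists_descent_step hx hB hβ hA hne
  obtain ⟨Bmin, hBmin, hBmin_le⟩ := exists_pos_forall_mem_indexSet_le k B
  set l := 1 + b / A
  set μ := C₀ / A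
  set Minit := ∑ i ∈ range ((η + 1) * k), x i
  have hMinit : 0 ≤ Minit := sum_nonneg fun i _ => hx i
  -- `E` is chosen so that `C₀ + b * M < Bmin * E ^ 2` for the bound `M` below, affine in `E`.
  obtain ⟨E, hE, hEM⟩ :=
    exists_add_mul_lt_mul_mul_self (C₀ + b * (Minit + l ^ η * (η * μ))) (b * l ^ η) hBmin
  refine ⟨Minit + l ^ η * (E + η * μ), fun n => ?_⟩
  induction n using Nat.strong_induction_on with
  | _ n ih =>
  have hlarge : 0 ≤ l ^ η * (E + η * μ) := by positivity
  by_cases hn : n < (η + 1) * k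
  · linarith [single_le_sum (fun i _ => hx i) (mem_range.2 hn)]
  by_contra! hxn
  obtain ⟨n', s, hs, hn'k, hn'n, hE₁, hE₂⟩ :=
    exists_large_pair (E := E) hx hl hμ hι hstep hiter (not_lt.1 hn) (by linarith)
  have hsum : ∑ i ∈ Icc 1 k, β i * x (n' - i) ≤ b * (Minit + l ^ η * (E + η * μ)) := by
    rw [sum_mul]
    refine sum_le_sum fun i hi => mul_le_mul_of_nonneg_left (ih _ ?_) (hβ i)
    have := mem_Icc.1 hi
    omega
  have hpair := hsub.mul_mul_le hx hB hA.le hn'k (mem_filter.1 hs).1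
  have : Bmin * (E * E) ≤ B s * (x n' * x (n' - s)) :=
    mul_le_mul (hBmin_le s hs) (mul_le_mul hE₁.le hE₂.le hE (hx _)) (by positivity) (hB s)
  nlinarith

theorem exists_eventually_le (hsub : IsSubsolution k A C₀ β B x) (hx : ∀ n, 0 ≤ x n)
    (hB : ∀ j, 0 ≤ B j) (hβ : ∀ i, 0 ≤ β i) (hA : 0 < A) (hC₀ : 0 ≤ C₀)
    (hiter : iterCond η (indexSet k β) (indexSet k B)) :
    ∃ M, ∀ᶠ n in atTop, x n ≤ M := by
  rcases (indexSet k β).eq_empty_or_nonempty with h | h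
  · exact ⟨C₀ / A, eventually_atTop.2
      ⟨k, fun n hn => hsub.le_div_of_indexSet_eq_empty hx hB hβ hA h hn⟩⟩
  · obtain ⟨M, hM⟩ := hsub.exists_forall_le hx hB hβ hA hC₀ h hiter
    exact ⟨M, Eventually.of_forall hM⟩

end IsSubsolution

end Subsolution

theorem stmt_10_general
    (k : ℕ)
    (α A : ℝ) (β γ B C : ℕ → ℝ)
    (hα : 0 ≤ α)
    (hβ : ∀ i, 0 ≤ β i) (hγ : ∀ i, 0 ≤ γ i) (hB : ∀ j, 0 ≤ B j) (hC : ∀ j, 0 ≤ C j)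
    (x y : ℕ → ℝ)
    (hxnn : ∀ n, 0 ≤ x n) (hynn : ∀ n, 0 ≤ y n)
    (hxden : ∀ n, k ≤ n →
      0 < A + ∑ j ∈ Icc 1 k, B j * x (n - j) + ∑ j ∈ Icc 1 k, C j * y (n - j))
    (hxrec : ∀ n, k ≤ n → x n =
      (α + ∑ i ∈ Icc 1 k, β i * x (n - i) + ∑ i ∈ Icc 1 k, γ i * y (n - i)) /
      (A + ∑ j ∈ Icc 1 k, B j * x (n - j) + ∑ j ∈ Icc 1 k, C j * y (n - j)))
    (m3 : ℝ) (hybd : ∀ n, y n ≤ m3)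
    (hApos : 0 < A)
    (hη : ∃ η : ℕ, 0 < η ∧ iterCond η (indexSet k β) (indexSet k B)) :
    ∃ M : ℝ, 0 < M ∧ ∃ N : ℕ, ∀ n, N < n → x n ≤ M := by
  obtain ⟨η, -, hiter⟩ := hη
  have hC₀ : 0 ≤ α + (∑ i ∈ Icc 1 k, γ i) * m3 :=
    add_nonneg hα (mul_nonneg (sum_nonneg fun i _ => hγ i) ((hynn 0).trans (hybd 0)))
  have hsub := isSubsolution_of_rec hγ hC hxnn hynn hybd hxden hxrec
  obtain ⟨M, hM⟩ := hsub.exists_eventually_le hxnn hB hβ hApos hC₀ hiter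
  obtain ⟨N, hN⟩ := eventually_atTop.1 hM
  exact ⟨max M 1, by positivity, N, fun n hn => (hN n hn.le).trans (le_max_left _ _)⟩

theorem stmt_10
    (k : ℕ) (hk : 0 < k)
    (α A p q : ℝ) (β γ B C δ ε D E : ℕ → ℝ)
    (hα : 0 ≤ α) (hA : 0 ≤ A) (hp : 0 ≤ p) (hq : 0 ≤ q)
    (hβ : ∀ i, 0 ≤ β i) (hγ : ∀ i, 0 ≤ γ i) (hB : ∀ j, 0 ≤ B j) (hC : ∀ j, 0 ≤ C j)
    (hδ : ∀ i, 0 ≤ δ i) (hε : ∀ i, 0 ≤ ε i) (hD : ∀ j, 0 ≤ D j) (hE : ∀ j, 0 ≤ E j)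
    (x y : ℕ → ℝ)
    (hxnn : ∀ n, 0 ≤ x n) (hynn : ∀ n, 0 ≤ y n)
    (hxden : ∀ n, k ≤ n →
      0 < A + ∑ j ∈ Icc 1 k, B j * x (n - j) + ∑ j ∈ Icc 1 k, C j * y (n - j))
    (hyden : ∀ n, k ≤ n →
      0 < q + ∑ j ∈ Icc 1 k, D j * x (n - j) + ∑ j ∈ Icc 1 k, E j * y (n - j))
    (hxrec : ∀ n, k ≤ n → x n =
      (α + ∑ i ∈ Icc 1 k, β i * x (n - i) + ∑ i ∈ Icc 1 k, γ i * y (n - i)) /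
      (A + ∑ j ∈ Icc 1 k, B j * x (n - j) + ∑ j ∈ Icc 1 k, C j * y (n - j)))
    (hyrec : ∀ n, k ≤ n → y n =
      (p + ∑ i ∈ Icc 1 k, δ i * x (n - i) + ∑ i ∈ Icc 1 k, ε i * y (n - i)) /
      (q + ∑ j ∈ Icc 1 k, D j * x (n - j) + ∑ j ∈ Icc 1 k, E j * y (n - j)))
    (m3 : ℝ) (hybd : ∀ n, y n ≤ m3)
    (hApos : 0 < A)
    (hη : ∃ η : ℕ, 0 < η ∧ iterCond η (indexSet k β) (indexSet k B)) :
    ∃ M : ℝ, 0 < M ∧ ∃ N : ℕ, ∀ n, N < n → x n ≤ M :=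
  stmt_10_general k α A β γ B C hα hβ hγ hB hC x y hxnn hynn hxden hxrec m3 hybd hApos hη
end

section
/- Suppose A > 0, q > 0, I_γ ⊆ I_C, and that there exists a positive integer η such that for every sequence {c_m}_{m=1}^∞ with c_m ∈ I_β for all m, there exist positive integers N1 ≤ N2 ≤ η with Σ_{m=N1}^{N2} c_m ∈ I_B. Suppose further that there exists a positive integer η2 such that for every sequence {d_m}_{m=1}^∞ with d_m ∈ I_ε for all m, there exist positive integers N3 ≤ N4 ≤ η2 with Σ_{m=N3}^{N4} d_m ∈ I_E. Then there exist M > 0 and N ∈ ℕ such that x_n ≤ M and y_n ≤ M for all n > N. -/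
open Finset

open Filter

/-!
Unfold the inequality `u n ≤ a + ∑ i, φ i * u (n - i) / den n` (for `u = x`: `φ = β`, with the
`γ`-terms absorbed into `a` via `γ i * y (n - i) / den n ≤ γ i / C i`) along words `c₁ c₂ ⋯` of
lags from `I_β`. Since `den ≥ A > 0`, every coefficient produced is bounded. A word stops as soon
as some block `c_{N₁} ⋯ c_t` ending at its last letter sums to some `w ∈ I_B`: the factor
`β c_{N₁} / den m` opening the block then meets `x (m - w)`, and `B w * x (m - w) ≤ den m` bounds
their product. The iteration condition makes every word stop before length `η`, so finitely many
unfoldings bound `x` eventually. Once `x` is bounded, the `δ`-terms are bounded and `y` is treated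
in the same way with `ε, E, η₂`.
-/

namespace RationalSystem

def HasInfixSumIn (T : Finset ℕ) (c : List ℕ) : Prop :=
  ∃ d, d ≠ [] ∧ d <:+: c ∧ d.sum ∈ T

lemma not_hasInfixSumIn_nil (T : Finset ℕ) : ¬ HasInfixSumIn T [] := by
  rintro ⟨d, hd, hdc, -⟩
  exact hd (List.eq_nil_of_infix_nil hdc)

lemma hasInfixSumIn_of_iterCond {η : ℕ} {S T : Finset ℕ} (hη : 0 < η) (h : iterCond η S T)
    {c : List ℕ} (hcS : ∀ i ∈ c, i ∈ S) (hlen : c.length = η) : HasInfixSumIn T c := by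
  have hc : c ≠ [] := List.ne_nil_of_length_pos (hlen ▸ hη)
  set f : ℕ → ℕ := fun m => c.getD (m - 1) (c.head hc)
  have hfS : ∀ m, 1 ≤ m → f m ∈ S := fun m _ => by
    rcases lt_or_ge (m - 1) c.length with hm | hm
    · simpa only [f, List.getD_eq_getElem _ _ hm] using hcS _ (List.getElem_mem hm)
    · simpa only [f, List.getD_eq_default _ _ hm] using hcS _ (List.head_mem hc)
  have hc_eq : (List.range' 1 η).map f = c := by
    refine List.ext_getElem (by simp [hlen]) fun j _ hj => ?_
    simp [f, List.getElem?_eq_getElem hj]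
  obtain ⟨N1, N2, hN1, hN12, hN2, hT⟩ := h f hfS
  refine ⟨(List.range' N1 (N2 + 1 - N1)).map f, by simp; omega, ?_, ?_⟩
  · have hsplit : List.range' 1 (N1 - 1) ++ List.range' N1 (N2 + 1 - N1)
        ++ List.range' (N2 + 1) (η - N2) = List.range' 1 η := by
      have h1 := @List.range'_append_1 1 (N1 - 1) (N2 + 1 - N1)
      have h2 := @List.range'_append_1 1 N2 (η - N2)
      rw [show 1 + (N1 - 1) = N1 by omega, show N1 - 1 + (N2 + 1 - N1) = N2 by omega] at h1
      rw [show N2 + (η - N2) = η by omega, add_comm 1 N2] at h2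
      rw [h1, h2]
    rw [← hc_eq, ← hsplit]
    exact (List.infix_append _ _ _).map f
  · have hsum : ∑ m ∈ Icc N1 N2, f m = ((List.range' N1 (N2 + 1 - N1)).map f).sum := by
      rw [Finset.sum_eq_multiset_sum, Nat.Icc_eq_range']
      simp
    exact hsum ▸ hT

lemma exists_eq_append_cons_of_hasInfixSumIn_concat {T : Finset ℕ} {c : List ℕ} {i : ℕ}
    (h : HasInfixSumIn T (c ++ [i])) (hc : ¬ HasInfixSumIn T c) :
    ∃ e j d, c ++ [i] = e ++ j :: d ∧ (j :: d).sum ∈ T := by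
  obtain ⟨d, hd, hdc, hdT⟩ := h
  rcases List.infix_concat_iff.1 hdc with ⟨e, he⟩ | hdc'
  · obtain ⟨j, d', rfl⟩ := List.exists_cons_of_ne_nil hd
    exact ⟨e, j, d', he.symm, hdT⟩
  · exact absurd ⟨d, hd, hdc', hdT⟩ hc

section PathWeight

variable (φ den : ℕ → ℝ)

/-- Unfolding `u n ≤ a + ∑ i, φ i / den n * u (n - i)` along the successive lags of `c`
puts the coefficient `∏ⱼ φ cⱼ / den (n - c₁ - ⋯ - cⱼ₋₁)` in front of `u (n - c.sum)`. -/
noncomputable def pathWeight : List ℕ → ℕ → ℝ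
  | [], _ => 1
  | i :: c, n => φ i / den n * pathWeight c (n - i)

lemma pathWeight_append (c d : List ℕ) (n : ℕ) :
    pathWeight φ den (c ++ d) n = pathWeight φ den c n * pathWeight φ den d (n - c.sum) := by
  induction c generalizing n with
  | nil => simp [pathWeight]
  | cons i c ih => simp [pathWeight, ih, Nat.sub_sub, mul_assoc]

lemma pathWeight_concat (c : List ℕ) (i n : ℕ) :
    pathWeight φ den (c ++ [i]) n = pathWeight φ den c n * (φ i / den (n - c.sum)) := by
  simp [pathWeight_append, pathWeight]

variable {φ den}

lemma pathWeight_mem_Icc {ρ : ℝ} {N0 : ℕ} {c : List ℕ}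
    (hfac : ∀ i ∈ c, ∀ m, N0 ≤ m → φ i / den m ∈ Set.Icc 0 ρ) {n : ℕ} (hn : N0 + c.sum ≤ n) :
    pathWeight φ den c n ∈ Set.Icc 0 (ρ ^ c.length) := by
  induction c generalizing n with
  | nil => simp [pathWeight]
  | cons i c ih =>
    simp only [List.sum_cons] at hn
    obtain ⟨hf0, hfρ⟩ := hfac i List.mem_cons_self n (by omega)
    obtain ⟨hw0, hwρ⟩ := ih (fun j hj => hfac j (List.mem_cons_of_mem i hj)) (n := n - i) (by omega)
    simp only [pathWeight, List.length_cons, pow_succ']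
    exact ⟨mul_nonneg hf0 hw0, mul_le_mul hfρ hwρ hw0 (hf0.trans hfρ)⟩

end PathWeight

section Unfolding

variable {S T : Finset ℕ} {φ Φ u den : ℕ → ℝ} {a A' ρ K : ℝ} {η N0 : ℕ}

lemma pathWeight_mul_le_add_sum_concat
    (hrec : ∀ n, N0 ≤ n → u n ≤ a + ∑ i ∈ S, φ i * u (n - i) / den n)
    {c : List ℕ} {n : ℕ} (hn : N0 + c.sum ≤ n) (hw : 0 ≤ pathWeight φ den c n) :
    pathWeight φ den c n * u (n - c.sum) ≤
      a * pathWeight φ den c n + ∑ i ∈ S, pathWeight φ den (c ++ [i]) n * u (n - (c ++ [i]).sum) :=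
  calc pathWeight φ den c n * u (n - c.sum)
      ≤ pathWeight φ den c n * (a + ∑ i ∈ S, φ i * u (n - c.sum - i) / den (n - c.sum)) :=
        mul_le_mul_of_nonneg_left (hrec _ (by omega)) hw
    _ = _ := by
      simp only [pathWeight_concat, List.sum_append, List.sum_singleton, Nat.sub_sub, mul_add,
        Finset.mul_sum]
      congr 1
      · ring
      · exact sum_congr rfl fun i _ => by ring

lemma pathWeight_mul_le_of_eq_append_cons (hK : 0 ≤ K)
    (hfac : ∀ i ∈ S, ∀ m, N0 ≤ m → φ i / den m ∈ Set.Icc 0 ρ)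
    (hstop : ∀ w ∈ T, ∀ j ∈ S, ∀ m, N0 ≤ m → φ j * u (m - w) / den m ≤ K)
    {e d : List ℕ} {j n : ℕ} (hS : ∀ i ∈ e ++ j :: d, i ∈ S) (hT : (j :: d).sum ∈ T)
    (hn : N0 + (e ++ j :: d).sum ≤ n) :
    pathWeight φ den (e ++ j :: d) n * u (n - (e ++ j :: d).sum) ≤
      ρ ^ (e.length + d.length) * K := by
  simp only [List.sum_append, List.sum_cons] at hn
  set m := n - e.sum
  have hsplit : pathWeight φ den (e ++ j :: d) n * u (n - (e ++ j :: d).sum) =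
      pathWeight φ den e n * pathWeight φ den d (m - j) * (φ j * u (m - (j :: d).sum) / den m) := by
    simp only [pathWeight_append, pathWeight, List.sum_append, List.sum_cons, Nat.sub_sub, m]
    ring
  obtain ⟨he0, heρ⟩ := pathWeight_mem_Icc (c := e) (fun i hi => hfac i (hS i (by simp [hi])))
    (n := n) (by omega)
  obtain ⟨hd0, hdρ⟩ := pathWeight_mem_Icc (c := d) (fun i hi => hfac i (hS i (by simp [hi])))
    (n := m - j) (by omega)
  rw [hsplit, pow_add]
  calc _ ≤ pathWeight φ den e n * pathWeight φ den d (m - j) * K :=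
        mul_le_mul_of_nonneg_left (hstop _ hT j (hS j (by simp)) m (by omega)) (mul_nonneg he0 hd0)
    _ ≤ ρ ^ e.length * ρ ^ d.length * K :=
        mul_le_mul_of_nonneg_right (mul_le_mul heρ hdρ hd0 (he0.trans heρ)) hK

lemma add_sum_le_of_length_le {c : List ℕ} (hc : ∀ i ∈ c, i ∈ S) (hlen : c.length ≤ η) {n : ℕ}
    (hn : N0 + S.sup id * η ≤ n) : N0 + c.sum ≤ n := by
  have hsum := List.sum_le_card_nsmul c (S.sup id) fun i hi => Finset.le_sup (f := id) (hc i hi)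
  have := Nat.mul_le_mul_right (S.sup id) hlen
  rw [smul_eq_mul] at hsum
  nlinarith

lemma exists_bound_pathWeight_mul (hη : 0 < η) (hiter : iterCond η S T) (hρ : 1 ≤ ρ)
    (hK : 0 ≤ K) (hfac : ∀ i ∈ S, ∀ m, N0 ≤ m → φ i / den m ∈ Set.Icc 0 ρ)
    (hstop : ∀ w ∈ T, ∀ j ∈ S, ∀ m, N0 ≤ m → φ j * u (m - w) / den m ≤ K)
    (hrec : ∀ n, N0 ≤ n → u n ≤ a + ∑ i ∈ S, φ i * u (n - i) / den n) (r : ℕ) :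
    ∃ C, ∀ c : List ℕ, (∀ i ∈ c, i ∈ S) → ¬ HasInfixSumIn T c → c.length + r = η →
      ∀ n, N0 + S.sup id * η ≤ n → pathWeight φ den c n * u (n - c.sum) ≤ C := by
  induction r with
  | zero =>
    exact ⟨0, fun c hcS hc hlen => absurd (hasInfixSumIn_of_iterCond hη hiter hcS hlen) hc⟩
  | succ r ih =>
    obtain ⟨C, hC⟩ := ih
    refine ⟨|a| * ρ ^ η + S.card • max C (ρ ^ η * K), fun c hcS hc hlen n hn => ?_⟩
    obtain ⟨hw0, hwρ⟩ := pathWeight_mem_Icc (fun i hi => hfac i (hcS i hi))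
      (add_sum_le_of_length_le hcS (by omega) hn)
    have hterm : ∀ i ∈ S,
        pathWeight φ den (c ++ [i]) n * u (n - (c ++ [i]).sum) ≤ max C (ρ ^ η * K) := by
      intro i hi
      have hci : ∀ j ∈ c ++ [i], j ∈ S := by simpa [or_imp, forall_and] using ⟨hcS, hi⟩
      by_cases hstopped : HasInfixSumIn T (c ++ [i])
      · obtain ⟨e, j, d, hed, hT⟩ :=
          exists_eq_append_cons_of_hasInfixSumIn_concat hstopped hc
        have hlen' : e.length + (d.length + 1) = c.length + 1 := by
          simpa using congrArg List.length hed.symm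
        rw [hed] at hci ⊢
        refine le_max_of_le_right ((pathWeight_mul_le_of_eq_append_cons hK hfac hstop hci hT
          (add_sum_le_of_length_le hci (by simp; omega) hn)).trans ?_)
        exact mul_le_mul_of_nonneg_right (pow_le_pow_right₀ hρ (by omega)) hK
      · exact le_max_of_le_left (hC _ hci hstopped (by simp; omega) n hn)
    calc pathWeight φ den c n * u (n - c.sum)
        ≤ a * pathWeight φ den c n +
            ∑ i ∈ S, pathWeight φ den (c ++ [i]) n * u (n - (c ++ [i]).sum) :=
          pathWeight_mul_le_add_sum_concat hrec (add_sum_le_of_length_le hcS (by omega) hn) hw0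
      _ ≤ |a| * ρ ^ η + S.card • max C (ρ ^ η * K) := by
        gcongr ?_ + ?_
        · calc a * pathWeight φ den c n ≤ |a| * pathWeight φ den c n :=
                mul_le_mul_of_nonneg_right (le_abs_self a) hw0
            _ ≤ |a| * ρ ^ η := mul_le_mul_of_nonneg_left
                (hwρ.trans (pow_le_pow_right₀ hρ (by omega))) (abs_nonneg a)
        · exact Finset.sum_le_card_nsmul _ _ _ hterm

theorem exists_eventually_le_of_iterCond (hη : 0 < η) (hiter : iterCond η S T)
    (hφ : ∀ i ∈ S, 0 ≤ φ i) (hΦ : ∀ w ∈ T, 0 < Φ w) (hA' : 0 < A')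
    (hden : ∀ᶠ n in atTop, A' ≤ den n)
    (hdenΦ : ∀ᶠ n in atTop, ∀ w ∈ T, Φ w * u (n - w) ≤ den n)
    (hrec : ∀ᶠ n in atTop, u n ≤ a + ∑ i ∈ S, φ i * u (n - i) / den n) :
    ∃ M, ∀ᶠ n in atTop, u n ≤ M := by
  obtain ⟨N0, hN0⟩ := eventually_atTop.1 (hden.and (hdenΦ.and hrec))
  have hden_pos : ∀ m, N0 ≤ m → 0 < den m := fun m hm => hA'.trans_le (hN0 m hm).1
  have hΦinv : ∀ w ∈ T, 0 ≤ (Φ w)⁻¹ := fun w hw => (inv_pos.2 (hΦ w hw)).le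
  have hfac : ∀ i ∈ S, ∀ m, N0 ≤ m → φ i / den m ∈ Set.Icc 0 (1 + ∑ i ∈ S, φ i / A') := by
    intro i hi m hm
    refine ⟨div_nonneg (hφ i hi) (hden_pos m hm).le, ?_⟩
    calc φ i / den m ≤ φ i / A' := div_le_div_of_nonneg_left (hφ i hi) hA' (hN0 m hm).1
      _ ≤ ∑ i ∈ S, φ i / A' := single_le_sum (fun j hj => div_nonneg (hφ j hj) hA'.le) hi
      _ ≤ _ := le_add_of_nonneg_left zero_le_one
  have hstop : ∀ w ∈ T, ∀ j ∈ S, ∀ m, N0 ≤ m →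
      φ j * u (m - w) / den m ≤ (∑ i ∈ S, φ i) * ∑ w ∈ T, (Φ w)⁻¹ := by
    intro w hw j hj m hm
    have hu : u (m - w) / den m ≤ (Φ w)⁻¹ := by
      rw [div_le_iff₀ (hden_pos m hm), inv_mul_eq_div, le_div_iff₀ (hΦ w hw), mul_comm]
      exact (hN0 m hm).2.1 w hw
    calc φ j * u (m - w) / den m = φ j * (u (m - w) / den m) := mul_div_assoc ..
      _ ≤ φ j * (Φ w)⁻¹ := mul_le_mul_of_nonneg_left hu (hφ j hj)
      _ ≤ _ := mul_le_mul (single_le_sum hφ hj) (single_le_sum hΦinv hw) (hΦinv w hw)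
          (sum_nonneg hφ)
  obtain ⟨C, hC⟩ := exists_bound_pathWeight_mul hη hiter
    (le_add_of_nonneg_right (sum_nonneg fun i hi => div_nonneg (hφ i hi) hA'.le))
    (mul_nonneg (sum_nonneg hφ) (sum_nonneg hΦinv)) hfac hstop (fun n hn => (hN0 n hn).2.2) η
  refine ⟨C, eventually_atTop.2 ⟨N0 + S.sup id * η, fun n hn => ?_⟩⟩
  simpa [pathWeight] using hC [] (by simp) (not_hasInfixSumIn_nil T) (by simp) n hn

end Unfolding

lemma sum_indexSet_eq {k : ℕ} {f g : ℕ → ℝ} (hf : ∀ i, 0 ≤ f i) (hg : ∀ i, f i = 0 → g i = 0) :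
    ∑ i ∈ indexSet k f, g i = ∑ i ∈ Icc 1 k, g i :=
  sum_filter_of_ne fun i _ hgi => (hf i).lt_of_ne fun h0 => hgi (hg i h0.symm)

section Denominator

variable {ι : Type*} {s : Finset ι} {A : ℝ} {f g : ι → ℝ}

lemma le_add_sum_add_sum (hf : ∀ i ∈ s, 0 ≤ f i) (hg : ∀ i ∈ s, 0 ≤ g i) :
    A ≤ A + ∑ i ∈ s, f i + ∑ i ∈ s, g i := by
  linarith [sum_nonneg hf, sum_nonneg hg]

lemma le_add_sum_add_sum_left (hA : 0 ≤ A) (hf : ∀ i ∈ s, 0 ≤ f i) (hg : ∀ i ∈ s, 0 ≤ g i)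
    {j : ι} (hj : j ∈ s) : f j ≤ A + ∑ i ∈ s, f i + ∑ i ∈ s, g i := by
  linarith [single_le_sum hf hj, sum_nonneg hg]

lemma le_add_sum_add_sum_right (hA : 0 ≤ A) (hf : ∀ i ∈ s, 0 ≤ f i) (hg : ∀ i ∈ s, 0 ≤ g i)
    {j : ι} (hj : j ∈ s) : g j ≤ A + ∑ i ∈ s, f i + ∑ i ∈ s, g i := by
  linarith [single_le_sum hg hj, sum_nonneg hf]

end Denominator

lemma sum_mul_div_le_sum_indexSet_div {k : ℕ} {γ C v : ℕ → ℝ} {d : ℝ} (hγ : ∀ i, 0 ≤ γ i)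
    (hsub : indexSet k γ ⊆ indexSet k C) (hd : 0 < d) (hCv : ∀ i ∈ Icc 1 k, C i * v i ≤ d) :
    (∑ i ∈ Icc 1 k, γ i * v i) / d ≤ ∑ i ∈ indexSet k γ, γ i / C i := by
  rw [← sum_indexSet_eq hγ fun i h => by simp [h], sum_div]
  refine sum_le_sum fun i hi => ?_
  rw [div_le_div_iff₀ hd (mem_filter.1 (hsub hi)).2]
  calc γ i * v i * C i = γ i * (C i * v i) := by ring
    _ ≤ γ i * d := mul_le_mul_of_nonneg_left (hCv i (mem_filter.1 hi).1) (hγ i)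

lemma sum_mul_div_le_of_le {ι : Type*} {s : Finset ι} {δ v : ι → ℝ} {M d q : ℝ}
    (hδ : ∀ i ∈ s, 0 ≤ δ i) (hv : ∀ i ∈ s, v i ≤ M) (hM : 0 ≤ M) (hq : 0 < q) (hqd : q ≤ d) :
    (∑ i ∈ s, δ i * v i) / d ≤ (∑ i ∈ s, δ i) * M / q := by
  refine div_le_div₀ (mul_nonneg (sum_nonneg hδ) hM) ?_ hq hqd
  rw [sum_mul]
  exact sum_le_sum fun i hi => mul_le_mul_of_nonneg_left (hv i hi) (hδ i hi)

theorem exists_eventually_le_of_eq_div {k η : ℕ} {α A Q : ℝ} {β γ B C u v : ℕ → ℝ}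
    (hα : 0 ≤ α) (hA : 0 < A) (hβ : ∀ i, 0 ≤ β i) (hB : ∀ j, 0 ≤ B j) (hC : ∀ j, 0 ≤ C j)
    (hu : ∀ n, 0 ≤ u n) (hv : ∀ n, 0 ≤ v n)
    (hrec : ∀ n, k ≤ n → u n =
      (α + ∑ i ∈ Icc 1 k, β i * u (n - i) + ∑ i ∈ Icc 1 k, γ i * v (n - i)) /
      (A + ∑ j ∈ Icc 1 k, B j * u (n - j) + ∑ j ∈ Icc 1 k, C j * v (n - j)))
    (hcross : ∀ᶠ n in atTop, (∑ i ∈ Icc 1 k, γ i * v (n - i)) /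
      (A + ∑ j ∈ Icc 1 k, B j * u (n - j) + ∑ j ∈ Icc 1 k, C j * v (n - j)) ≤ Q)
    (hη : 0 < η) (hiter : iterCond η (indexSet k β) (indexSet k B)) :
    ∃ M, ∀ᶠ n in atTop, u n ≤ M := by
  have hBu : ∀ n, ∀ i ∈ Icc 1 k, 0 ≤ B i * u (n - i) := fun n i _ => mul_nonneg (hB i) (hu _)
  have hCv : ∀ n, ∀ i ∈ Icc 1 k, 0 ≤ C i * v (n - i) := fun n i _ => mul_nonneg (hC i) (hv _)
  refine exists_eventually_le_of_iterCond (a := α / A + Q) hη hiter (fun i _ => hβ i)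
    (fun w hw => (mem_filter.1 hw).2) hA (.of_forall fun n => le_add_sum_add_sum (hBu n) (hCv n))
    (.of_forall fun n w hw => le_add_sum_add_sum_left hA.le (hBu n) (hCv n) (mem_filter.1 hw).1) ?_
  filter_upwards [hcross, eventually_ge_atTop k] with n hQ hn
  set d := A + ∑ j ∈ Icc 1 k, B j * u (n - j) + ∑ j ∈ Icc 1 k, C j * v (n - j)
  have hαd : α / d ≤ α / A := div_le_div_of_nonneg_left hα hA (le_add_sum_add_sum (hBu n) (hCv n))
  have hβd : ∑ i ∈ indexSet k β, β i * u (n - i) / d = (∑ i ∈ Icc 1 k, β i * u (n - i)) / d := by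
    rw [sum_div, sum_indexSet_eq hβ fun i h => by simp [h]]
  rw [hrec n hn, add_div, add_div, hβd]
  linarith

end RationalSystem

open RationalSystem

theorem stmt_11_general
    (k : ℕ)
    (α A p q : ℝ) (β γ B C δ ε D E : ℕ → ℝ)
    (hα : 0 ≤ α) (hp : 0 ≤ p)
    (hβ : ∀ i, 0 ≤ β i) (hγ : ∀ i, 0 ≤ γ i) (hB : ∀ j, 0 ≤ B j) (hC : ∀ j, 0 ≤ C j)
    (hδ : ∀ i, 0 ≤ δ i) (hε : ∀ i, 0 ≤ ε i) (hD : ∀ j, 0 ≤ D j) (hE : ∀ j, 0 ≤ E j)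
    (x y : ℕ → ℝ)
    (hxnn : ∀ n, 0 ≤ x n) (hynn : ∀ n, 0 ≤ y n)
    (hxrec : ∀ n, k ≤ n → x n =
      (α + ∑ i ∈ Icc 1 k, β i * x (n - i) + ∑ i ∈ Icc 1 k, γ i * y (n - i)) /
      (A + ∑ j ∈ Icc 1 k, B j * x (n - j) + ∑ j ∈ Icc 1 k, C j * y (n - j)))
    (hyrec : ∀ n, k ≤ n → y n =
      (p + ∑ i ∈ Icc 1 k, δ i * x (n - i) + ∑ i ∈ Icc 1 k, ε i * y (n - i)) /
      (q + ∑ j ∈ Icc 1 k, D j * x (n - j) + ∑ j ∈ Icc 1 k, E j * y (n - j)))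
    (hApos : 0 < A) (hqpos : 0 < q)
    (hsub : indexSet k γ ⊆ indexSet k C)
    (hη : ∃ η : ℕ, 0 < η ∧ iterCond η (indexSet k β) (indexSet k B))
    (hη2 : ∃ η2 : ℕ, 0 < η2 ∧ iterCond η2 (indexSet k ε) (indexSet k E)) :
    ∃ M : ℝ, 0 < M ∧ ∃ N : ℕ, ∀ n, N < n → x n ≤ M ∧ y n ≤ M := by
  obtain ⟨η, hη0, hβB⟩ := hη
  obtain ⟨η2, hη20, hεE⟩ := hη2
  have hBx n : ∀ i ∈ Icc 1 k, 0 ≤ B i * x (n - i) := fun i _ => mul_nonneg (hB i) (hxnn _)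
  have hCy n : ∀ i ∈ Icc 1 k, 0 ≤ C i * y (n - i) := fun i _ => mul_nonneg (hC i) (hynn _)
  have hDx n : ∀ i ∈ Icc 1 k, 0 ≤ D i * x (n - i) := fun i _ => mul_nonneg (hD i) (hxnn _)
  have hEy n : ∀ i ∈ Icc 1 k, 0 ≤ E i * y (n - i) := fun i _ => mul_nonneg (hE i) (hynn _)
  obtain ⟨Mx, hMx⟩ := exists_eventually_le_of_eq_div hα hApos hβ hB hC hxnn hynn
    hxrec (.of_forall fun n => sum_mul_div_le_sum_indexSet_div hγ hsub
      (hApos.trans_le (le_add_sum_add_sum (hBx n) (hCy n)))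
      fun i hi => le_add_sum_add_sum_right hApos.le (hBx n) (hCy n) hi) hη0 hβB
  have hMx0 : 0 ≤ Mx := let ⟨n, hn⟩ := hMx.exists; (hxnn n).trans hn
  have hx_lag : ∀ᶠ n in atTop, ∀ i ∈ Icc 1 k, x (n - i) ≤ Mx :=
    (eventually_all_finset _).2 fun i _ => (tendsto_sub_atTop_nat i).eventually hMx
  obtain ⟨My, hMy⟩ := exists_eventually_le_of_eq_div hp hqpos hε hE hD hynn hxnn
    (fun n hn => by rw [hyrec n hn, add_right_comm p, add_right_comm q])
    (hx_lag.mono fun n hn => sum_mul_div_le_of_le (fun i _ => hδ i) hn hMx0 hqpos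
      (le_add_sum_add_sum (hEy n) (hDx n))) hη20 hεE
  obtain ⟨N, hN⟩ := eventually_atTop.1 (hMx.and hMy)
  refine ⟨max (max Mx My) 1, lt_max_of_lt_right one_pos, N, fun n hn => ⟨?_, ?_⟩⟩
  · exact (hN n hn.le).1.trans ((le_max_left _ _).trans (le_max_left _ _))
  · exact (hN n hn.le).2.trans ((le_max_right _ _).trans (le_max_left _ _))

theorem stmt_11
    (k : ℕ) (hk : 0 < k)
    (α A p q : ℝ) (β γ B C δ ε D E : ℕ → ℝ)
    (hα : 0 ≤ α) (hA : 0 ≤ A) (hp : 0 ≤ p) (hq : 0 ≤ q)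
    (hβ : ∀ i, 0 ≤ β i) (hγ : ∀ i, 0 ≤ γ i) (hB : ∀ j, 0 ≤ B j) (hC : ∀ j, 0 ≤ C j)
    (hδ : ∀ i, 0 ≤ δ i) (hε : ∀ i, 0 ≤ ε i) (hD : ∀ j, 0 ≤ D j) (hE : ∀ j, 0 ≤ E j)
    (x y : ℕ → ℝ)
    (hxnn : ∀ n, 0 ≤ x n) (hynn : ∀ n, 0 ≤ y n)
    (hxden : ∀ n, k ≤ n →
      0 < A + ∑ j ∈ Icc 1 k, B j * x (n - j) + ∑ j ∈ Icc 1 k, C j * y (n - j))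
    (hyden : ∀ n, k ≤ n →
      0 < q + ∑ j ∈ Icc 1 k, D j * x (n - j) + ∑ j ∈ Icc 1 k, E j * y (n - j))
    (hxrec : ∀ n, k ≤ n → x n =
      (α + ∑ i ∈ Icc 1 k, β i * x (n - i) + ∑ i ∈ Icc 1 k, γ i * y (n - i)) /
      (A + ∑ j ∈ Icc 1 k, B j * x (n - j) + ∑ j ∈ Icc 1 k, C j * y (n - j)))
    (hyrec : ∀ n, k ≤ n → y n =
      (p + ∑ i ∈ Icc 1 k, δ i * x (n - i) + ∑ i ∈ Icc 1 k, ε i * y (n - i)) /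
      (q + ∑ j ∈ Icc 1 k, D j * x (n - j) + ∑ j ∈ Icc 1 k, E j * y (n - j)))
    (hApos : 0 < A) (hqpos : 0 < q)
    (hsub : indexSet k γ ⊆ indexSet k C)
    (hη : ∃ η : ℕ, 0 < η ∧ iterCond η (indexSet k β) (indexSet k B))
    (hη2 : ∃ η2 : ℕ, 0 < η2 ∧ iterCond η2 (indexSet k ε) (indexSet k E)) :
    ∃ M : ℝ, 0 < M ∧ ∃ N : ℕ, ∀ n, N < n → x n ≤ M ∧ y n ≤ M :=
  stmt_11_general k α A p q β γ B C δ ε D E hα hp hβ hγ hB hC hδ hε hD hE x y hxnn hynn hxrec hyrec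
    hApos hqpos hsub hη hη2
end

section
/- Suppose that for the solution ({x_n},{y_n}) there exists a constant M1 > 0 such that y_n ≤ M1·x_n for all n ∈ ℕ. Suppose further that A = 0, α = 0, and I_β ∪ (I_γ \ I_C) ⊆ I_B. Then there exist M > 0 and N ∈ ℕ such that x_n ≤ M and y_n ≤ M for all n > N. -/
open Finset

theorem stmt_12
    (k : ℕ) (hk : 0 < k)
    (α A p q : ℝ) (β γ B C δ ε D E : ℕ → ℝ)
    (hα : 0 ≤ α) (hA : 0 ≤ A) (hp : 0 ≤ p) (hq : 0 ≤ q)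
    (hβ : ∀ i, 0 ≤ β i) (hγ : ∀ i, 0 ≤ γ i) (hB : ∀ j, 0 ≤ B j) (hC : ∀ j, 0 ≤ C j)
    (hδ : ∀ i, 0 ≤ δ i) (hε : ∀ i, 0 ≤ ε i) (hD : ∀ j, 0 ≤ D j) (hE : ∀ j, 0 ≤ E j)
    (x y : ℕ → ℝ)
    (hxnn : ∀ n, 0 ≤ x n) (hynn : ∀ n, 0 ≤ y n)
    (hxden : ∀ n, k ≤ n →
      0 < A + ∑ j ∈ Icc 1 k, B j * x (n - j) + ∑ j ∈ Icc 1 k, C j * y (n - j))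
    (hyden : ∀ n, k ≤ n →
      0 < q + ∑ j ∈ Icc 1 k, D j * x (n - j) + ∑ j ∈ Icc 1 k, E j * y (n - j))
    (hxrec : ∀ n, k ≤ n → x n =
      (α + ∑ i ∈ Icc 1 k, β i * x (n - i) + ∑ i ∈ Icc 1 k, γ i * y (n - i)) /
      (A + ∑ j ∈ Icc 1 k, B j * x (n - j) + ∑ j ∈ Icc 1 k, C j * y (n - j)))
    (hyrec : ∀ n, k ≤ n → y n =
      (p + ∑ i ∈ Icc 1 k, δ i * x (n - i) + ∑ i ∈ Icc 1 k, ε i * y (n - i)) /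
      (q + ∑ j ∈ Icc 1 k, D j * x (n - j) + ∑ j ∈ Icc 1 k, E j * y (n - j)))
    (M1 : ℝ) (hM1 : 0 < M1) (hcmp : ∀ n, y n ≤ M1 * x n)
    (hA0 : A = 0) (hα0 : α = 0)
    (hsub : indexSet k β ∪ (indexSet k γ \ indexSet k C) ⊆ indexSet k B) :
    ∃ M : ℝ, 0 < M ∧ ∃ N : ℕ, ∀ n, N < n → x n ≤ M ∧ y n ≤ M := by
  subst hA0 hα0
  set r : ℕ → ℝ := fun i => (if 0 < β i then β i / B i else 0) +
    (if 0 < γ i then (if 0 < C i then γ i / C i else γ i * M1 / B i) else 0) with hr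
  set K : ℝ := ∑ i ∈ Icc 1 k, r i with hK
  have hrnn : ∀ i, 0 ≤ r i := by
    intro i
    simp only [hr]
    apply add_nonneg
    · split_ifs with h
      · exact div_nonneg (hβ i) (hB i)
      · exact le_rfl
    · split_ifs with h h2
      · exact div_nonneg (hγ i) (hC i)
      · exact div_nonneg (mul_nonneg (hγ i) hM1.le) (hB i)
      · exact le_rfl
  have hxb : ∀ n, k ≤ n → x n ≤ K := by
    intro n hn
    have hden := hxden n hn
    rw [hxrec n hn, div_le_iff₀ hden]
    set S1 := ∑ j ∈ Icc 1 k, B j * x (n - j) with hS1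
    set S2 := ∑ j ∈ Icc 1 k, C j * y (n - j) with hS2
    have hS1nn : 0 ≤ S1 := Finset.sum_nonneg fun j _ => mul_nonneg (hB j) (hxnn _)
    have hS2nn : 0 ≤ S2 := Finset.sum_nonneg fun j _ => mul_nonneg (hC j) (hynn _)
    have hB1 : ∀ i ∈ Icc 1 k, B i * x (n - i) ≤ 0 + S1 + S2 := by
      intro i hi
      have h : B i * x (n - i) ≤ S1 := Finset.single_le_sum (f := fun j => B j * x (n - j))
        (fun j _ => mul_nonneg (hB j) (hxnn _)) hi
      linarith
    have hC1 : ∀ i ∈ Icc 1 k, C i * y (n - i) ≤ 0 + S1 + S2 := by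
      intro i hi
      have h : C i * y (n - i) ≤ S2 := Finset.single_le_sum (f := fun j => C j * y (n - j))
        (fun j _ => mul_nonneg (hC j) (hynn _)) hi
      linarith
    have key : ∀ i ∈ Icc 1 k,
        β i * x (n - i) + γ i * y (n - i) ≤ r i * (0 + S1 + S2) := by
      intro i hi
      have h1 : β i * x (n - i) ≤ (if 0 < β i then β i / B i else 0) * (0 + S1 + S2) := by
        by_cases hbi : 0 < β i
        · rw [if_pos hbi]
          have hmemβ : i ∈ indexSet k β := Finset.mem_filter.mpr ⟨hi, hbi⟩
          have hmemB := hsub (Finset.mem_union_left _ hmemβ)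
          have hBi : 0 < B i := (Finset.mem_filter.mp hmemB).2
          calc β i * x (n - i) = (β i / B i) * (B i * x (n - i)) := by
                field_simp
              _ ≤ (β i / B i) * (0 + S1 + S2) :=
                mul_le_mul_of_nonneg_left (hB1 i hi) (div_nonneg (hβ i) (hB i))
        · rw [if_neg hbi]
          have hz : β i = 0 := le_antisymm (not_lt.mp hbi) (hβ i)
          simp [hz]
      have h2 : γ i * y (n - i) ≤
          (if 0 < γ i then (if 0 < C i then γ i / C i else γ i * M1 / B i) else 0)
            * (0 + S1 + S2) := by
        by_cases hgi : 0 < γ i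
        · rw [if_pos hgi]
          by_cases hci : 0 < C i
          · rw [if_pos hci]
            calc γ i * y (n - i) = (γ i / C i) * (C i * y (n - i)) := by
                  field_simp
                _ ≤ (γ i / C i) * (0 + S1 + S2) :=
                  mul_le_mul_of_nonneg_left (hC1 i hi) (div_nonneg (hγ i) (hC i))
          · rw [if_neg hci]
            have hmemγ : i ∈ indexSet k γ := Finset.mem_filter.mpr ⟨hi, hgi⟩
            have hmemC : i ∉ indexSet k C := fun h => hci (Finset.mem_filter.mp h).2
            have hmemB := hsub (Finset.mem_union_right _
              (Finset.mem_sdiff.mpr ⟨hmemγ, hmemC⟩))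
            have hBi : 0 < B i := (Finset.mem_filter.mp hmemB).2
            calc γ i * y (n - i) ≤ γ i * (M1 * x (n - i)) :=
                  mul_le_mul_of_nonneg_left (hcmp _) (hγ i)
                _ = (γ i * M1 / B i) * (B i * x (n - i)) := by field_simp
                _ ≤ (γ i * M1 / B i) * (0 + S1 + S2) :=
                  mul_le_mul_of_nonneg_left (hB1 i hi)
                    (div_nonneg (mul_nonneg (hγ i) hM1.le) (hB i))
        · rw [if_neg hgi]
          have hz : γ i = 0 := le_antisymm (not_lt.mp hgi) (hγ i)
          simp [hz]
      calc β i * x (n - i) + γ i * y (n - i)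
          ≤ (if 0 < β i then β i / B i else 0) * (0 + S1 + S2) +
            (if 0 < γ i then (if 0 < C i then γ i / C i else γ i * M1 / B i) else 0)
              * (0 + S1 + S2) := add_le_add h1 h2
        _ = r i * (0 + S1 + S2) := by simp only [hr]; ring
    calc 0 + (∑ i ∈ Icc 1 k, β i * x (n - i)) + ∑ i ∈ Icc 1 k, γ i * y (n - i)
        = ∑ i ∈ Icc 1 k, (β i * x (n - i) + γ i * y (n - i)) := by
          rw [Finset.sum_add_distrib]; ring
      _ ≤ ∑ i ∈ Icc 1 k, r i * (0 + S1 + S2) := Finset.sum_le_sum key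
      _ = K * (0 + S1 + S2) := by rw [hK, Finset.sum_mul]
  have hK0 : 0 ≤ K := Finset.sum_nonneg fun i _ => hrnn i
  refine ⟨max 1 (max K (M1 * K)), lt_of_lt_of_le one_pos (le_max_left _ _), k, fun n hn => ?_⟩
  have hxn := hxb n hn.le
  constructor
  · exact hxn.trans ((le_max_left _ _).trans (le_max_right _ _))
  · calc y n ≤ M1 * x n := hcmp n
      _ ≤ M1 * K := mul_le_mul_of_nonneg_left hxn hM1.le
      _ ≤ _ := (le_max_right _ _).trans (le_max_right _ _)
end

section
/- Suppose that for the solution ({x_n},{y_n}) there exist a constant M1 > 0 and a constant M2 ≥ 0 such that y_n ≤ M1·x_n + M2 for all n ∈ ℕ. Suppose further that A = 0, q > 0, one of the following holds: (i) I_B ⊆ I_β, I_C ⊆ I_γ, and I_B ≠ ∅; (ii) p > 0, I_D ⊆ I_δ, I_E ⊆ I_ε, and I_C ≠ ∅; and that I_δ ⊆ I_D, there exists a positive integer η1 such that for every sequence {c_m}_{m=1}^∞ with c_m ∈ I_ε for all m there exist positive integers N1 ≤ N2 ≤ η1 with Σ_{m=N1}^{N2} c_m ∈ I_D ∪ I_E,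 and there exists a positive integer η2 such that for every sequence {d_m}_{m=1}^∞ with d_m ∈ I_β for all m there exist positive integers N3 ≤ N4 ≤ η2 with Σ_{m=N3}^{N4} d_m ∈ I_B. Then there exist M > 0 and N ∈ ℕ such that x_n ≤ M and y_n ≤ M for all n > N. -/
open Finset

lemma aux_min_pos (T : Finset ℕ) (w : ℕ → ℝ) (hw : ∀ t ∈ T, 0 < w t) :
    ∃ c : ℝ, 0 < c ∧ ∀ t ∈ T, c ≤ w t := by
  rcases T.eq_empty_or_nonempty with h | h
  · exact ⟨1, one_pos, by simp [h]⟩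
  · exact ⟨T.inf' h w, (Finset.lt_inf'_iff h).mpr hw, fun t ht => Finset.inf'_le w ht⟩

lemma aux_ub (T : Finset ℕ) (w : ℕ → ℝ) :
    ∃ a : ℝ, 0 ≤ a ∧ ∀ t ∈ T, w t ≤ a := by
  rcases T.eq_empty_or_nonempty with h | h
  · exact ⟨0, le_refl _, by simp [h]⟩
  · exact ⟨max 0 (T.sup' h w), le_max_left _ _,
      fun t ht => (Finset.le_sup' w ht).trans (le_max_right _ _)⟩

lemma aux_sum_indexSet (k : ℕ) (f g : ℕ → ℝ) (hf : ∀ i, 0 ≤ f i) :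
    ∑ i ∈ indexSet k f, f i * g i = ∑ i ∈ Finset.Icc 1 k, f i * g i := by
  classical
  rw [indexSet]
  rw [Finset.filter_congr_decidable]
  apply Finset.sum_filter_of_ne
  intro i _ hne
  rcases (hf i).lt_or_eq with h | h
  · exact h
  · exact absurd (by rw [← h]; ring) hne

lemma aux_mem_indexSet {k i : ℕ} {f : ℕ → ℝ} :
    i ∈ indexSet k f ↔ (1 ≤ i ∧ i ≤ k) ∧ 0 < f i := by
  simp [indexSet, Finset.mem_filter, Finset.mem_Icc]

lemma aux_ratio_bound (k : ℕ) (ρ : ℝ) (f F u : ℕ → ℝ)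
    (hf : ∀ i, 0 ≤ f i) (hF : ∀ i, 0 ≤ F i) (hu : ∀ n, 0 ≤ u n)
    (hratio : ∀ j, 1 ≤ j → j ≤ k → 0 < F j → ρ * F j ≤ f j) (n : ℕ) :
    ρ * ∑ j ∈ Finset.Icc 1 k, F j * u (n - j) ≤
      ∑ i ∈ Finset.Icc 1 k, f i * u (n - i) := by
  rw [Finset.mul_sum]
  apply Finset.sum_le_sum
  intro j hj
  obtain ⟨hj1, hjk⟩ := Finset.mem_Icc.mp hj
  by_cases hFj : 0 < F j
  · have h := hratio j hj1 hjk hFj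
    nlinarith [hu (n - j)]
  · have hz : F j = 0 := le_antisymm (not_lt.mp hFj) (hF j)
    rw [hz]
    have := mul_nonneg (hf j) (hu (n - j))
    simpa using this

set_option maxHeartbeats 1000000 in
lemma keylemma (k η : ℕ) (_hk : 0 < k) (_hη : 0 < η)
    (S T : Finset ℕ) (hS : S ⊆ Finset.Icc 1 k)
    (hiter : iterCond η S T)
    (ε : ℕ → ℝ) (hSpos : ∀ i ∈ S, 0 < ε i) (hSnn : ∀ i, 0 ≤ ε i)
    (z den : ℕ → ℝ) (hz : ∀ n, 0 ≤ z n)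
    (K0 q0 c a : ℝ) (hK0 : 0 ≤ K0) (hq0 : 0 < q0) (hc : 0 < c) (ha : 0 ≤ a)
    (n₀ : ℕ) (hn₀ : k ≤ n₀)
    (hden : ∀ n, n₀ ≤ n → q0 ≤ den n)
    (hrec : ∀ n, n₀ ≤ n → z n ≤ K0 + (∑ i ∈ S, ε i * z (n - i)) / den n)
    (hdenT : ∀ n, n₀ ≤ n → ∀ t ∈ T, c * z (n - t) - a ≤ den n) :
    ∃ M : ℝ, ∀ n, z n ≤ M := by
  classical
  -- initial bound helper (inline)
  have aux_init : ∀ (N : ℕ), ∃ M : ℝ, ∀ m, m ≤ N → z m ≤ M := fun N =>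
    ⟨(Finset.Icc 0 N).sup' ⟨0, by simp⟩ z, fun m hm => Finset.le_sup' z (by simp [hm])⟩
  rcases S.eq_empty_or_nonempty with hSe | hSne
  · obtain ⟨M0, hM0⟩ := aux_init n₀
    refine ⟨max M0 K0, fun n => ?_⟩
    rcases le_or_gt n n₀ with h | h
    · exact (hM0 n h).trans (le_max_left _ _)
    · have := hrec n h.le
      rw [hSe] at this
      simpa using this.trans (by simp : K0 + (0:ℝ)/den n ≤ max M0 K0)
  by_contra hcon
  push_neg at hcon
  set E₀ := ∑ i ∈ S, ε i with hE₀def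
  have hE₀ : 0 < E₀ := Finset.sum_pos hSpos hSne
  set r := q0 / E₀ with hrdef
  have hr : 0 < r := div_pos hq0 hE₀
  set R := max 1 r with hRdef
  have hR1 : (1:ℝ) ≤ R := le_max_left _ _
  set ρ := min 1 (r ^ η) with hρdef
  have hρ : 0 < ρ := lt_min one_pos (pow_pos hr η)
  set s := K0 * η * R ^ η with hsdef
  have hs : 0 ≤ s := by positivity
  -- the pick function
  have hmax : ∀ n : ℕ, ∃ i, i ∈ S ∧ ∀ j ∈ S, z (n - j) ≤ z (n - i) := by
    intro n
    obtain ⟨i, hi, hmax⟩ := S.exists_max_image (fun i => z (n - i)) hSne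
    exact ⟨i, hi, hmax⟩
  choose pick hpickS hpickmax using hmax
  have hpickk : ∀ n, 1 ≤ pick n ∧ pick n ≤ k := fun n => by
    have := hS (hpickS n); rw [Finset.mem_Icc] at this; exact this
  -- the step inequality
  have hstep : ∀ n, n₀ ≤ n → r * (z n - K0) ≤ z (n - pick n) := by
    intro n hn
    have hsum : ∑ i ∈ S, ε i * z (n - i) ≤ E₀ * z (n - pick n) := by
      rw [hE₀def, Finset.sum_mul]
      exact Finset.sum_le_sum fun i hi =>
        mul_le_mul_of_nonneg_left (hpickmax n i hi) (hSnn i)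
    have hsumnn : 0 ≤ ∑ i ∈ S, ε i * z (n - i) :=
      Finset.sum_nonneg fun i _ => mul_nonneg (hSnn i) (hz _)
    have h1 : z n ≤ K0 + E₀ * z (n - pick n) / q0 := by
      have hnum : (0:ℝ) ≤ E₀ * z (n - pick n) := mul_nonneg hE₀.le (hz _)
      have step : (∑ i ∈ S, ε i * z (n - i)) / den n ≤ E₀ * z (n - pick n) / q0 :=
        div_le_div₀ hnum hsum hq0 (hden n hn)
      have := hrec n hn
      linarith
    have h2 : (z n - K0) * q0 ≤ E₀ * z (n - pick n) := by
      rw [← le_div_iff₀ hq0]; linarith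
    rw [hrdef, div_mul_eq_mul_div, div_le_iff₀ hE₀]
    nlinarith
  -- choose the threshold C
  obtain ⟨Cz, hCz⟩ := aux_init (n₀ + k * η)
  set C := max (max Cz (2 * (c * s + a) / (c * ρ)))
      (max ((s + K0 + 2 * E₀ / (c * ρ)) / ρ + 1) 1) with hCdef
  have hC1 : (1:ℝ) ≤ C := le_trans (le_max_right _ _) (le_max_right _ _)
  have hC0 : (0:ℝ) < C := lt_of_lt_of_le one_pos hC1
  have hCz' : ∀ m, m ≤ n₀ + k * η → z m ≤ C := fun m hm =>
    (hCz m hm).trans (le_trans (le_max_left _ _) (le_max_left _ _))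
  have hC2 : 2 * (c * s + a) ≤ c * ρ * C := by
    have h : 2 * (c * s + a) / (c * ρ) ≤ C :=
      le_trans (le_max_right _ _) (le_max_left _ _)
    rw [div_le_iff₀ (by positivity : (0:ℝ) < c * ρ)] at h
    linarith [h]
  have hC3 : s + K0 + 2 * E₀ / (c * ρ) + ρ ≤ ρ * C := by
    have h := le_trans (le_max_left ((s + K0 + 2 * E₀ / (c * ρ)) / ρ + 1) 1)
      (le_max_right (max Cz (2 * (c * s + a) / (c * ρ))) _)
    have := mul_le_mul_of_nonneg_left h hρ.le
    rw [mul_add, mul_one, mul_div_cancel₀ _ hρ.ne'] at this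
    linarith
  -- minimal n₁ with z n₁ > C
  have hex : ∃ n, C < z n := hcon C
  set n₁ := Nat.find hex with hn₁def
  have hn₁ : C < z n₁ := Nat.find_spec hex
  have hmin : ∀ m, m < n₁ → z m ≤ C := fun m hm => le_of_not_gt (Nat.find_min hex hm)
  have hn₁big : n₀ + k * η < n₁ := by
    by_contra h
    push_neg at h
    exact absurd (hCz' n₁ h) (not_le.mpr hn₁)
  -- the descending index chain
  set ν : ℕ → ℕ := fun m => Nat.rec (motive := fun _ => ℕ) n₁
    (fun _ prev => prev - pick prev) m with hνdef
  have hν0 : ν 0 = n₁ := rfl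
  have hνs : ∀ m, ν (m + 1) = ν m - pick (ν m) := fun m => rfl
  have hνlb : ∀ m, n₁ ≤ ν m + k * m := by
    intro m
    induction m with
    | zero => simp [hν0]
    | succ m ih =>
      have h1 := (hpickk (ν m)).2
      have h2 : ν m ≤ ν m - pick (ν m) + k := by omega
      calc n₁ ≤ ν m + k * m := ih
        _ ≤ ν m - pick (ν m) + k + k * m := Nat.add_le_add_right h2 _
        _ = ν m - pick (ν m) + k * (m + 1) := by ring
        _ = ν (m + 1) + k * (m + 1) := by rw [hνs m]
  have hνge : ∀ m, m ≤ η → n₀ < ν m := by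
    intro m hm
    have h1 := hνlb m
    have h2 : k * m ≤ k * η := Nat.mul_le_mul_left k hm
    have h3 : n₁ ≤ ν m + k * η := le_trans h1 (Nat.add_le_add_left h2 _)
    have h4 : n₀ + k * η < ν m + k * η := lt_of_lt_of_le hn₁big h3
    exact Nat.lt_of_add_lt_add_right h4
  have hνle : ∀ m, ν m ≤ n₁ := by
    intro m
    induction m with
    | zero => exact le_refl _
    | succ m ih => rw [hνs m]; omega
  set cseq : ℕ → ℕ := fun m => pick (ν (m - 1)) with hcseqdef
  have hνsum : ∀ m, m ≤ η → ν m + ∑ j ∈ Finset.Icc 1 m, cseq j = n₁ := by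
    intro m hm
    induction m with
    | zero => simp [hν0]
    | succ m ih =>
      have hm' : m ≤ η := by omega
      have h1 : pick (ν m) ≤ ν m := by
        have h2 := hνge m hm'
        have h3 := (hpickk (ν m)).2
        omega
      rw [Finset.sum_Icc_succ_top (by omega : 1 ≤ m + 1)]
      have h4 : cseq (m + 1) = pick (ν m) := by simp [hcseqdef]
      rw [hνs m, h4]
      have := ih hm'
      omega
  -- threshold sequence
  set tseq : ℕ → ℝ := fun m => Nat.rec (motive := fun _ => ℝ) C
    (fun _ p => r * (p - K0)) m with htseqdef
  have ht0 : tseq 0 = C := rfl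
  have hts : ∀ m, tseq (m + 1) = r * (tseq m - K0) := fun m => rfl
  have htz : ∀ m, m ≤ η → tseq m ≤ z (ν m) := by
    intro m hm
    induction m with
    | zero => rw [ht0, hν0]; exact hn₁.le
    | succ m ih =>
      have hm' : m ≤ η := by omega
      have h1 := hstep (ν m) (hνge m hm').le
      have h2 := ih hm'
      rw [hts m, hνs m]
      calc r * (tseq m - K0) ≤ r * (z (ν m) - K0) := by nlinarith
        _ ≤ z (ν m - pick (ν m)) := h1
  -- lower bound for tseq
  set dseq : ℕ → ℝ := fun m => Nat.rec (motive := fun _ => ℝ) 0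
    (fun _ p => r * (p + 1)) m with hdseqdef
  have hd0 : dseq 0 = 0 := rfl
  have hds : ∀ m, dseq (m + 1) = r * (dseq m + 1) := fun m => rfl
  have htd : ∀ m, tseq m = r ^ m * C - K0 * dseq m := by
    intro m
    induction m with
    | zero => simp [ht0, hd0]
    | succ m ih => rw [hts m, hds m, ih]; ring
  have hdb : ∀ m, 0 ≤ dseq m ∧ dseq m ≤ m * R ^ m := by
    intro m
    induction m with
    | zero => simp [hd0]
    | succ m ih =>
      constructor
      · rw [hds m]; nlinarith [ih.1]
      · rw [hds m, pow_succ]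
        have hrR : r ≤ R := le_max_right _ _
        have hR0 : (0:ℝ) ≤ R := le_trans zero_le_one hR1
        have hRm : (1:ℝ) ≤ R ^ m := one_le_pow₀ hR1
        have h7 : R * dseq m ≤ R * ((m:ℝ) * R ^ m) := mul_le_mul_of_nonneg_left ih.2 hR0
        have h8 : R * 1 ≤ R * R ^ m := mul_le_mul_of_nonneg_left hRm hR0
        have h9 : r * dseq m ≤ R * dseq m := mul_le_mul_of_nonneg_right hrR ih.1
        push_cast
        nlinarith [ih.1, h7, h8, h9, hrR]
  have hpowρ : ∀ m, m ≤ η → ρ ≤ r ^ m := by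
    intro m hm
    rcases le_total r 1 with h | h
    · exact (min_le_right _ _).trans (pow_le_pow_of_le_one hr.le h hm)
    · exact (min_le_left _ _).trans (one_le_pow₀ h)
  have htlb : ∀ m, m ≤ η → ρ * C - s ≤ tseq m := by
    intro m hm
    rw [htd m]
    have h1 : ρ * C ≤ r ^ m * C := mul_le_mul_of_nonneg_right (hpowρ m hm) hC0.le
    have h2 : K0 * dseq m ≤ s := by
      have h3 := (hdb m).2
      have h4 : (m : ℝ) * R ^ m ≤ (η : ℝ) * R ^ η := by
        have h5 : R ^ m ≤ R ^ η := pow_le_pow_right₀ hR1 hm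
        have h6 : (m:ℝ) ≤ (η:ℝ) := by exact_mod_cast hm
        have := pow_nonneg (by linarith : (0:ℝ) ≤ R) m
        nlinarith
      rw [hsdef]
      nlinarith [(hdb m).1]
    linarith
  -- apply iterCond
  obtain ⟨N1, N2, hN1, hN12, hN2η, hT⟩ := hiter cseq (fun m _ => hpickS _)
  set sstar := ∑ m ∈ Finset.Icc N1 N2, cseq m with hsstar
  have hsplit : ν (N1 - 1) = ν N2 + sstar := by
    have h1 := hνsum (N1 - 1) (by omega)
    have h2 := hνsum N2 (by omega)
    have h3 : ∑ j ∈ Finset.Icc 1 N2, cseq j =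
        (∑ j ∈ Finset.Icc 1 (N1 - 1), cseq j) + sstar := by
      rw [hsstar]
      have e1 : Finset.Icc 1 (N1 - 1) = Finset.Ico 1 N1 := by
        rw [← Finset.Ico_add_one_right_eq_Icc]
        congr 1
        omega
      have e2 : Finset.Icc N1 N2 = Finset.Ico N1 (N2 + 1) := by
        rw [Finset.Ico_add_one_right_eq_Icc]
      have e3 : Finset.Icc 1 N2 = Finset.Ico 1 (N2 + 1) := by
        rw [Finset.Ico_add_one_right_eq_Icc]
      rw [e1, e2, e3, Finset.sum_Ico_consecutive]
      · omega
      · omega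
    omega
  set n' := ν (N1 - 1) with hn'def
  have hn'₀ : n₀ < n' := hνge (N1 - 1) (by omega)
  have hzn' : tseq (N1 - 1) ≤ z n' := htz (N1 - 1) (by omega)
  have hub := hrec n' hn'₀.le
  have hsumC : ∑ i ∈ S, ε i * z (n' - i) ≤ E₀ * C := by
    rw [hE₀def, Finset.sum_mul]
    apply Finset.sum_le_sum
    intro i hi
    have hi1 : 1 ≤ i := (Finset.mem_Icc.mp (hS hi)).1
    have hn'1 : 1 ≤ n' := by omega
    have hn'le : n' ≤ n₁ := hνle _
    have : n' - i < n₁ := by omega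
    exact mul_le_mul_of_nonneg_left (hmin _ this) (hSnn i)
  have hdlb : c * ρ * C / 2 ≤ den n' := by
    have h1 := hdenT n' hn'₀.le sstar hT
    have h2 : n' - sstar = ν N2 := by omega
    rw [h2] at h1
    have h3 : ρ * C - s ≤ z (ν N2) := le_trans (htlb N2 hN2η) (htz N2 hN2η)
    nlinarith
  have hdpos : (0:ℝ) < c * ρ * C / 2 := by positivity
  have hsumnn : 0 ≤ ∑ i ∈ S, ε i * z (n' - i) :=
    Finset.sum_nonneg fun i _ => mul_nonneg (hSnn i) (hz _)
  have hfin : z n' ≤ K0 + 2 * E₀ / (c * ρ) := by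
    have h1 : (∑ i ∈ S, ε i * z (n' - i)) / den n' ≤ E₀ * C / (c * ρ * C / 2) :=
      div_le_div₀ (by positivity) hsumC hdpos hdlb
    have h2 : E₀ * C / (c * ρ * C / 2) = 2 * E₀ / (c * ρ) := by
      field_simp
    rw [h2] at h1
    linarith
  have hlow : ρ * C - s ≤ z n' := le_trans (htlb (N1 - 1) (by omega)) hzn'
  linarith

set_option maxHeartbeats 1000000 in
theorem stmt_13
    (k : ℕ) (hk : 0 < k)
    (α A p q : ℝ) (β γ B C δ ε D E : ℕ → ℝ)
    (hα : 0 ≤ α) (hA : 0 ≤ A) (hp : 0 ≤ p) (hq : 0 ≤ q)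
    (hβ : ∀ i, 0 ≤ β i) (hγ : ∀ i, 0 ≤ γ i) (hB : ∀ j, 0 ≤ B j) (hC : ∀ j, 0 ≤ C j)
    (hδ : ∀ i, 0 ≤ δ i) (hε : ∀ i, 0 ≤ ε i) (hD : ∀ j, 0 ≤ D j) (hE : ∀ j, 0 ≤ E j)
    (x y : ℕ → ℝ)
    (hxnn : ∀ n, 0 ≤ x n) (hynn : ∀ n, 0 ≤ y n)
    (hxden : ∀ n, k ≤ n →
      0 < A + ∑ j ∈ Icc 1 k, B j * x (n - j) + ∑ j ∈ Icc 1 k, C j * y (n - j))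
    (hyden : ∀ n, k ≤ n →
      0 < q + ∑ j ∈ Icc 1 k, D j * x (n - j) + ∑ j ∈ Icc 1 k, E j * y (n - j))
    (hxrec : ∀ n, k ≤ n → x n =
      (α + ∑ i ∈ Icc 1 k, β i * x (n - i) + ∑ i ∈ Icc 1 k, γ i * y (n - i)) /
      (A + ∑ j ∈ Icc 1 k, B j * x (n - j) + ∑ j ∈ Icc 1 k, C j * y (n - j)))
    (hyrec : ∀ n, k ≤ n → y n =
      (p + ∑ i ∈ Icc 1 k, δ i * x (n - i) + ∑ i ∈ Icc 1 k, ε i * y (n - i)) /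
      (q + ∑ j ∈ Icc 1 k, D j * x (n - j) + ∑ j ∈ Icc 1 k, E j * y (n - j)))
    (M1 M2 : ℝ) (hM1 : 0 < M1) (hM2 : 0 ≤ M2)
    (hcmp : ∀ n, y n ≤ M1 * x n + M2)
    (hA0 : A = 0) (hqpos : 0 < q)
    (hcase :
      (indexSet k B ⊆ indexSet k β ∧ indexSet k C ⊆ indexSet k γ ∧
        indexSet k B ≠ ∅) ∨
      (0 < p ∧ indexSet k D ⊆ indexSet k δ ∧ indexSet k E ⊆ indexSet k ε ∧
        indexSet k C ≠ ∅))
    (hsub : indexSet k δ ⊆ indexSet k D)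
    (hη1 : ∃ η1 : ℕ, 0 < η1 ∧
      iterCond η1 (indexSet k ε) (indexSet k D ∪ indexSet k E))
    (hη2 : ∃ η2 : ℕ, 0 < η2 ∧ iterCond η2 (indexSet k β) (indexSet k B)) :
    ∃ M : ℝ, 0 < M ∧ ∃ N : ℕ, ∀ n, N < n → x n ≤ M ∧ y n ≤ M := by
  classical
  obtain ⟨η1, hη1pos, hiter1⟩ := hη1
  obtain ⟨η2, hη2pos, hiter2⟩ := hη2
  have hsDx : ∀ n, 0 ≤ ∑ j ∈ Icc 1 k, D j * x (n - j) :=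
    fun n => Finset.sum_nonneg fun j _ => mul_nonneg (hD j) (hxnn _)
  have hsEy : ∀ n, 0 ≤ ∑ j ∈ Icc 1 k, E j * y (n - j) :=
    fun n => Finset.sum_nonneg fun j _ => mul_nonneg (hE j) (hynn _)
  have hsBx : ∀ n, 0 ≤ ∑ j ∈ Icc 1 k, B j * x (n - j) :=
    fun n => Finset.sum_nonneg fun j _ => mul_nonneg (hB j) (hxnn _)
  have hsCy : ∀ n, 0 ≤ ∑ j ∈ Icc 1 k, C j * y (n - j) :=
    fun n => Finset.sum_nonneg fun j _ => mul_nonneg (hC j) (hynn _)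
  ------------------------------------------------------------------
  -- STEP 1 : y is bounded
  ------------------------------------------------------------------
  set RΔ := ∑ i ∈ indexSet k δ, δ i / D i with hRΔdef
  have hRΔ : 0 ≤ RΔ :=
    Finset.sum_nonneg fun i _ => div_nonneg (hδ i) (hD i)
  set K0y := p / q + RΔ with hK0ydef
  have hK0y : 0 ≤ K0y := add_nonneg (div_nonneg hp hq) hRΔ
  have hdenq : ∀ n, k ≤ n →
      q ≤ q + ∑ j ∈ Icc 1 k, D j * x (n - j) + ∑ j ∈ Icc 1 k, E j * y (n - j) := by
    intro n _
    have := hsDx n; have := hsEy n; linarith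
  have hrecY : ∀ n, k ≤ n → y n ≤ K0y +
      (∑ i ∈ indexSet k ε, ε i * y (n - i)) /
      (q + ∑ j ∈ Icc 1 k, D j * x (n - j) + ∑ j ∈ Icc 1 k, E j * y (n - j)) := by
    intro n hn
    have hd := hyden n hn
    have hdq := hdenq n hn
    have h1 : p ≤ p / q *
        (q + ∑ j ∈ Icc 1 k, D j * x (n - j) + ∑ j ∈ Icc 1 k, E j * y (n - j)) := by
      have e : p / q * q = p := div_mul_cancel₀ p hqpos.ne'
      have := mul_le_mul_of_nonneg_left hdq (div_nonneg hp hq)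
      linarith
    have h2 : ∑ i ∈ Icc 1 k, δ i * x (n - i) ≤ RΔ *
        (q + ∑ j ∈ Icc 1 k, D j * x (n - j) + ∑ j ∈ Icc 1 k, E j * y (n - j)) := by
      rw [← aux_sum_indexSet k δ (fun i => x (n - i)) hδ, hRΔdef, Finset.sum_mul]
      apply Finset.sum_le_sum
      intro i hi
      have hiD := hsub hi
      obtain ⟨⟨hi1, hik⟩, hDi⟩ := aux_mem_indexSet.mp hiD
      have hterm : D i * x (n - i) ≤
          q + ∑ j ∈ Icc 1 k, D j * x (n - j) + ∑ j ∈ Icc 1 k, E j * y (n - j) := by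
        have hs1 : D i * x (n - i) ≤ ∑ j ∈ Icc 1 k, D j * x (n - j) :=
          Finset.single_le_sum (f := fun j => D j * x (n - j))
            (fun j _ => mul_nonneg (hD j) (hxnn _)) (Finset.mem_Icc.mpr ⟨hi1, hik⟩)
        have := hsEy n; linarith
      have e : δ i * x (n - i) = (δ i / D i) * (D i * x (n - i)) := by
        field_simp
      rw [e]
      exact mul_le_mul_of_nonneg_left hterm (div_nonneg (hδ i) (hD i))
    have h3 : ∑ i ∈ indexSet k ε, ε i * y (n - i) = ∑ i ∈ Icc 1 k, ε i * y (n - i) :=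
      aux_sum_indexSet k ε (fun i => y (n - i)) hε
    have hnum : p + ∑ i ∈ Icc 1 k, δ i * x (n - i) + ∑ i ∈ Icc 1 k, ε i * y (n - i) ≤
        K0y * (q + ∑ j ∈ Icc 1 k, D j * x (n - j) + ∑ j ∈ Icc 1 k, E j * y (n - j)) +
        ∑ i ∈ indexSet k ε, ε i * y (n - i) := by
      rw [h3, hK0ydef]; nlinarith
    rw [hyrec n hn]
    calc (p + ∑ i ∈ Icc 1 k, δ i * x (n - i) + ∑ i ∈ Icc 1 k, ε i * y (n - i)) /
        (q + ∑ j ∈ Icc 1 k, D j * x (n - j) + ∑ j ∈ Icc 1 k, E j * y (n - j)) ≤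
        (K0y * (q + ∑ j ∈ Icc 1 k, D j * x (n - j) + ∑ j ∈ Icc 1 k, E j * y (n - j)) +
          ∑ i ∈ indexSet k ε, ε i * y (n - i)) /
        (q + ∑ j ∈ Icc 1 k, D j * x (n - j) + ∑ j ∈ Icc 1 k, E j * y (n - j)) :=
        (div_le_div_iff_of_pos_right hd).mpr hnum
      _ = K0y + (∑ i ∈ indexSet k ε, ε i * y (n - i)) /
        (q + ∑ j ∈ Icc 1 k, D j * x (n - j) + ∑ j ∈ Icc 1 k, E j * y (n - j)) := by
        rw [add_div, mul_div_assoc, div_self hd.ne', mul_one]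
  have hwY : ∀ t ∈ indexSet k D ∪ indexSet k E,
      0 < (fun t => if 0 < D t then D t / M1 else E t) t := by
    intro t ht
    by_cases hDt : 0 < D t
    · simp only [if_pos hDt]; positivity
    · simp only [if_neg hDt]
      rcases Finset.mem_union.mp ht with h | h
      · exact absurd (aux_mem_indexSet.mp h).2 hDt
      · exact (aux_mem_indexSet.mp h).2
  obtain ⟨cY, hcY, hcYle⟩ := aux_min_pos _ _ hwY
  obtain ⟨aY, haY, haYge⟩ := aux_ub (indexSet k D ∪ indexSet k E)
    (fun t => if 0 < D t then D t * M2 / M1 else 0)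
  have hdenTY : ∀ n, k ≤ n → ∀ t ∈ indexSet k D ∪ indexSet k E,
      cY * y (n - t) - aY ≤
      q + ∑ j ∈ Icc 1 k, D j * x (n - j) + ∑ j ∈ Icc 1 k, E j * y (n - j) := by
    intro n hn t ht
    have htIcc : 1 ≤ t ∧ t ≤ k := by
      rcases Finset.mem_union.mp ht with h | h
      · exact (aux_mem_indexSet.mp h).1
      · exact (aux_mem_indexSet.mp h).1
    have h6 : cY * y (n - t) ≤ (if 0 < D t then D t / M1 else E t) * y (n - t) :=
      mul_le_mul_of_nonneg_right (hcYle t ht) (hynn _)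
    have h7 := haYge t ht
    have hkey : (if 0 < D t then D t / M1 else E t) * y (n - t) -
        (if 0 < D t then D t * M2 / M1 else 0) ≤
        q + ∑ j ∈ Icc 1 k, D j * x (n - j) + ∑ j ∈ Icc 1 k, E j * y (n - j) := by
      by_cases hDt : 0 < D t
      · simp only [if_pos hDt]
        have hx1 : y (n - t) - M2 ≤ M1 * x (n - t) := by linarith [hcmp (n - t)]
        have h2 : D t * x (n - t) ≤ ∑ j ∈ Icc 1 k, D j * x (n - j) :=
          Finset.single_le_sum (f := fun j => D j * x (n - j))
            (fun j _ => mul_nonneg (hD j) (hxnn _)) (Finset.mem_Icc.mpr htIcc)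
        have h4 : (D t / M1) * (y (n - t) - M2) ≤ (D t / M1) * (M1 * x (n - t)) :=
          mul_le_mul_of_nonneg_left hx1 (div_nonneg (hD t) hM1.le)
        have h5 : (D t / M1) * (M1 * x (n - t)) = D t * x (n - t) := by
          field_simp
        have h8 := hsEy n
        rw [h5] at h4
        have e : (D t / M1) * (y (n - t) - M2) =
            D t / M1 * y (n - t) - D t * M2 / M1 := by ring
        rw [e] at h4
        linarith
      · simp only [if_neg hDt]
        have hEt : t ∈ indexSet k E := by
          rcases Finset.mem_union.mp ht with h | h
          · exact absurd (aux_mem_indexSet.mp h).2 hDt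
          · exact h
        have h2 : E t * y (n - t) ≤ ∑ j ∈ Icc 1 k, E j * y (n - j) :=
          Finset.single_le_sum (f := fun j => E j * y (n - j))
            (fun j _ => mul_nonneg (hE j) (hynn _)) (Finset.mem_Icc.mpr htIcc)
        have := hsDx n
        linarith
    linarith
  obtain ⟨My, hMy⟩ := keylemma k η1 hk hη1pos (indexSet k ε)
    (indexSet k D ∪ indexSet k E) (Finset.filter_subset _ _) hiter1 ε
    (fun i hi => (aux_mem_indexSet.mp hi).2) hε y
    (fun n => q + ∑ j ∈ Icc 1 k, D j * x (n - j) + ∑ j ∈ Icc 1 k, E j * y (n - j))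
    hynn K0y q cY aY hK0y hqpos hcY haY k le_rfl hdenq hrecY hdenTY
  have hMy0 : 0 ≤ My := le_trans (hynn 0) (hMy 0)
  ------------------------------------------------------------------
  -- STEP 2 : eventual positive lower bound for the x-denominator
  ------------------------------------------------------------------
  have hdlow : ∃ d : ℝ, 0 < d ∧ ∀ n, 2 * k ≤ n →
      d ≤ A + ∑ j ∈ Icc 1 k, B j * x (n - j) + ∑ j ∈ Icc 1 k, C j * y (n - j) := by
    rcases hcase with ⟨hBβ, hCγ, hBne⟩ | ⟨hpp, hDδ, hEε, hCne⟩
    · -- case (i)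
      have hw1 : ∀ t ∈ indexSet k B ∪ indexSet k C,
          0 < (fun t => min (if 0 < B t then β t / B t else 1)
            (if 0 < C t then γ t / C t else 1)) t := by
        intro t ht
        have htIcc : 1 ≤ t ∧ t ≤ k := by
          rcases Finset.mem_union.mp ht with h | h
          · exact (aux_mem_indexSet.mp h).1
          · exact (aux_mem_indexSet.mp h).1
        apply lt_min
        · by_cases hBt : 0 < B t
          · simp only [if_pos hBt]
            have htB : t ∈ indexSet k B := aux_mem_indexSet.mpr ⟨htIcc, hBt⟩
            exact div_pos (aux_mem_indexSet.mp (hBβ htB)).2 hBt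
          · simp only [if_neg hBt]; exact one_pos
        · by_cases hCt : 0 < C t
          · simp only [if_pos hCt]
            have htC : t ∈ indexSet k C := aux_mem_indexSet.mpr ⟨htIcc, hCt⟩
            exact div_pos (aux_mem_indexSet.mp (hCγ htC)).2 hCt
          · simp only [if_neg hCt]; exact one_pos
      obtain ⟨ρ₁, hρ₁pos, hρ₁⟩ := aux_min_pos _ _ hw1
      have hr1 : ∀ j, 1 ≤ j → j ≤ k → 0 < B j → ρ₁ * B j ≤ β j := by
        intro j hj1 hjk hBj
        have hjB : j ∈ indexSet k B := aux_mem_indexSet.mpr ⟨⟨hj1, hjk⟩, hBj⟩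
        have h := (hρ₁ j (Finset.mem_union_left _ hjB)).trans (min_le_left _ _)
        rw [if_pos hBj] at h
        exact (le_div_iff₀ hBj).mp h
      have hr2 : ∀ j, 1 ≤ j → j ≤ k → 0 < C j → ρ₁ * C j ≤ γ j := by
        intro j hj1 hjk hCj
        have hjC : j ∈ indexSet k C := aux_mem_indexSet.mpr ⟨⟨hj1, hjk⟩, hCj⟩
        have h := (hρ₁ j (Finset.mem_union_right _ hjC)).trans (min_le_right _ _)
        rw [if_pos hCj] at h
        exact (le_div_iff₀ hCj).mp h
      have hxlow : ∀ n, k ≤ n → ρ₁ ≤ x n := by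
        intro n hn
        rw [hxrec n hn, le_div_iff₀ (hxden n hn)]
        have e1 := aux_ratio_bound k ρ₁ β B x hβ hB hxnn hr1 n
        have e2 := aux_ratio_bound k ρ₁ γ C y hγ hC hynn hr2 n
        rw [hA0, zero_add, mul_add]
        linarith
      obtain ⟨j₀, hj₀⟩ := Finset.nonempty_iff_ne_empty.mpr hBne
      obtain ⟨⟨hj₀1, hj₀k⟩, hBj₀⟩ := aux_mem_indexSet.mp hj₀
      refine ⟨B j₀ * ρ₁, mul_pos hBj₀ hρ₁pos, ?_⟩
      intro n hn
      have hxl := hxlow (n - j₀) (by omega)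
      have h1 : B j₀ * ρ₁ ≤ B j₀ * x (n - j₀) :=
        mul_le_mul_of_nonneg_left hxl (hB j₀)
      have h2 : B j₀ * x (n - j₀) ≤ ∑ j ∈ Icc 1 k, B j * x (n - j) :=
        Finset.single_le_sum (f := fun j => B j * x (n - j))
          (fun j _ => mul_nonneg (hB j) (hxnn _)) (Finset.mem_Icc.mpr ⟨hj₀1, hj₀k⟩)
      have := hsCy n
      linarith
    · -- case (ii)
      have hw2 : ∀ t ∈ indexSet k D ∪ indexSet k E,
          0 < (fun t => min (if 0 < D t then δ t / D t else 1)
            (if 0 < E t then ε t / E t else 1)) t := by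
        intro t ht
        have htIcc : 1 ≤ t ∧ t ≤ k := by
          rcases Finset.mem_union.mp ht with h | h
          · exact (aux_mem_indexSet.mp h).1
          · exact (aux_mem_indexSet.mp h).1
        apply lt_min
        · by_cases hDt : 0 < D t
          · simp only [if_pos hDt]
            have htD : t ∈ indexSet k D := aux_mem_indexSet.mpr ⟨htIcc, hDt⟩
            exact div_pos (aux_mem_indexSet.mp (hDδ htD)).2 hDt
          · simp only [if_neg hDt]; exact one_pos
        · by_cases hEt : 0 < E t
          · simp only [if_pos hEt]
            have htE : t ∈ indexSet k E := aux_mem_indexSet.mpr ⟨htIcc, hEt⟩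
            exact div_pos (aux_mem_indexSet.mp (hEε htE)).2 hEt
          · simp only [if_neg hEt]; exact one_pos
      obtain ⟨ρ', hρ'pos, hρ'⟩ := aux_min_pos _ _ hw2
      set ρ₂ := min ρ' (p / q) with hρ₂def
      have hρ₂pos : 0 < ρ₂ := lt_min hρ'pos (div_pos hpp hqpos)
      have hr1 : ∀ j, 1 ≤ j → j ≤ k → 0 < D j → ρ₂ * D j ≤ δ j := by
        intro j hj1 hjk hDj
        have hjD : j ∈ indexSet k D := aux_mem_indexSet.mpr ⟨⟨hj1, hjk⟩, hDj⟩
        have h := ((min_le_left ρ' (p / q)).trans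
          ((hρ' j (Finset.mem_union_left _ hjD)).trans (min_le_left _ _)))
        rw [if_pos hDj] at h
        exact (le_div_iff₀ hDj).mp h
      have hr2 : ∀ j, 1 ≤ j → j ≤ k → 0 < E j → ρ₂ * E j ≤ ε j := by
        intro j hj1 hjk hEj
        have hjE : j ∈ indexSet k E := aux_mem_indexSet.mpr ⟨⟨hj1, hjk⟩, hEj⟩
        have h := ((min_le_left ρ' (p / q)).trans
          ((hρ' j (Finset.mem_union_right _ hjE)).trans (min_le_right _ _)))
        rw [if_pos hEj] at h
        exact (le_div_iff₀ hEj).mp h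
      have hylow : ∀ n, k ≤ n → ρ₂ ≤ y n := by
        intro n hn
        rw [hyrec n hn, le_div_iff₀ (hyden n hn)]
        have e1 := aux_ratio_bound k ρ₂ δ D x hδ hD hxnn hr1 n
        have e2 := aux_ratio_bound k ρ₂ ε E y hε hE hynn hr2 n
        have e0 : ρ₂ * q ≤ p := (le_div_iff₀ hqpos).mp (min_le_right ρ' (p / q))
        rw [mul_add, mul_add]
        linarith
      obtain ⟨j₀, hj₀⟩ := Finset.nonempty_iff_ne_empty.mpr hCne
      obtain ⟨⟨hj₀1, hj₀k⟩, hCj₀⟩ := aux_mem_indexSet.mp hj₀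
      refine ⟨C j₀ * ρ₂, mul_pos hCj₀ hρ₂pos, ?_⟩
      intro n hn
      have hyl := hylow (n - j₀) (by omega)
      have h1 : C j₀ * ρ₂ ≤ C j₀ * y (n - j₀) :=
        mul_le_mul_of_nonneg_left hyl (hC j₀)
      have h2 : C j₀ * y (n - j₀) ≤ ∑ j ∈ Icc 1 k, C j * y (n - j) :=
        Finset.single_le_sum (f := fun j => C j * y (n - j))
          (fun j _ => mul_nonneg (hC j) (hynn _)) (Finset.mem_Icc.mpr ⟨hj₀1, hj₀k⟩)
      have := hsBx n
      linarith
  obtain ⟨d, hd, hdd⟩ := hdlow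
  ------------------------------------------------------------------
  -- STEP 3 : x is bounded
  ------------------------------------------------------------------
  set Γ := ∑ i ∈ Icc 1 k, γ i with hΓdef
  have hΓ : 0 ≤ Γ := Finset.sum_nonneg fun i _ => hγ i
  set K0x := (α + Γ * My) / d with hK0xdef
  have hK0x : 0 ≤ K0x :=
    div_nonneg (add_nonneg hα (mul_nonneg hΓ hMy0)) hd.le
  have hrecX : ∀ n, 2 * k ≤ n → x n ≤ K0x +
      (∑ i ∈ indexSet k β, β i * x (n - i)) /
      (A + ∑ j ∈ Icc 1 k, B j * x (n - j) + ∑ j ∈ Icc 1 k, C j * y (n - j)) := by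
    intro n hn
    have hnk : k ≤ n := by omega
    have hdpos := hxden n hnk
    have hddn := hdd n hn
    have h1 : ∑ i ∈ Icc 1 k, γ i * y (n - i) ≤ Γ * My := by
      rw [hΓdef, Finset.sum_mul]
      exact Finset.sum_le_sum fun i _ =>
        mul_le_mul_of_nonneg_left (hMy _) (hγ i)
    have h2 : K0x * d = α + Γ * My := div_mul_cancel₀ _ hd.ne'
    have h2' : α + Γ * My ≤ K0x *
        (A + ∑ j ∈ Icc 1 k, B j * x (n - j) + ∑ j ∈ Icc 1 k, C j * y (n - j)) := by
      have := mul_le_mul_of_nonneg_left hddn hK0x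
      linarith
    have h3 : ∑ i ∈ indexSet k β, β i * x (n - i) = ∑ i ∈ Icc 1 k, β i * x (n - i) :=
      aux_sum_indexSet k β (fun i => x (n - i)) hβ
    have hnum : α + ∑ i ∈ Icc 1 k, β i * x (n - i) + ∑ i ∈ Icc 1 k, γ i * y (n - i) ≤
        K0x * (A + ∑ j ∈ Icc 1 k, B j * x (n - j) + ∑ j ∈ Icc 1 k, C j * y (n - j)) +
        ∑ i ∈ indexSet k β, β i * x (n - i) := by
      rw [h3]; linarith
    rw [hxrec n hnk]
    calc (α + ∑ i ∈ Icc 1 k, β i * x (n - i) + ∑ i ∈ Icc 1 k, γ i * y (n - i)) /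
        (A + ∑ j ∈ Icc 1 k, B j * x (n - j) + ∑ j ∈ Icc 1 k, C j * y (n - j)) ≤
        (K0x * (A + ∑ j ∈ Icc 1 k, B j * x (n - j) + ∑ j ∈ Icc 1 k, C j * y (n - j)) +
          ∑ i ∈ indexSet k β, β i * x (n - i)) /
        (A + ∑ j ∈ Icc 1 k, B j * x (n - j) + ∑ j ∈ Icc 1 k, C j * y (n - j)) :=
        (div_le_div_iff_of_pos_right hdpos).mpr hnum
      _ = K0x + (∑ i ∈ indexSet k β, β i * x (n - i)) /
        (A + ∑ j ∈ Icc 1 k, B j * x (n - j) + ∑ j ∈ Icc 1 k, C j * y (n - j)) := by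
        rw [add_div, mul_div_assoc, div_self hdpos.ne', mul_one]
  obtain ⟨cX, hcX, hcXle⟩ := aux_min_pos (indexSet k B) B
    (fun t ht => (aux_mem_indexSet.mp ht).2)
  have hdenTX : ∀ n, 2 * k ≤ n → ∀ t ∈ indexSet k B,
      cX * x (n - t) - 0 ≤
      A + ∑ j ∈ Icc 1 k, B j * x (n - j) + ∑ j ∈ Icc 1 k, C j * y (n - j) := by
    intro n _ t ht
    obtain ⟨⟨ht1, htk⟩, hBt⟩ := aux_mem_indexSet.mp ht
    have h1 : cX * x (n - t) ≤ B t * x (n - t) :=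
      mul_le_mul_of_nonneg_right (hcXle t ht) (hxnn _)
    have h2 : B t * x (n - t) ≤ ∑ j ∈ Icc 1 k, B j * x (n - j) :=
      Finset.single_le_sum (f := fun j => B j * x (n - j))
        (fun j _ => mul_nonneg (hB j) (hxnn _)) (Finset.mem_Icc.mpr ⟨ht1, htk⟩)
    have := hsCy n
    linarith
  have hdenX : ∀ n, 2 * k ≤ n →
      d ≤ A + ∑ j ∈ Icc 1 k, B j * x (n - j) + ∑ j ∈ Icc 1 k, C j * y (n - j) :=
    hdd
  obtain ⟨Mx, hMx⟩ := keylemma k η2 hk hη2pos (indexSet k β) (indexSet k B)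
    (Finset.filter_subset _ _) hiter2 β
    (fun i hi => (aux_mem_indexSet.mp hi).2) hβ x
    (fun n => A + ∑ j ∈ Icc 1 k, B j * x (n - j) + ∑ j ∈ Icc 1 k, C j * y (n - j))
    hxnn K0x d cX 0 hK0x hd hcX le_rfl (2 * k) (by omega) hdenX hrecX hdenTX
  ------------------------------------------------------------------
  -- conclusion
  ------------------------------------------------------------------
  have hmax : 0 ≤ max Mx My := le_trans hMy0 (le_max_right _ _)
  refine ⟨max Mx My + 1, by linarith, 0, fun n _ => ⟨?_, ?_⟩⟩
  · exact (hMx n).trans (by linarith [le_max_left Mx My])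
  · exact (hMy n).trans (by linarith [le_max_right Mx My])
end

section
/- Suppose that for the solution ({x_n},{y_n}) there exist a constant M1 > 0 and a constant M2 ≥ 0 such that y_n ≤ M1·x_n + M2 for all n ∈ ℕ. Suppose further that A > 0 and that there exists a positive integer η such that for every sequence {c_m}_{m=1}^∞ with c_m ∈ I_β ∪ (I_γ \ I_C) for all m, there exist positive integers N1 ≤ N2 ≤ η with Σ_{m=N1}^{N2} c_m ∈ I_B. Then there exist M > 0 and N ∈ ℕ such that x_n ≤ M and y_n ≤ M for all n > N. -/
/-!
Write `D m` for the denominator of `x m`. Each term `γ i * y (m - i) / D m` is at most `γ i / C i`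
when `C i > 0`, and otherwise `y ≤ M1 * x + M2` turns it into an `x`-term, so that
`x m ≤ K + ∑ i ∈ S, e i * x (m - i) / D m` with `S = I_β ∪ (I_γ \ I_C)`. Iterating this along paths
`n, n - c 1, n - c 1 - c 2, …` with steps in `S` bounds `x n` by terms
`x (n - c 1 - ⋯ - c r) / (D n * D (n - c 1) * ⋯)`, all denominators being at least `A`. A path can
be stopped once a block `c (a + 1) + ⋯ + c r` lies in `I_B`: the denominator at the `a`-th point
contains `B t * x` of the last point. The iteration condition forces such a block within `η` steps,
so the expansion ends after `η` rounds with a bound independent of `n`; then `y ≤ M1 * x + M2`.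
-/

open Finset

theorem iterCond.exists_block_sum_mem {η : ℕ} {S T : Finset ℕ} (h : iterCond η S T) (hη : 0 < η)
    {c : ℕ → ℕ} (hc : ∀ m ∈ Ioc 0 η, c m ∈ S) :
    ∃ a b, a < b ∧ b ≤ η ∧ ∑ m ∈ Ioc a b, c m ∈ T := by
  have hc1 : c 1 ∈ S := hc 1 (mem_Ioc.2 ⟨one_pos, hη⟩)
  obtain ⟨N1, N2, hN1, hN12, hN2, hT⟩ := h (fun m => if m ≤ η then c m else c 1) fun m hm => by
    split_ifs with hmη
    exacts [hc m (mem_Ioc.2 ⟨hm, hmη⟩), hc1]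
  obtain ⟨a, rfl⟩ : ∃ a, N1 = a + 1 := ⟨N1 - 1, by omega⟩
  refine ⟨a, N2, by omega, hN2, ?_⟩
  rw [Icc_add_one_left_eq_Ioc] at hT
  rwa [sum_congr rfl fun m hm => if_pos ((mem_Ioc.1 hm).2.trans hN2)] at hT

theorem one_le_inv_min_pow_mul_prod {ι : Type*} {A : ℝ} (hA : 0 < A) {s : Finset ι} {f : ι → ℝ}
    (hf : ∀ i ∈ s, A ≤ f i) {η : ℕ} (hs : #s ≤ η) :
    1 ≤ (min A 1)⁻¹ ^ η * ∏ i ∈ s, f i := by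
  have ha : 0 < min A 1 := lt_min hA one_pos
  calc (1 : ℝ) = (min A 1)⁻¹ ^ η * min A 1 ^ η := by rw [← mul_pow, inv_mul_cancel₀ ha.ne', one_pow]
    _ ≤ (min A 1)⁻¹ ^ η * min A 1 ^ #s :=
      mul_le_mul_of_nonneg_left (pow_le_pow_of_le_one ha.le (min_le_right A 1) hs) (by positivity)
    _ ≤ (min A 1)⁻¹ ^ η * ∏ i ∈ s, f i := by
      gcongr
      rw [← prod_const]
      exact prod_le_prod (fun _ _ => ha.le) fun i hi => (min_le_left A 1).trans (hf i hi)

section Paths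

noncomputable def pathWeight (D : ℕ → ℝ) (n : ℕ) (c : ℕ → ℕ) (r : ℕ) : ℝ :=
  ∏ j ∈ range r, D (n - ∑ m ∈ Ioc 0 j, c m)

def BlockSumsAvoid (T : Finset ℕ) (c : ℕ → ℕ) (r : ℕ) : Prop :=
  ∀ a b, a < b → b ≤ r → ∑ m ∈ Ioc a b, c m ∉ T

variable {D : ℕ → ℝ} {c : ℕ → ℕ} {r : ℕ}

theorem sum_Ioc_update_succ_of_le {a b : ℕ} (hb : b ≤ r) (i : ℕ) :
    ∑ m ∈ Ioc a b, Function.update c (r + 1) i m = ∑ m ∈ Ioc a b, c m :=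
  sum_congr rfl fun m hm => Function.update_of_ne (by grind) _ _

theorem sum_Ioc_zero_update_succ (i : ℕ) :
    ∑ m ∈ Ioc 0 (r + 1), Function.update c (r + 1) i m = ∑ m ∈ Ioc 0 r, c m + i := by
  rw [sum_Ioc_succ_top r.zero_le, sum_Ioc_update_succ_of_le le_rfl, Function.update_self]

theorem pathWeight_update_succ (n i : ℕ) :
    pathWeight D n (Function.update c (r + 1) i) (r + 1) =
      pathWeight D n c r * D (n - ∑ m ∈ Ioc 0 r, c m) := by
  rw [pathWeight, prod_range_succ, sum_Ioc_update_succ_of_le le_rfl]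
  congr 1
  exact prod_congr rfl fun j hj => by rw [sum_Ioc_update_succ_of_le (mem_range.1 hj).le]

theorem one_le_inv_min_pow_mul_pathWeight {A : ℝ} (hA : 0 < A) (hDA : ∀ m, A ≤ D m) {η : ℕ}
    (hr : r ≤ η) (n : ℕ) : 1 ≤ (min A 1)⁻¹ ^ η * pathWeight D n c r :=
  one_le_inv_min_pow_mul_prod hA (fun _ _ => hDA _) (by simpa using hr)

/-- If the block `c (a + 1) + ⋯ + c r` is some `t ∈ T`, the last point of the path lies `t` below
the `a`-th one, so the `a`-th factor of the weight controls it. -/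
theorem le_mul_pathWeight_of_block_sum_mem {x : ℕ → ℝ} {A L : ℝ} {T : Finset ℕ} {η a : ℕ}
    (hA : 0 < A) (hDA : ∀ m, A ≤ D m) (hL : 0 ≤ L) (hxT : ∀ m, ∀ t ∈ T, x (m - t) ≤ L * D m)
    (har : a < r) (hrη : r ≤ η + 1) (hT : ∑ m ∈ Ioc a r, c m ∈ T) (n : ℕ) :
    x (n - ∑ m ∈ Ioc 0 r, c m) ≤ L * (min A 1)⁻¹ ^ η * pathWeight D n c r := by
  have ha : a ∈ range r := mem_range.2 har
  have hpos : n - ∑ m ∈ Ioc 0 r, c m = (n - ∑ m ∈ Ioc 0 a, c m) - ∑ m ∈ Ioc a r, c m := by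
    rw [Nat.sub_sub, sum_Ioc_consecutive _ a.zero_le har.le]
  have hrest : 1 ≤ (min A 1)⁻¹ ^ η * ∏ j ∈ (range r).erase a, D (n - ∑ m ∈ Ioc 0 j, c m) :=
    one_le_inv_min_pow_mul_prod hA (fun _ _ => hDA _) <| by
      rw [card_erase_of_mem ha, card_range]; omega
  have hDa := (hA.trans_le (hDA (n - ∑ m ∈ Ioc 0 a, c m))).le
  calc x (n - ∑ m ∈ Ioc 0 r, c m) ≤ L * D (n - ∑ m ∈ Ioc 0 a, c m) := hpos ▸ hxT _ _ hT
    _ ≤ L * D (n - ∑ m ∈ Ioc 0 a, c m) *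
          ((min A 1)⁻¹ ^ η * ∏ j ∈ (range r).erase a, D (n - ∑ m ∈ Ioc 0 j, c m)) :=
      le_mul_of_one_le_right (mul_nonneg hL hDa) hrest
    _ = L * (min A 1)⁻¹ ^ η * pathWeight D n c r := by
      rw [pathWeight, ← mul_prod_erase _ _ ha]
      ring

theorem le_sub_sum_Ioc {S : Finset ℕ} {k η n : ℕ} (hSk : ∀ i ∈ S, i ≤ k)
    (hc : ∀ m ∈ Ioc 0 r, c m ∈ S) (hr : r < η) (hn : k * η ≤ n) :
    k ≤ n - ∑ m ∈ Ioc 0 r, c m := by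
  have hsum : ∑ m ∈ Ioc 0 r, c m ≤ r * k := by
    simpa using sum_le_card_nsmul (Ioc 0 r) c k fun m hm => hSk _ (hc m hm)
  have : k * (r + 1) ≤ k * η := Nat.mul_le_mul_left _ hr
  rw [mul_add, mul_one] at this
  rw [mul_comm] at hsum
  omega

variable {x : ℕ → ℝ} {A K L : ℝ} {e : ℕ → ℝ} {S T : Finset ℕ} {k η : ℕ}

/-- Expanding `x` once more at the end of the path: each extended path either has a block sum in
`T` or is covered by the bound `V` for longer paths. -/
theorem le_mul_pathWeight_of_succ (hA : 0 < A) (hDA : ∀ m, A ≤ D m) (hK : 0 ≤ K)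
    (he : ∀ i, 0 ≤ e i) (hL : 0 ≤ L) (hSk : ∀ i ∈ S, i ≤ k)
    (hxT : ∀ m, ∀ t ∈ T, x (m - t) ≤ L * D m)
    (hkey : ∀ m, k ≤ m → x m ≤ K + ∑ i ∈ S, e i * (x (m - i) / D m))
    {V : ℝ} (hV : 0 ≤ V) {n : ℕ} (hn : k * η ≤ n) (hr : r < η)
    (hsucc : ∀ c : ℕ → ℕ, (∀ m ∈ Ioc 0 (r + 1), c m ∈ S) → BlockSumsAvoid T c (r + 1) →
      x (n - ∑ m ∈ Ioc 0 (r + 1), c m) ≤ V * pathWeight D n c (r + 1))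
    (hc : ∀ m ∈ Ioc 0 r, c m ∈ S) (hcT : BlockSumsAvoid T c r) :
    x (n - ∑ m ∈ Ioc 0 r, c m) ≤
      (K * (min A 1)⁻¹ ^ η + (∑ i ∈ S, e i) * (V + L * (min A 1)⁻¹ ^ η)) * pathWeight D n c r := by
  have hΛ : 0 ≤ (min A 1)⁻¹ ^ η := by positivity
  set m₀ := n - ∑ m ∈ Ioc 0 r, c m
  set Λ := (min A 1)⁻¹ ^ η
  have hD₀ : 0 < D m₀ := hA.trans_le (hDA m₀)
  have hstep : ∀ i ∈ S, x (m₀ - i) / D m₀ ≤ (V + L * Λ) * pathWeight D n c r := by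
    intro i hi
    set c' := Function.update c (r + 1) i
    have hlast : n - ∑ m ∈ Ioc 0 (r + 1), c' m = m₀ - i := by
      rw [sum_Ioc_zero_update_succ, ← Nat.sub_sub]
    have hW : 0 ≤ pathWeight D n c' (r + 1) :=
      prod_nonneg fun _ _ => (hA.trans_le (hDA _)).le
    rw [div_le_iff₀ hD₀, mul_assoc, ← pathWeight_update_succ, ← hlast]
    by_cases hblock : ∃ a < r + 1, ∑ m ∈ Ioc a (r + 1), c' m ∈ T
    · obtain ⟨a, har, haT⟩ := hblock
      calc _ ≤ L * Λ * pathWeight D n c' (r + 1) :=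
            le_mul_pathWeight_of_block_sum_mem hA hDA hL hxT har (by omega) haT n
        _ ≤ _ := mul_le_mul_of_nonneg_right (le_add_of_nonneg_left hV) hW
    · push Not at hblock
      have hc' : ∀ m ∈ Ioc 0 (r + 1), c' m ∈ S := by
        intro m hm
        rcases eq_or_ne m (r + 1) with rfl | hne
        · simpa [c'] using hi
        · rw [show c' m = c m from Function.update_of_ne hne _ _]
          exact hc m (by grind)
      have hc'T : BlockSumsAvoid T c' (r + 1) := by
        intro a b hab hb
        rcases Nat.lt_or_ge b (r + 1) with hb' | hb'
        · rw [sum_Ioc_update_succ_of_le (by omega)]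
          exact hcT a b hab (by omega)
        · obtain rfl : b = r + 1 := by omega
          exact hblock a hab
      calc _ ≤ V * pathWeight D n c' (r + 1) := hsucc c' hc' hc'T
        _ ≤ _ := mul_le_mul_of_nonneg_right (le_add_of_nonneg_right (mul_nonneg hL hΛ)) hW
  calc x m₀ ≤ K + ∑ i ∈ S, e i * (x (m₀ - i) / D m₀) := hkey m₀ (le_sub_sum_Ioc hSk hc hr hn)
    _ ≤ K * (Λ * pathWeight D n c r) + ∑ i ∈ S, e i * ((V + L * Λ) * pathWeight D n c r) := by
      gcongr with i hi
      · exact le_mul_of_one_le_right hK (one_le_inv_min_pow_mul_pathWeight hA hDA hr.le n)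
      · exact he i
      · exact hstep i hi
    _ = _ := by rw [← sum_mul]; ring

theorem exists_le_mul_pathWeight (hA : 0 < A) (hDA : ∀ m, A ≤ D m) (hK : 0 ≤ K)
    (he : ∀ i, 0 ≤ e i) (hL : 0 ≤ L) (hSk : ∀ i ∈ S, i ≤ k)
    (hxT : ∀ m, ∀ t ∈ T, x (m - t) ≤ L * D m)
    (hkey : ∀ m, k ≤ m → x m ≤ K + ∑ i ∈ S, e i * (x (m - i) / D m))
    (hiter : iterCond η S T) (hη : 0 < η) :
    ∀ d, ∃ V, 0 ≤ V ∧ ∀ n r (c : ℕ → ℕ), k * η ≤ n → r + d = η → (∀ m ∈ Ioc 0 r, c m ∈ S) →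
      BlockSumsAvoid T c r → x (n - ∑ m ∈ Ioc 0 r, c m) ≤ V * pathWeight D n c r := by
  intro d
  induction d with
  | zero =>
    refine ⟨0, le_rfl, fun n r c _ hr hc hcT => ?_⟩
    obtain ⟨a, b, hab, hb, hT⟩ := hiter.exists_block_sum_mem hη (c := c) (by simpa [← hr] using hc)
    exact absurd hT (hcT a b hab (by omega))
  | succ d ih =>
    obtain ⟨V, hV, hVbound⟩ := ih
    have hΛ : 0 ≤ (min A 1)⁻¹ ^ η := by positivity
    refine ⟨_, add_nonneg (mul_nonneg hK hΛ)
      (mul_nonneg (sum_nonneg fun i _ => he i) (add_nonneg hV (mul_nonneg hL hΛ))),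
      fun n r c hn hr hc hcT =>
      le_mul_pathWeight_of_succ hA hDA hK he hL hSk hxT hkey hV hn (by omega)
        (fun c' => hVbound n (r + 1) c' hn (by omega)) hc hcT⟩

theorem exists_forall_le_of_iterCond (hA : 0 < A) (hDA : ∀ m, A ≤ D m) (hK : 0 ≤ K)
    (he : ∀ i, 0 ≤ e i) (hL : 0 ≤ L) (hSk : ∀ i ∈ S, i ≤ k)
    (hxT : ∀ m, ∀ t ∈ T, x (m - t) ≤ L * D m)
    (hkey : ∀ m, k ≤ m → x m ≤ K + ∑ i ∈ S, e i * (x (m - i) / D m))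
    (hiter : iterCond η S T) (hη : 0 < η) :
    ∃ V, 0 ≤ V ∧ ∀ n, k * η ≤ n → x n ≤ V := by
  obtain ⟨V, hV, hbound⟩ :=
    exists_le_mul_pathWeight hA hDA hK he hL hSk hxT hkey hiter hη η
  refine ⟨V, hV, fun n hn => ?_⟩
  simpa [pathWeight] using
    hbound n 0 id hn (zero_add η) (by simp) fun a b hab hb => by omega

end Paths

section RationalSystem

variable {k : ℕ} {α A M1 M2 : ℝ} {β γ B C : ℕ → ℝ} {x y : ℕ → ℝ}

noncomputable def xDenom (k : ℕ) (A : ℝ) (B C x y : ℕ → ℝ) (m : ℕ) : ℝ :=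
  A + ∑ j ∈ Icc 1 k, B j * x (m - j) + ∑ j ∈ Icc 1 k, C j * y (m - j)

noncomputable def elimCoeff (β γ C : ℕ → ℝ) (M1 : ℝ) (i : ℕ) : ℝ :=
  β i + if 0 < C i then 0 else M1 * γ i

noncomputable def elimConst (γ C : ℕ → ℝ) (A M2 : ℝ) (i : ℕ) : ℝ :=
  if 0 < C i then γ i / C i else γ i * M2 / A

theorem add_div_le_elimCoeff_mul_add_elimConst (hγ : ∀ i, 0 ≤ γ i) (hM2 : 0 ≤ M2) (hA : 0 < A)
    {i : ℕ} {X Y Dm : ℝ} (hAD : A ≤ Dm) (hCY : C i * Y ≤ Dm) (hY : Y ≤ M1 * X + M2) :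
    (β i * X + γ i * Y) / Dm ≤ elimCoeff β γ C M1 i * (X / Dm) + elimConst γ C A M2 i := by
  have hD : 0 < Dm := hA.trans_le hAD
  have hγi := hγ i
  rw [add_div, mul_div_assoc, elimCoeff, elimConst]
  split_ifs with hC
  · have : γ i * Y / Dm ≤ γ i / C i := by
      rw [div_le_div_iff₀ hD hC]
      nlinarith
    linarith
  · have hγM2 : γ i * M2 / Dm ≤ γ i * M2 / A := div_le_div_of_nonneg_left (by positivity) hA hAD
    have : γ i * Y / Dm ≤ M1 * γ i * (X / Dm) + γ i * M2 / Dm := by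
      rw [← mul_div_assoc, ← add_div]
      exact div_le_div_of_nonneg_right (by nlinarith) hD.le
    linarith

theorem elimCoeff_nonneg (hβ : ∀ i, 0 ≤ β i) (hγ : ∀ i, 0 ≤ γ i) (hM1 : 0 ≤ M1) (i : ℕ) :
    0 ≤ elimCoeff β γ C M1 i := by
  unfold elimCoeff
  split_ifs
  exacts [by simpa using hβ i, add_nonneg (hβ i) (mul_nonneg hM1 (hγ i))]

theorem elimConst_nonneg (hγ : ∀ i, 0 ≤ γ i) (hC : ∀ i, 0 ≤ C i) (hA : 0 < A) (hM2 : 0 ≤ M2)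
    (i : ℕ) : 0 ≤ elimConst γ C A M2 i := by
  unfold elimConst
  split_ifs
  exacts [div_nonneg (hγ i) (hC i), div_nonneg (mul_nonneg (hγ i) hM2) hA.le]

theorem indexSet_union_sdiff_subset (β γ C : ℕ → ℝ) :
    indexSet k β ∪ (indexSet k γ \ indexSet k C) ⊆ Icc 1 k :=
  union_subset (filter_subset _ _) (sdiff_subset.trans (filter_subset _ _))

theorem elimCoeff_eq_zero (hβ : ∀ i, 0 ≤ β i) (hγ : ∀ i, 0 ≤ γ i) {i : ℕ} (hi : i ∈ Icc 1 k)
    (hiS : i ∉ indexSet k β ∪ (indexSet k γ \ indexSet k C)) : elimCoeff β γ C M1 i = 0 := by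
  simp only [indexSet, mem_union, mem_sdiff, mem_filter, hi, true_and, not_or, not_and,
    not_not] at hiS
  have hβi : β i = 0 := le_antisymm (not_lt.1 hiS.1) (hβ i)
  unfold elimCoeff
  split_ifs with hCi
  · simp [hβi]
  · simp [hβi, le_antisymm (not_lt.1 fun h => hCi (hiS.2 h)) (hγ i)]

theorem le_xDenom (hB : ∀ j, 0 ≤ B j) (hC : ∀ j, 0 ≤ C j) (hx : ∀ n, 0 ≤ x n)
    (hy : ∀ n, 0 ≤ y n) (m : ℕ) : A ≤ xDenom k A B C x y m := by
  have := sum_nonneg fun j (_ : j ∈ Icc 1 k) => mul_nonneg (hB j) (hx (m - j))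
  have := sum_nonneg fun j (_ : j ∈ Icc 1 k) => mul_nonneg (hC j) (hy (m - j))
  unfold xDenom
  linarith

theorem B_mul_le_xDenom (hA : 0 ≤ A) (hB : ∀ j, 0 ≤ B j) (hC : ∀ j, 0 ≤ C j)
    (hx : ∀ n, 0 ≤ x n) (hy : ∀ n, 0 ≤ y n) {t : ℕ} (ht : t ∈ Icc 1 k) (m : ℕ) :
    B t * x (m - t) ≤ xDenom k A B C x y m := by
  have := single_le_sum (fun j _ => mul_nonneg (hB j) (hx (m - j))) ht
  have := sum_nonneg fun j (_ : j ∈ Icc 1 k) => mul_nonneg (hC j) (hy (m - j))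
  unfold xDenom
  linarith

theorem C_mul_le_xDenom (hA : 0 ≤ A) (hB : ∀ j, 0 ≤ B j) (hC : ∀ j, 0 ≤ C j)
    (hx : ∀ n, 0 ≤ x n) (hy : ∀ n, 0 ≤ y n) {t : ℕ} (ht : t ∈ Icc 1 k) (m : ℕ) :
    C t * y (m - t) ≤ xDenom k A B C x y m := by
  have := sum_nonneg fun j (_ : j ∈ Icc 1 k) => mul_nonneg (hB j) (hx (m - j))
  have := single_le_sum (fun j _ => mul_nonneg (hC j) (hy (m - j))) ht
  unfold xDenom
  linarith

theorem apply_sub_le_mul_xDenom (hA : 0 ≤ A) (hB : ∀ j, 0 ≤ B j) (hC : ∀ j, 0 ≤ C j)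
    (hx : ∀ n, 0 ≤ x n) (hy : ∀ n, 0 ≤ y n) (m : ℕ) {t : ℕ} (ht : t ∈ indexSet k B) :
    x (m - t) ≤ (∑ j ∈ indexSet k B, (B j)⁻¹) * xDenom k A B C x y m := by
  obtain ⟨htk, hBt⟩ := mem_filter.1 ht
  have hD : 0 ≤ xDenom k A B C x y m := hA.trans (le_xDenom hB hC hx hy m)
  calc x (m - t) ≤ (B t)⁻¹ * xDenom k A B C x y m := by
        rw [← div_eq_inv_mul, le_div_iff₀' hBt]
        exact B_mul_le_xDenom hA hB hC hx hy htk m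
    _ ≤ _ := mul_le_mul_of_nonneg_right
        (single_le_sum (fun j hj => inv_nonneg.2 (hB j)) ht) hD

theorem le_add_sum_elimCoeff_mul_div_xDenom (hα : 0 ≤ α) (hA : 0 < A) (hβ : ∀ i, 0 ≤ β i)
    (hγ : ∀ i, 0 ≤ γ i) (hB : ∀ j, 0 ≤ B j) (hC : ∀ j, 0 ≤ C j) (hx : ∀ n, 0 ≤ x n)
    (hy : ∀ n, 0 ≤ y n) (hM2 : 0 ≤ M2) (hcmp : ∀ n, y n ≤ M1 * x n + M2) {m : ℕ}
    (hxm : x m = (α + ∑ i ∈ Icc 1 k, β i * x (m - i) + ∑ i ∈ Icc 1 k, γ i * y (m - i)) /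
      xDenom k A B C x y m) :
    x m ≤ (α / A + ∑ i ∈ Icc 1 k, elimConst γ C A M2 i) +
      ∑ i ∈ indexSet k β ∪ (indexSet k γ \ indexSet k C),
        elimCoeff β γ C M1 i * (x (m - i) / xDenom k A B C x y m) := by
  set Dm := xDenom k A B C x y m
  have hAD : A ≤ Dm := le_xDenom hB hC hx hy m
  rw [sum_subset (indexSet_union_sdiff_subset β γ C) fun i hi hiS => by
    rw [elimCoeff_eq_zero hβ hγ hi hiS, zero_mul]]
  calc x m = α / Dm + ∑ i ∈ Icc 1 k, (β i * x (m - i) + γ i * y (m - i)) / Dm := by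
        rw [hxm, add_assoc, ← sum_add_distrib, add_div, sum_div]
    _ ≤ α / A + ∑ i ∈ Icc 1 k,
          (elimCoeff β γ C M1 i * (x (m - i) / Dm) + elimConst γ C A M2 i) := by
        gcongr with i hi
        exact add_div_le_elimCoeff_mul_add_elimConst hγ hM2 hA hAD
          (C_mul_le_xDenom hA.le hB hC hx hy hi m) (hcmp _)
    _ = _ := by rw [sum_add_distrib]; ring

end RationalSystem

theorem stmt_14_general
    (k : ℕ)
    (α A : ℝ) (β γ B C : ℕ → ℝ)
    (hα : 0 ≤ α)
    (hβ : ∀ i, 0 ≤ β i) (hγ : ∀ i, 0 ≤ γ i) (hB : ∀ j, 0 ≤ B j) (hC : ∀ j, 0 ≤ C j)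
    (x y : ℕ → ℝ)
    (hxnn : ∀ n, 0 ≤ x n) (hynn : ∀ n, 0 ≤ y n)
    (hxrec : ∀ n, k ≤ n → x n =
      (α + ∑ i ∈ Icc 1 k, β i * x (n - i) + ∑ i ∈ Icc 1 k, γ i * y (n - i)) /
      (A + ∑ j ∈ Icc 1 k, B j * x (n - j) + ∑ j ∈ Icc 1 k, C j * y (n - j)))
    (M1 M2 : ℝ) (hM1 : 0 < M1) (hM2 : 0 ≤ M2)
    (hcmp : ∀ n, y n ≤ M1 * x n + M2)
    (hApos : 0 < A)
    (hη : ∃ η : ℕ, 0 < η ∧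
      iterCond η (indexSet k β ∪ (indexSet k γ \ indexSet k C)) (indexSet k B)) :
    ∃ M : ℝ, 0 < M ∧ ∃ N : ℕ, ∀ n, N < n → x n ≤ M ∧ y n ≤ M := by
  obtain ⟨η, hη, hiter⟩ := hη
  have hK : 0 ≤ α / A + ∑ i ∈ Icc 1 k, elimConst γ C A M2 i :=
    add_nonneg (div_nonneg hα hApos.le) (sum_nonneg fun i _ => elimConst_nonneg hγ hC hApos hM2 i)
  have hL : 0 ≤ ∑ j ∈ indexSet k B, (B j)⁻¹ := sum_nonneg fun j _ => inv_nonneg.2 (hB j)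
  have hSk : ∀ i ∈ indexSet k β ∪ (indexSet k γ \ indexSet k C), i ≤ k :=
    fun i hi => (mem_Icc.1 (indexSet_union_sdiff_subset β γ C hi)).2
  obtain ⟨V, hV, hxV⟩ := exists_forall_le_of_iterCond hApos (le_xDenom hB hC hxnn hynn) hK
    (elimCoeff_nonneg hβ hγ hM1.le) hL hSk (apply_sub_le_mul_xDenom hApos.le hB hC hxnn hynn)
    (fun m hm => le_add_sum_elimCoeff_mul_div_xDenom hα hApos hβ hγ hB hC hxnn hynn hM2 hcmp
      (hxrec m hm)) hiter hη
  have hM1V : 0 ≤ M1 * V := mul_nonneg hM1.le hV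
  refine ⟨V + M1 * V + M2 + 1, by positivity, k * η, fun n hn => ⟨?_, ?_⟩⟩
  · linarith [hxV n hn.le]
  · linarith [hcmp n, mul_le_mul_of_nonneg_left (hxV n hn.le) hM1.le]

theorem stmt_14
    (k : ℕ) (hk : 0 < k)
    (α A p q : ℝ) (β γ B C δ ε D E : ℕ → ℝ)
    (hα : 0 ≤ α) (hA : 0 ≤ A) (hp : 0 ≤ p) (hq : 0 ≤ q)
    (hβ : ∀ i, 0 ≤ β i) (hγ : ∀ i, 0 ≤ γ i) (hB : ∀ j, 0 ≤ B j) (hC : ∀ j, 0 ≤ C j)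
    (hδ : ∀ i, 0 ≤ δ i) (hε : ∀ i, 0 ≤ ε i) (hD : ∀ j, 0 ≤ D j) (hE : ∀ j, 0 ≤ E j)
    (x y : ℕ → ℝ)
    (hxnn : ∀ n, 0 ≤ x n) (hynn : ∀ n, 0 ≤ y n)
    (hxden : ∀ n, k ≤ n →
      0 < A + ∑ j ∈ Icc 1 k, B j * x (n - j) + ∑ j ∈ Icc 1 k, C j * y (n - j))
    (hyden : ∀ n, k ≤ n →
      0 < q + ∑ j ∈ Icc 1 k, D j * x (n - j) + ∑ j ∈ Icc 1 k, E j * y (n - j))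
    (hxrec : ∀ n, k ≤ n → x n =
      (α + ∑ i ∈ Icc 1 k, β i * x (n - i) + ∑ i ∈ Icc 1 k, γ i * y (n - i)) /
      (A + ∑ j ∈ Icc 1 k, B j * x (n - j) + ∑ j ∈ Icc 1 k, C j * y (n - j)))
    (hyrec : ∀ n, k ≤ n → y n =
      (p + ∑ i ∈ Icc 1 k, δ i * x (n - i) + ∑ i ∈ Icc 1 k, ε i * y (n - i)) /
      (q + ∑ j ∈ Icc 1 k, D j * x (n - j) + ∑ j ∈ Icc 1 k, E j * y (n - j)))
    (M1 M2 : ℝ) (hM1 : 0 < M1) (hM2 : 0 ≤ M2)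
    (hcmp : ∀ n, y n ≤ M1 * x n + M2)
    (hApos : 0 < A)
    (hη : ∃ η : ℕ, 0 < η ∧
      iterCond η (indexSet k β ∪ (indexSet k γ \ indexSet k C)) (indexSet k B)) :
    ∃ M : ℝ, 0 < M ∧ ∃ N : ℕ, ∀ n, N < n → x n ≤ M ∧ y n ≤ M :=
  stmt_14_general k α A β γ B C hα hβ hγ hB hC x y hxnn hynn hxrec M1 M2 hM1 hM2 hcmp hApos hη
end

section
/- Suppose that for the solution ({x_n},{y_n}) there exist a constant M1 > 0 and a constant M2 ≥ 0 such that y_n ≤ M1·x_n + M2 for all n ∈ ℕ. Suppose further that A = 0, one of the following holds: (i) I_B ⊆ I_β, I_C ⊆ I_γ, and I_B ≠ ∅; (ii) q = 0, I_D ⊆ I_δ, I_E ⊆ I_ε, and I_C ≠ ∅; (iii) p > 0, q > 0, I_D ⊆ I_δ, I_E ⊆ I_ε, and I_C ≠ ∅; and that there exists a positive integer η such that for every sequence {c_m}_{m=1}^∞ with c_m ∈ I_β ∪ (I_γ \ I_C) for all m, there exist positive integers N1 ≤ N2 ≤ η with Σ_{m=N1}^{N2} c_m ∈ I_B. Then there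 exist M > 0 and N ∈ ℕ such that x_n ≤ M and y_n ≤ M for all n > N. -/
/-!
With `A = 0`, let `Dₙ` be the denominator of the `x`-equation. In each of the cases (i)–(iii)
the numerator of one of the two equations dominates a small multiple of its denominator, so `x`
(case (i)) or `y` (cases (ii), (iii)) is eventually bounded below, and hence `Dₙ ≥ d > 0`.
Using `y ≤ M₁ x + M₂`, and `γᵢ yₙ₋ᵢ ≤ (γᵢ / Cᵢ) Dₙ` when `Cᵢ > 0`, the recursion gives,
for constants `Kᵢ ≥ 0`, `(xₙ - K₀) Dₙ ≤ K₂ + K₁ s` as soon as `xₙ₋ᵢ ≤ s` for all lags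
`i ∈ S = I_β ∪ (I_γ \ I_C)`.
So a large value `xₙ ≥ t` forces a lag `i ∈ S` with `xₙ₋ᵢ > ρ t`. If `x` were unbounded, start
at a record value `X = x_{n₀}` and follow such lags `η` times; every visited value is at least
`ρ^η X`. The iteration condition provides a block of consecutive lags summing to some `j ∈ I_B`,
i.e. two visited times `n` and `n - j`. Then `Dₙ ≥ B_j x_{n-j}`, so `(xₙ - K₀) Dₙ` is of order
`X²`, whereas the record property bounds it by `K₂ + K₁ X`.
-/

open Finset

open Filter Topology

def lagSum (k : ℕ) (f x : ℕ → ℝ) (n : ℕ) : ℝ := ∑ i ∈ Icc 1 k, f i * x (n - i)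

section LagSum

variable {k : ℕ} {f x : ℕ → ℝ}

lemma lagSum_nonneg (hf : ∀ i, 0 ≤ f i) (hx : ∀ n, 0 ≤ x n) (n : ℕ) : 0 ≤ lagSum k f x n :=
  sum_nonneg fun i _ => mul_nonneg (hf i) (hx _)

lemma mul_le_lagSum (hf : ∀ i, 0 ≤ f i) (hx : ∀ n, 0 ≤ x n) {j : ℕ} (hj : j ∈ Icc 1 k) (n : ℕ) :
    f j * x (n - j) ≤ lagSum k f x n :=
  single_le_sum (f := fun i => f i * x (n - i)) (fun i _ => mul_nonneg (hf i) (hx _)) hj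

lemma exists_pos_le_lagSum_add {g y : ℕ → ℝ} (hf : ∀ i, 0 ≤ f i) (hg : ∀ i, 0 ≤ g i)
    (hx : ∀ n, 0 ≤ x n) (hy : ∀ n, 0 ≤ y n) (hfk : (indexSet k f).Nonempty)
    (hxr : ∃ r > 0, ∀ n, k ≤ n → r ≤ x n) :
    ∃ d > 0, ∀ n, 2 * k ≤ n → d ≤ lagSum k f x n + lagSum k g y n := by
  obtain ⟨j, hj⟩ := hfk
  obtain ⟨hjk, hfj⟩ := mem_filter.1 hj
  obtain ⟨r, hr, hxr⟩ := hxr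
  refine ⟨f j * r, mul_pos hfj hr, fun n hn => ?_⟩
  have hxj : r ≤ x (n - j) := hxr _ (by simp only [mem_Icc] at hjk; omega)
  calc f j * r ≤ f j * x (n - j) := mul_le_mul_of_nonneg_left hxj hfj.le
    _ ≤ lagSum k f x n := mul_le_lagSum hf hx hjk n
    _ ≤ lagSum k f x n + lagSum k g y n := le_add_of_nonneg_right (lagSum_nonneg hg hy n)

end LagSum

lemma eventually_nhdsGT_mul_le {a b : ℝ} (hb : 0 ≤ b) (hab : 0 < a → 0 < b) :
    ∀ᶠ r in 𝓝[>] (0 : ℝ), r * a ≤ b := by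
  rcases hb.eq_or_lt with rfl | hb
  · filter_upwards [self_mem_nhdsWithin] with r hr
    exact mul_nonpos_of_nonneg_of_nonpos (le_of_lt hr) (not_lt.1 fun ha => (hab ha).false)
  · have h : Tendsto (fun r : ℝ => r * a) (𝓝[>] 0) (𝓝 0) :=
      ((continuous_id.mul continuous_const).tendsto' 0 0 (zero_mul a)).mono_left
        nhdsWithin_le_nhds
    exact h.eventually (eventually_le_nhds hb)

-- For small `r > 0`, the numerator dominates `r` times the denominator termwise.
lemma exists_pos_le_of_rec {k : ℕ} {p q : ℝ} {δ ε D E u v z : ℕ → ℝ} (hp : 0 ≤ p)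
    (hpq : 0 < q → 0 < p) (hδ : ∀ i, 0 ≤ δ i) (hε : ∀ i, 0 ≤ ε i)
    (hDδ : indexSet k D ⊆ indexSet k δ) (hEε : indexSet k E ⊆ indexSet k ε)
    (hu : ∀ n, 0 ≤ u n) (hv : ∀ n, 0 ≤ v n)
    (hden : ∀ n, k ≤ n → 0 < q + lagSum k D u n + lagSum k E v n)
    (hrec : ∀ n, k ≤ n →
      z n = (p + lagSum k δ u n + lagSum k ε v n) / (q + lagSum k D u n + lagSum k E v n)) :
    ∃ r > 0, ∀ n, k ≤ n → r ≤ z n := by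
  have hpos {F G : ℕ → ℝ} (hFG : indexSet k F ⊆ indexSet k G) {j : ℕ} (hj : j ∈ Icc 1 k)
      (hF : 0 < F j) : 0 < G j :=
    (mem_filter.1 (hFG (mem_filter.2 ⟨hj, hF⟩))).2
  have hev : ∀ᶠ r in 𝓝[>] (0 : ℝ),
      r * q ≤ p ∧ ∀ j ∈ Icc 1 k, r * D j ≤ δ j ∧ r * E j ≤ ε j :=
    (eventually_nhdsGT_mul_le hp hpq).and <| (eventually_all_finset _).2 fun j hj =>
      (eventually_nhdsGT_mul_le (hδ j) (hpos hDδ hj)).and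
        (eventually_nhdsGT_mul_le (hε j) (hpos hEε hj))
  obtain ⟨r, ⟨hrq, hrj⟩, hr⟩ := (hev.and self_mem_nhdsWithin).exists
  refine ⟨r, hr, fun n hn => ?_⟩
  rw [hrec n hn, le_div_iff₀ (hden n hn)]
  have hrD : r * lagSum k D u n ≤ lagSum k δ u n := by
    rw [lagSum, lagSum, mul_sum]
    refine sum_le_sum fun j hj => ?_
    rw [← mul_assoc]
    exact mul_le_mul_of_nonneg_right (hrj j hj).1 (hu _)
  have hrE : r * lagSum k E v n ≤ lagSum k ε v n := by
    rw [lagSum, lagSum, mul_sum]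
    refine sum_le_sum fun j hj => ?_
    rw [← mul_assoc]
    exact mul_le_mul_of_nonneg_right (hrj j hj).2 (hv _)
  linarith [mul_add r (q + lagSum k D u n) (lagSum k E v n), mul_add r q (lagSum k D u n)]

lemma exists_pos_le_denom {k : ℕ} {α A p q : ℝ} {β γ B C δ ε D E x y : ℕ → ℝ} (hA : A = 0)
    (hα : 0 ≤ α) (hp : 0 ≤ p) (hβ : ∀ i, 0 ≤ β i) (hγ : ∀ i, 0 ≤ γ i) (hB : ∀ j, 0 ≤ B j)
    (hC : ∀ j, 0 ≤ C j) (hδ : ∀ i, 0 ≤ δ i) (hε : ∀ i, 0 ≤ ε i)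
    (hx : ∀ n, 0 ≤ x n) (hy : ∀ n, 0 ≤ y n)
    (hxden : ∀ n, k ≤ n → 0 < A + lagSum k B x n + lagSum k C y n)
    (hyden : ∀ n, k ≤ n → 0 < q + lagSum k D x n + lagSum k E y n)
    (hxrec : ∀ n, k ≤ n →
      x n = (α + lagSum k β x n + lagSum k γ y n) / (A + lagSum k B x n + lagSum k C y n))
    (hyrec : ∀ n, k ≤ n →
      y n = (p + lagSum k δ x n + lagSum k ε y n) / (q + lagSum k D x n + lagSum k E y n))
    (hcase :
      (indexSet k B ⊆ indexSet k β ∧ indexSet k C ⊆ indexSet k γ ∧ indexSet k B ≠ ∅) ∨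
      (q = 0 ∧ indexSet k D ⊆ indexSet k δ ∧ indexSet k E ⊆ indexSet k ε ∧
        indexSet k C ≠ ∅) ∨
      (0 < p ∧ 0 < q ∧ indexSet k D ⊆ indexSet k δ ∧ indexSet k E ⊆ indexSet k ε ∧
        indexSet k C ≠ ∅)) :
    ∃ d > 0, ∀ n, 2 * k ≤ n → d ≤ lagSum k B x n + lagSum k C y n := by
  rcases hcase with ⟨hBβ, hCγ, hB₀⟩ | ⟨hq₀, hDδ, hEε, hC₀⟩ | ⟨hp₀, -, hDδ, hEε, hC₀⟩
  · exact exists_pos_le_lagSum_add hB hC hx hy (nonempty_iff_ne_empty.2 hB₀)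
      (exists_pos_le_of_rec hα (fun h => (h.ne' hA).elim) hβ hγ hBβ hCγ hx hy hxden hxrec)
  all_goals simp only [add_comm (lagSum k B x _)]
  · exact exists_pos_le_lagSum_add hC hB hy hx (nonempty_iff_ne_empty.2 hC₀)
      (exists_pos_le_of_rec hp (fun h => (h.ne' hq₀).elim) hδ hε hDδ hEε hx hy hyden hyrec)
  · exact exists_pos_le_lagSum_add hC hB hy hx (nonempty_iff_ne_empty.2 hC₀)
      (exists_pos_le_of_rec hp (fun _ => hp₀) hδ hε hDδ hEε hx hy hyden hyrec)

lemma exists_chain {S : Finset ℕ} {i₀ : ℕ} (hi₀ : i₀ ∈ S) {P : ℕ → ℕ → Prop} {n₀ : ℕ}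
    (h₀ : P 0 n₀) (hstep : ∀ m n, P m n → ∃ i ∈ S, P (m + 1) (n - i)) :
    ∃ c : ℕ → ℕ, (∀ m, c m ∈ S) ∧ ∀ m, P m (n₀ - ∑ l ∈ Icc 1 m, c l) := by
  have hstep' : ∀ m n, ∃ i ∈ S, P m n → P (m + 1) (n - i) := fun m n => by
    by_cases h : P m n
    · obtain ⟨i, hi, h'⟩ := hstep m n h
      exact ⟨i, hi, fun _ => h'⟩
    · exact ⟨i₀, hi₀, fun h' => absurd h' h⟩
  choose g hgS hg using hstep'
  let pos : ℕ → ℕ := fun m => Nat.rec n₀ (fun m p => p - g m p) m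
  have hpos : ∀ m, P m (pos m) := fun m => by
    induction m with
    | zero => exact h₀
    | succ m ih => exact hg m _ ih
  refine ⟨fun l => g (l - 1) (pos (l - 1)), fun l => hgS _ _, fun m => ?_⟩
  have hsum : ∀ m, pos m = n₀ - ∑ l ∈ Icc 1 m, g (l - 1) (pos (l - 1)) := fun m => by
    induction m with
    | zero => rfl
    | succ m ih => rw [sum_Icc_succ_top (by omega), ← Nat.sub_sub, ← ih]; rfl
  rw [← hsum]
  exact hpos m

lemma exists_record {x : ℕ → ℝ} (hx : ¬BddAbove (Set.range x)) (X : ℝ) :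
    ∃ n₀, X ≤ x n₀ ∧ ∀ m ≤ n₀, x m ≤ x n₀ := by
  obtain ⟨_, ⟨n, rfl⟩, hn⟩ := not_bddAbove_iff.1 hx X
  obtain ⟨n₀, hn₀, hmax⟩ := (range (n + 1)).exists_max_image x ⟨n, self_mem_range_succ n⟩
  have hn₀n : n₀ ≤ n := Nat.lt_succ_iff.1 (mem_range.1 hn₀)
  exact ⟨n₀, hn.le.trans (hmax n (self_mem_range_succ n)),
    fun m hm => hmax m (mem_range.2 (by omega))⟩

lemma eventually_lt_sub_mul {μ b : ℝ} (hμ : 0 < μ) (hb : 0 < b) (K₀ K₁ K₂ : ℝ) :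
    ∀ᶠ X in atTop, K₂ + K₁ * X < (μ * X - K₀) * (b * (μ * X)) := by
  have hlin : Tendsto (fun X => (μ * X - K₀) * (b * μ) - K₁) atTop atTop :=
    tendsto_atTop_add_const_right _ _ <| Tendsto.atTop_mul_const (mul_pos hb hμ) <|
      tendsto_atTop_add_const_right _ _ (tendsto_id.const_mul_atTop hμ)
  filter_upwards [(tendsto_id.atTop_mul_atTop₀ hlin).eventually_gt_atTop K₂] with X hX
  simp only [id] at hX
  linarith [show X * ((μ * X - K₀) * (b * μ) - K₁) =
    (μ * X - K₀) * (b * (μ * X)) - K₁ * X by ring]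

section Bootstrap

variable {x D : ℕ → ℝ} {S : Finset ℕ} {n₁ : ℕ} {d K₀ K₁ K₂ : ℝ}

lemma exists_backward_step (hd : 0 < d) (hD : ∀ n, n₁ ≤ n → d ≤ D n)
    (hK₀ : 0 ≤ K₀) (hK₁ : 0 ≤ K₁) (hK₂ : 0 ≤ K₂)
    (hkey : ∀ n, n₁ ≤ n → ∀ s, 0 ≤ s → (∀ i ∈ S, x (n - i) ≤ s) →
      (x n - K₀) * D n ≤ K₂ + K₁ * s) :
    ∃ ρ, 0 < ρ ∧ ρ ≤ 1 ∧ ∃ t₀, ∀ n, n₁ ≤ n → ∀ t, t₀ < t → t ≤ x n →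
      ∃ i ∈ S, ρ * t < x (n - i) := by
  have hdK : 0 < d + 2 * K₁ := by linarith
  refine ⟨d / (d + 2 * K₁), div_pos hd hdK, (div_le_one hdK).2 (by linarith),
    2 * (K₀ + K₂ / d), fun n hn t ht hxt => ?_⟩
  by_contra! hlag
  set ρ := d / (d + 2 * K₁)
  have hK₁ρ : K₁ * ρ ≤ d / 2 := by
    rw [mul_div_assoc', div_le_div_iff₀ hdK two_pos]
    nlinarith
  have ht0 : 0 ≤ t := by linarith [div_nonneg hK₂ hd.le]
  have h := hkey n hn (ρ * t) (by positivity) hlag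
  have hxK : 0 ≤ x n - K₀ := by linarith [div_nonneg hK₂ hd.le]
  have hlow : (t - K₀) * d ≤ (x n - K₀) * D n :=
    mul_le_mul (by linarith) (hD n hn) hd.le hxK
  have hup : K₁ * (ρ * t) ≤ d / 2 * t := by
    rw [← mul_assoc]; exact mul_le_mul_of_nonneg_right hK₁ρ ht0
  have : t / 2 - K₀ ≤ K₂ / d := by
    rw [le_div_iff₀ hd]; linarith
  linarith

lemma exists_lag_pair {J : Finset ℕ} {η n₀ : ℕ} {ρ t₀ X : ℝ} (hiter : iterCond η S J)
    (hρ : 0 < ρ) (hρ1 : ρ ≤ 1)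
    (hstep : ∀ n, n₁ ≤ n → ∀ t, t₀ < t → t ≤ x n → ∃ i ∈ S, ρ * t < x (n - i))
    (hX : 0 ≤ X) (hXn₀ : X ≤ x n₀) (ht₀ : t₀ < ρ ^ η * X)
    (hfar : ∀ n, ρ ^ η * X ≤ x n → n₁ ≤ n) :
    ∃ n ≤ n₀, ∃ j ∈ J, ρ ^ η * X ≤ x n ∧ ρ ^ η * X ≤ x (n - j) := by
  have hpow : ∀ m ≤ η, ρ ^ η * X ≤ ρ ^ m * X := fun m hm =>
    mul_le_mul_of_nonneg_right (pow_le_pow_of_le_one hρ.le hρ1 hm) hX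
  have hμX : ρ ^ η * X ≤ X := by simpa using hpow 0 η.zero_le
  obtain ⟨i₀, hi₀, -⟩ := hstep n₀ (hfar n₀ (hμX.trans hXn₀)) X (ht₀.trans_le hμX) hXn₀
  obtain ⟨c, hcS, hc⟩ := exists_chain hi₀ (P := fun m n => m ≤ η → ρ ^ m * X ≤ x n) (n₀ := n₀)
    (fun _ => by simpa using hXn₀) fun m n hP => by
      by_cases hm : m < η
      · obtain ⟨i, hi, hlt⟩ := hstep n (hfar n ((hpow m hm.le).trans (hP hm.le))) (ρ ^ m * X)
          (ht₀.trans_le (hpow m hm.le)) (hP hm.le)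
        exact ⟨i, hi, fun _ => by rw [pow_succ]; linarith⟩
      · exact ⟨i₀, hi₀, fun h => absurd h (by omega)⟩
  obtain ⟨N₁, N₂, hN₁, hN₁₂, hN₂, hjJ⟩ := hiter c fun m _ => hcS m
  obtain ⟨N, rfl⟩ : ∃ N, N₁ = N + 1 := ⟨N₁ - 1, by omega⟩
  have hnj : n₀ - ∑ l ∈ Icc 1 N, c l - ∑ m ∈ Icc (N + 1) N₂, c m =
      n₀ - ∑ l ∈ Icc 1 N₂, c l := by
    rw [Nat.sub_sub, Icc_add_one_left_eq_Ioc,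
      show Icc 1 = Ioc 0 from funext (Icc_add_one_left_eq_Ioc 0),
      sum_Ioc_consecutive c (Nat.zero_le N) (by omega)]
  refine ⟨_, Nat.sub_le _ _, _, hjJ, (hpow N (by omega)).trans (hc N (by omega)), ?_⟩
  rw [hnj]
  exact (hpow N₂ hN₂).trans (hc N₂ hN₂)

lemma bddAbove_of_lag_estimates {J : Finset ℕ} {η : ℕ} {B : ℕ → ℝ}
    (hiter : iterCond η S J) (hd : 0 < d) (hD : ∀ n, n₁ ≤ n → d ≤ D n)
    (hK₀ : 0 ≤ K₀) (hK₁ : 0 ≤ K₁) (hK₂ : 0 ≤ K₂)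
    (hkey : ∀ n, n₁ ≤ n → ∀ s, 0 ≤ s → (∀ i ∈ S, x (n - i) ≤ s) →
      (x n - K₀) * D n ≤ K₂ + K₁ * s)
    (hB : ∀ j ∈ J, 0 < B j) (hBD : ∀ n, n₁ ≤ n → ∀ j ∈ J, B j * x (n - j) ≤ D n) :
    BddAbove (Set.range x) := by
  obtain ⟨ρ, hρ, hρ1, t₀, hstep⟩ := exists_backward_step hd hD hK₀ hK₁ hK₂ hkey
  set μ := ρ ^ η
  have hμ : 0 < μ := pow_pos hρ η
  obtain ⟨X₀, hX₀⟩ := ((range n₁).image x).exists_le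
  have hlarge : ∀ᶠ X in atTop, 0 < X ∧ X₀ < μ * X ∧ t₀ < μ * X ∧ K₀ ≤ μ * X ∧
      ∀ j ∈ J, K₂ + K₁ * X < (μ * X - K₀) * (B j * (μ * X)) := by
    have hμX := tendsto_id.const_mul_atTop hμ
    exact (eventually_gt_atTop 0).and <| (hμX.eventually_gt_atTop X₀).and <|
      (hμX.eventually_gt_atTop t₀).and <| (hμX.eventually_ge_atTop K₀).and <|
      (eventually_all_finset J).2 fun j hj => eventually_lt_sub_mul hμ (hB j hj) K₀ K₁ K₂
  obtain ⟨X₁, hX₁⟩ := eventually_atTop.1 hlarge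
  by_contra hunb
  obtain ⟨n₀, hn₀, hrecord⟩ := exists_record hunb X₁
  set X := x n₀
  obtain ⟨hX, hX₀μ, ht₀μ, hK₀μ, hquad⟩ := hX₁ X hn₀
  have hfar : ∀ n, μ * X ≤ x n → n₁ ≤ n := fun n hn => by
    by_contra! h
    linarith [hX₀ _ (mem_image_of_mem x (mem_range.2 h))]
  obtain ⟨n, hnn₀, j, hjJ, hxn, hxnj⟩ := exists_lag_pair hiter hρ hρ1 hstep hX.le le_rfl ht₀μ hfar
  have hn₁ := hfar n hxn
  have hxK : 0 ≤ x n - K₀ := by linarith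
  have hkeyn := hkey n hn₁ X hX.le fun i _ => hrecord _ (by omega)
  have : (μ * X - K₀) * (B j * (μ * X)) ≤ (x n - K₀) * D n :=
    calc (μ * X - K₀) * (B j * (μ * X)) ≤ (x n - K₀) * (B j * x (n - j)) :=
          mul_le_mul (by linarith) (mul_le_mul_of_nonneg_left hxnj (hB j hjJ).le)
            (by positivity [hB j hjJ]) hxK
      _ ≤ (x n - K₀) * D n := mul_le_mul_of_nonneg_left (hBD n hn₁ j hjJ) hxK
  linarith [hquad j hjJ]

end Bootstrap

section KeyEstimate

variable {k n : ℕ} {α M₁ M₂ s : ℝ} {β γ B C x y : ℕ → ℝ}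

lemma mul_add_mul_le_of_lag_le (hβ : ∀ i, 0 ≤ β i) (hγ : ∀ i, 0 ≤ γ i) (hC : ∀ i, 0 ≤ C i)
    (hM₁ : 0 ≤ M₁) (hM₂ : 0 ≤ M₂) (hs : 0 ≤ s) (hcmp : ∀ n, y n ≤ M₁ * x n + M₂)
    (hlag : ∀ i ∈ indexSet k β ∪ (indexSet k γ \ indexSet k C), x (n - i) ≤ s)
    {i : ℕ} (hi : i ∈ Icc 1 k) :
    β i * x (n - i) + γ i * y (n - i) ≤
      γ i / C i * (C i * y (n - i)) + ((β i + M₁ * γ i) * s + M₂ * γ i) := by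
  have hβx : β i * x (n - i) ≤ β i * s := by
    rcases (hβ i).eq_or_lt with h | h
    · simp [← h]
    · exact mul_le_mul_of_nonneg_left (hlag i (mem_union_left _ (mem_filter.2 ⟨hi, h⟩))) h.le
  have hγy : γ i * y (n - i) ≤ γ i / C i * (C i * y (n - i)) + γ i * (M₁ * s + M₂) := by
    rcases (hC i).eq_or_lt with hC0 | hC0
    · -- `γ i / 0 = 0`: lags with `C i = 0` are controlled through `y ≤ M₁ x + M₂`
      rw [← hC0, div_zero, zero_mul, zero_add]
      rcases (hγ i).eq_or_lt with h | h
      · simp [← h]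
      · have hiS : i ∈ indexSet k γ \ indexSet k C :=
          mem_sdiff.2 ⟨mem_filter.2 ⟨hi, h⟩, fun hiC => (mem_filter.1 hiC).2.ne hC0⟩
        refine mul_le_mul_of_nonneg_left ((hcmp _).trans ?_) h.le
        gcongr
        exact hlag i (mem_union_right _ hiS)
    · have : γ i / C i * (C i * y (n - i)) = γ i * y (n - i) := by field_simp
      rw [this]
      exact le_add_of_nonneg_right (mul_nonneg (hγ i) (by positivity))
  calc β i * x (n - i) + γ i * y (n - i)
      ≤ β i * s + (γ i / C i * (C i * y (n - i)) + γ i * (M₁ * s + M₂)) := add_le_add hβx hγy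
    _ = _ := by ring

lemma sub_mul_denom_le (hβ : ∀ i, 0 ≤ β i) (hγ : ∀ i, 0 ≤ γ i)
    (hB : ∀ i, 0 ≤ B i) (hC : ∀ i, 0 ≤ C i) (hx : ∀ n, 0 ≤ x n) (hy : ∀ n, 0 ≤ y n)
    (hM₁ : 0 ≤ M₁) (hM₂ : 0 ≤ M₂) (hs : 0 ≤ s) (hcmp : ∀ n, y n ≤ M₁ * x n + M₂)
    (hlag : ∀ i ∈ indexSet k β ∪ (indexSet k γ \ indexSet k C), x (n - i) ≤ s)
    (hden : 0 < lagSum k B x n + lagSum k C y n)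
    (hrec : x n = (α + lagSum k β x n + lagSum k γ y n) / (lagSum k B x n + lagSum k C y n)) :
    (x n - ∑ i ∈ Icc 1 k, γ i / C i) * (lagSum k B x n + lagSum k C y n) ≤
      (α + M₂ * ∑ i ∈ Icc 1 k, γ i) + (∑ i ∈ Icc 1 k, (β i + M₁ * γ i)) * s := by
  set K₀ := ∑ i ∈ Icc 1 k, γ i / C i
  have hK₀ : ∀ i ∈ Icc 1 k, γ i / C i ≤ K₀ := fun i hi =>
    single_le_sum (fun j _ => div_nonneg (hγ j) (hC j)) hi
  have hCy : ∑ i ∈ Icc 1 k, γ i / C i * (C i * y (n - i)) ≤ K₀ * lagSum k C y n := by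
    rw [lagSum, mul_sum]
    exact sum_le_sum fun i hi =>
      mul_le_mul_of_nonneg_right (hK₀ i hi) (mul_nonneg (hC i) (hy _))
  have hnum : lagSum k β x n + lagSum k γ y n ≤
      K₀ * lagSum k C y n + ((∑ i ∈ Icc 1 k, (β i + M₁ * γ i)) * s + M₂ * ∑ i ∈ Icc 1 k, γ i) :=
    calc lagSum k β x n + lagSum k γ y n
        = ∑ i ∈ Icc 1 k, (β i * x (n - i) + γ i * y (n - i)) := sum_add_distrib.symm
      _ ≤ ∑ i ∈ Icc 1 k, (γ i / C i * (C i * y (n - i)) + ((β i + M₁ * γ i) * s + M₂ * γ i)) :=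
          sum_le_sum fun i hi => mul_add_mul_le_of_lag_le hβ hγ hC hM₁ hM₂ hs hcmp hlag hi
      _ = ∑ i ∈ Icc 1 k, γ i / C i * (C i * y (n - i)) +
            ((∑ i ∈ Icc 1 k, (β i + M₁ * γ i)) * s + M₂ * ∑ i ∈ Icc 1 k, γ i) := by
          rw [sum_add_distrib, sum_add_distrib, sum_mul, mul_sum]
      _ ≤ _ := by gcongr
  have hK₀0 : 0 ≤ K₀ := sum_nonneg fun i _ => div_nonneg (hγ i) (hC i)
  have hmul : x n * (lagSum k B x n + lagSum k C y n) = α + lagSum k β x n + lagSum k γ y n := by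
    rw [hrec, div_mul_cancel₀ _ hden.ne']
  have hK₀B : 0 ≤ K₀ * lagSum k B x n := mul_nonneg hK₀0 (lagSum_nonneg hB hx n)
  linarith [sub_mul (x n) K₀ (lagSum k B x n + lagSum k C y n),
    mul_add K₀ (lagSum k B x n) (lagSum k C y n)]

end KeyEstimate

theorem stmt_15_general
    (k : ℕ)
    (α A p q : ℝ) (β γ B C δ ε D E : ℕ → ℝ)
    (hα : 0 ≤ α) (hp : 0 ≤ p)
    (hβ : ∀ i, 0 ≤ β i) (hγ : ∀ i, 0 ≤ γ i) (hB : ∀ j, 0 ≤ B j) (hC : ∀ j, 0 ≤ C j)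
    (hδ : ∀ i, 0 ≤ δ i) (hε : ∀ i, 0 ≤ ε i)
    (x y : ℕ → ℝ)
    (hxnn : ∀ n, 0 ≤ x n) (hynn : ∀ n, 0 ≤ y n)
    (hxden : ∀ n, k ≤ n →
      0 < A + ∑ j ∈ Icc 1 k, B j * x (n - j) + ∑ j ∈ Icc 1 k, C j * y (n - j))
    (hyden : ∀ n, k ≤ n →
      0 < q + ∑ j ∈ Icc 1 k, D j * x (n - j) + ∑ j ∈ Icc 1 k, E j * y (n - j))
    (hxrec : ∀ n, k ≤ n → x n =
      (α + ∑ i ∈ Icc 1 k, β i * x (n - i) + ∑ i ∈ Icc 1 k, γ i * y (n - i)) /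
      (A + ∑ j ∈ Icc 1 k, B j * x (n - j) + ∑ j ∈ Icc 1 k, C j * y (n - j)))
    (hyrec : ∀ n, k ≤ n → y n =
      (p + ∑ i ∈ Icc 1 k, δ i * x (n - i) + ∑ i ∈ Icc 1 k, ε i * y (n - i)) /
      (q + ∑ j ∈ Icc 1 k, D j * x (n - j) + ∑ j ∈ Icc 1 k, E j * y (n - j)))
    (M1 M2 : ℝ) (hM1 : 0 < M1) (hM2 : 0 ≤ M2)
    (hcmp : ∀ n, y n ≤ M1 * x n + M2)
    (hA0 : A = 0)
    (hcase :
      (indexSet k B ⊆ indexSet k β ∧ indexSet k C ⊆ indexSet k γ ∧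
        indexSet k B ≠ ∅) ∨
      (q = 0 ∧ indexSet k D ⊆ indexSet k δ ∧ indexSet k E ⊆ indexSet k ε ∧
        indexSet k C ≠ ∅) ∨
      (0 < p ∧ 0 < q ∧ indexSet k D ⊆ indexSet k δ ∧ indexSet k E ⊆ indexSet k ε ∧
        indexSet k C ≠ ∅))
    (hη : ∃ η : ℕ, 0 < η ∧
      iterCond η (indexSet k β ∪ (indexSet k γ \ indexSet k C)) (indexSet k B)) :
    ∃ M : ℝ, 0 < M ∧ ∃ N : ℕ, ∀ n, N < n → x n ≤ M ∧ y n ≤ M := by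
  obtain ⟨η, -, hiter⟩ := hη
  have hxden' : ∀ n, k ≤ n → 0 < lagSum k B x n + lagSum k C y n := fun n hn =>
    (hxden n hn).trans_eq (by rw [hA0, zero_add]; rfl)
  have hxrec' : ∀ n, k ≤ n → x n =
      (α + lagSum k β x n + lagSum k γ y n) / (lagSum k B x n + lagSum k C y n) := fun n hn =>
    (hxrec n hn).trans (by rw [hA0, zero_add]; rfl)
  obtain ⟨d, hd, hdD⟩ := exists_pos_le_denom hA0 hα hp hβ hγ hB hC hδ hε hxnn hynn
    hxden hyden hxrec hyrec hcase
  obtain ⟨Mx, hMx⟩ : BddAbove (Set.range x) :=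
    bddAbove_of_lag_estimates hiter hd hdD
      (sum_nonneg fun i _ => div_nonneg (hγ i) (hC i))
      (sum_nonneg fun i _ => add_nonneg (hβ i) (mul_nonneg hM1.le (hγ i)))
      (add_nonneg hα (mul_nonneg hM2 (sum_nonneg fun i _ => hγ i)))
      (fun n hn s hs hlag => sub_mul_denom_le hβ hγ hB hC hxnn hynn hM1.le hM2 hs hcmp hlag
        (hxden' n (by omega)) (hxrec' n (by omega)))
      (fun j hj => (mem_filter.1 hj).2)
      (fun n _ j hj => (mul_le_lagSum hB hxnn (mem_filter.1 hj).1 n).trans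
        (le_add_of_nonneg_right (lagSum_nonneg hC hynn n)))
  have hx : ∀ n, x n ≤ Mx := fun n => hMx ⟨n, rfl⟩
  have hMx0 : 0 ≤ Mx := (hxnn 0).trans (hx 0)
  refine ⟨Mx + M1 * Mx + M2 + 1, by positivity, 0, fun n _ => ⟨?_, ?_⟩⟩
  · linarith [hx n, mul_nonneg hM1.le hMx0]
  · linarith [hcmp n, mul_le_mul_of_nonneg_left (hx n) hM1.le]

theorem stmt_15
    (k : ℕ) (hk : 0 < k)
    (α A p q : ℝ) (β γ B C δ ε D E : ℕ → ℝ)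
    (hα : 0 ≤ α) (hA : 0 ≤ A) (hp : 0 ≤ p) (hq : 0 ≤ q)
    (hβ : ∀ i, 0 ≤ β i) (hγ : ∀ i, 0 ≤ γ i) (hB : ∀ j, 0 ≤ B j) (hC : ∀ j, 0 ≤ C j)
    (hδ : ∀ i, 0 ≤ δ i) (hε : ∀ i, 0 ≤ ε i) (hD : ∀ j, 0 ≤ D j) (hE : ∀ j, 0 ≤ E j)
    (x y : ℕ → ℝ)
    (hxnn : ∀ n, 0 ≤ x n) (hynn : ∀ n, 0 ≤ y n)
    (hxden : ∀ n, k ≤ n →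
      0 < A + ∑ j ∈ Icc 1 k, B j * x (n - j) + ∑ j ∈ Icc 1 k, C j * y (n - j))
    (hyden : ∀ n, k ≤ n →
      0 < q + ∑ j ∈ Icc 1 k, D j * x (n - j) + ∑ j ∈ Icc 1 k, E j * y (n - j))
    (hxrec : ∀ n, k ≤ n → x n =
      (α + ∑ i ∈ Icc 1 k, β i * x (n - i) + ∑ i ∈ Icc 1 k, γ i * y (n - i)) /
      (A + ∑ j ∈ Icc 1 k, B j * x (n - j) + ∑ j ∈ Icc 1 k, C j * y (n - j)))
    (hyrec : ∀ n, k ≤ n → y n =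
      (p + ∑ i ∈ Icc 1 k, δ i * x (n - i) + ∑ i ∈ Icc 1 k, ε i * y (n - i)) /
      (q + ∑ j ∈ Icc 1 k, D j * x (n - j) + ∑ j ∈ Icc 1 k, E j * y (n - j)))
    (M1 M2 : ℝ) (hM1 : 0 < M1) (hM2 : 0 ≤ M2)
    (hcmp : ∀ n, y n ≤ M1 * x n + M2)
    (hA0 : A = 0)
    (hcase :
      (indexSet k B ⊆ indexSet k β ∧ indexSet k C ⊆ indexSet k γ ∧
        indexSet k B ≠ ∅) ∨
      (q = 0 ∧ indexSet k D ⊆ indexSet k δ ∧ indexSet k E ⊆ indexSet k ε ∧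
        indexSet k C ≠ ∅) ∨
      (0 < p ∧ 0 < q ∧ indexSet k D ⊆ indexSet k δ ∧ indexSet k E ⊆ indexSet k ε ∧
        indexSet k C ≠ ∅))
    (hη : ∃ η : ℕ, 0 < η ∧
      iterCond η (indexSet k β ∪ (indexSet k γ \ indexSet k C)) (indexSet k B)) :
    ∃ M : ℝ, 0 < M ∧ ∃ N : ℕ, ∀ n, N < n → x n ≤ M ∧ y n ≤ M :=
  stmt_15_general k α A p q β γ B C δ ε D E hα hp hβ hγ hB hC hδ hε x y hxnn hynn hxden hyden hxrec
    hyrec M1 M2 hM1 hM2 hcmp hA0 hcase hη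
end
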